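/- arXiv:2108.04102 — 7 statements merged into one kernel-verified Lean document; each statement's English description precedes it below -/
import Mathlib

section
/- Let n ≥ 1 be an integer, 0 ≤ ε ≤ 1, p ∈ [0,1], and let k ≥ 2 be an even integer. Let X_1,…,X_n be {0,1}-valued random variables with identical marginal distributions that are k-wise ε-approximately independent for the product distribution D(n,p), and let X̂_1,…,X̂_n be mutually independent {0,1}-valued random variables with Pr[X̂_i = 1] = p for every i. Set X = X_1 + … + X_n, X̂ = X̂_1 + … + X̂_n, and μ = E[X]. Then |E[(X − μ)^k] − E[(X̂ − μ)^k]| ≤ ε·n^k. -/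
/-!
Write the centring constant as `n * c` with `c ∈ [0, 1]`. Then `(∑ i, (X i - c)) ^ k` expands as
`∑ f : Fin k → Fin n, ∏ j, (X (f j) - c)`, and each summand is a function `G` of the 0-1 pattern
of the at most `k` variables indexed by the range of `f`. Its expectation is
`∑ b, Pr[pattern = b] * G b`, and since every index of that range occurs in `f`,
`∑ b, |G b| ≤ ∏ i, (|1 - c| + |0 - c|) = 1`. Replacing the approximate pattern probabilities by
the exact product ones therefore moves each of the `n ^ k` summands by at most `ε`.
-/

open MeasureTheory

/-- `X_1, …, X_n` (0-1 valued random variables) are `k`-wise `ε`-approximately independent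
for the product distribution `D(n,p)`. -/
def KWiseApproxIndep {Ω : Type*} [MeasureSpace Ω] (n : ℕ) (X : Fin n → Ω → ℝ)
    (k : ℕ) (ε p : ℝ) : Prop :=
  ∀ t : ℕ, t ≤ k → ∀ idx : Fin t → Fin n, Function.Injective idx →
    ∀ b : Fin t → Bool,
      |(volume {ω | ∀ j, X (idx j) ω = (if b j then 1 else 0)}).toReal -
        ∏ j, (if b j then p else 1 - p)| ≤ ε

open ProbabilityTheory Finset

lemma Function.exists_fin_injective_comp_surjective {α β : Type*} [Fintype α] [DecidableEq β]
    (f : α → β) :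
    ∃ (t : ℕ) (g : α → Fin t) (e : Fin t → β), t ≤ Fintype.card α ∧ g.Surjective ∧
      e.Injective ∧ ∀ a, e (g a) = f a := by
  let r := Fintype.equivFin (Set.range f)
  exact ⟨_, r ∘ Set.rangeFactorization f, fun i => (r.symm i).1, Fintype.card_range_le f,
    r.surjective.comp Set.rangeFactorization_surjective,
    Subtype.val_injective.comp r.symm.injective, fun a => by simp [Set.rangeFactorization]⟩

lemma integral_comp_eq_sum_measureReal_preimage {Ω β : Type*} [MeasurableSpace Ω]
    {μ : Measure Ω} [IsFiniteMeasure μ] [Fintype β] [MeasurableSpace β]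
    [MeasurableSingletonClass β] {φ : Ω → β} (hφ : Measurable φ) (G : β → ℝ) :
    ∫ ω, G (φ ω) ∂μ = ∑ b, μ.real (φ ⁻¹' {b}) * G b := by
  rw [← integral_map hφ.aemeasurable (measurable_of_finite G).aestronglyMeasurable,
    integral_fintype .of_finite]
  simp [map_measureReal_apply hφ (measurableSet_singleton _)]

lemma abs_sub_le_one_of_eq_zero_or_eq_one {x c : ℝ} (hx : x = 0 ∨ x = 1) (hc0 : 0 ≤ c)
    (hc1 : c ≤ 1) : |x - c| ≤ 1 := by
  rcases hx with rfl | rfl <;> rw [abs_le] <;> constructor <;> linarith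

lemma sum_bool_abs_indicator_sub_eq_one {c : ℝ} (hc0 : 0 ≤ c) (hc1 : c ≤ 1) :
    ∑ v : Bool, |(if v then 1 else 0) - c| = 1 := by
  simp [abs_of_nonneg hc0, abs_of_nonneg (sub_nonneg.mpr hc1)]

lemma sum_abs_prod_indicator_sub_le_one {α β : Type*} [Fintype α] [Fintype β] [DecidableEq β]
    {g : α → β} (hg : g.Surjective) {c : ℝ} (hc0 : 0 ≤ c) (hc1 : c ≤ 1) :
    ∑ b : β → Bool, |∏ a, ((if b (g a) then 1 else 0) - c)| ≤ 1 := by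
  have hfactor (b : β → Bool) :
      |∏ a, ((if b (g a) then 1 else 0) - c)| ≤ ∏ i, |(if b i then 1 else 0) - c| := by
    rw [abs_prod, prod_comp (fun i => |(if b i then (1 : ℝ) else 0) - c|) g,
      image_univ_of_surjective hg]
    refine prod_le_prod (fun i _ => pow_nonneg (abs_nonneg _) _) fun i _ => ?_
    refine pow_le_of_le_one (abs_nonneg _)
      (abs_sub_le_one_of_eq_zero_or_eq_one ?_ hc0 hc1) ?_
    · cases b i <;> simp
    · obtain ⟨a, rfl⟩ := hg i
      exact (card_pos.mpr ⟨a, by simp⟩).ne'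
  calc ∑ b : β → Bool, |∏ a, ((if b (g a) then 1 else 0) - c)|
      ≤ ∑ b : β → Bool, ∏ i, |(if b i then 1 else 0) - c| := sum_le_sum fun b _ => hfactor b
    _ = ∏ _i : β, ∑ v : Bool, |(if v then 1 else 0) - c| :=
        (Fintype.prod_sum fun _ (v : Bool) => |(if v then 1 else 0) - c|).symm
    _ = 1 := by simp only [sum_bool_abs_indicator_sub_eq_one hc0 hc1, prod_const_one]

section ZeroOne

variable {Ω ι : Type*} [MeasurableSpace Ω] {μ : Measure Ω} [Fintype ι]
  {Z : ι → Ω → ℝ}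

lemma integral_eq_sum_measureReal_mul_of_zero_or_one [DecidableEq ι] [IsFiniteMeasure μ]
    (hZm : ∀ i, Measurable (Z i)) (hZ01 : ∀ i ω, Z i ω = 0 ∨ Z i ω = 1) (F : (ι → ℝ) → ℝ) :
    ∫ ω, F (fun i => Z i ω) ∂μ = ∑ b : ι → Bool,
      μ.real {ω | ∀ i, Z i ω = if b i then 1 else 0} * F (fun i => if b i then 1 else 0) := by
  let φ : Ω → ι → Bool := fun ω i => Z i ω = 1
  have hφ : Measurable φ := measurable_pi_iff.mpr fun i =>
    measurable_to_bool <| by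
      convert hZm i (measurableSet_singleton 1) using 1; ext; simp [φ]
  have hZφ (ω : Ω) : (fun i => Z i ω) = fun i => if φ ω i then 1 else 0 := by
    funext i; rcases hZ01 i ω with h | h <;> simp [φ, h]
  have hpre (b : ι → Bool) : φ ⁻¹' {b} = {ω | ∀ i, Z i ω = if b i then 1 else 0} := by
    ext ω
    simp only [Set.mem_preimage, Set.mem_singleton_iff, Set.mem_ofPred_eq, funext_iff, φ]
    refine forall_congr' fun i => ?_
    rcases hZ01 i ω with h | h <;> cases b i <;> simp [h]
  simp only [hZφ]
  rw [integral_comp_eq_sum_measureReal_preimage hφ (fun v => F fun i => if v i then 1 else 0)]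
  simp only [hpre]

lemma measureReal_forall_eq_indicator_eq_prod [IsProbabilityMeasure μ] {p : ℝ}
    (hZm : ∀ i, Measurable (Z i)) (hZ01 : ∀ i ω, Z i ω = 0 ∨ Z i ω = 1)
    (hZp : ∀ i, μ.real {ω | Z i ω = 1} = p) (hZ : iIndepFun Z μ) (b : ι → Bool) :
    μ.real {ω | ∀ i, Z i ω = if b i then 1 else 0} = ∏ i, if b i then p else 1 - p := by
  have hzero (i : ι) : {ω | Z i ω = 0} = {ω | Z i ω = 1}ᶜ := by
    ext ω; rcases hZ01 i ω with h | h <;> simp [h]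
  have hcoord (i : ι) : μ.real (Z i ⁻¹' {if b i then 1 else 0}) = if b i then p else 1 - p := by
    cases b i
    · have hmeas : MeasurableSet {ω | Z i ω = 1} := hZm i (measurableSet_singleton 1)
      simp [Set.preimage, hzero, probReal_compl_eq_one_sub hmeas, hZp]
    · simpa [Set.preimage] using hZp i
  have hinter : {ω | ∀ i, Z i ω = if b i then 1 else 0}
      = ⋂ i ∈ (univ : Finset ι), Z i ⁻¹' {if b i then 1 else 0} := by
    ext ω; simp
  rw [hinter, measureReal_def,
    hZ.measure_inter_preimage_eq_mul _ fun i _ => measurableSet_singleton _, ENNReal.toReal_prod]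
  exact prod_congr rfl fun i _ => hcoord i

lemma integral_sum_sub_pow_eq_sum_integral_prod [IsFiniteMeasure μ]
    (hZm : ∀ i, Measurable (Z i)) (hZ01 : ∀ i ω, Z i ω = 0 ∨ Z i ω = 1)
    {c : ℝ} (hc0 : 0 ≤ c) (hc1 : c ≤ 1) (k : ℕ) :
    ∫ ω, (∑ i, (Z i ω - c)) ^ k ∂μ = ∑ f : Fin k → ι, ∫ ω, ∏ j, (Z (f j) ω - c) ∂μ := by
  simp_rw [Fintype.sum_pow]
  refine integral_finsetSum _ fun f _ => .of_bound (by fun_prop) 1 (ae_of_all _ fun ω => ?_)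
  rw [Real.norm_eq_abs, abs_prod]
  exact prod_le_one (fun j _ => abs_nonneg _)
    fun j _ => abs_sub_le_one_of_eq_zero_or_eq_one (hZ01 _ ω) hc0 hc1

lemma integral_sum_mem_Icc_of_zero_or_one [IsProbabilityMeasure μ]
    (hZ01 : ∀ i ω, Z i ω = 0 ∨ Z i ω = 1) :
    ∫ ω, ∑ i, Z i ω ∂μ ∈ Set.Icc 0 (Fintype.card ι : ℝ) := by
  have hZ (i : ι) (ω : Ω) : Z i ω ∈ Set.Icc (0 : ℝ) 1 := by
    rcases hZ01 i ω with h | h <;> simp [h]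
  have hsum (ω : Ω) : ∑ i, Z i ω ∈ Set.Icc 0 (Fintype.card ι : ℝ) :=
    ⟨sum_nonneg fun i _ => (hZ i ω).1,
      (sum_le_sum fun i _ => (hZ i ω).2).trans_eq (by simp)⟩
  refine ⟨integral_nonneg fun ω => (hsum ω).1, ?_⟩
  calc ∫ ω, ∑ i, Z i ω ∂μ ≤ ∫ _, (Fintype.card ι : ℝ) ∂μ :=
        integral_mono_of_nonneg (ae_of_all _ fun ω => (hsum ω).1) (integrable_const _)
          (ae_of_all _ fun ω => (hsum ω).2)
    _ = Fintype.card ι := by simp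

end ZeroOne

section Comparison

variable {Ω Ω' : Type*} [MeasureSpace Ω] [IsProbabilityMeasure (volume : Measure Ω)]
  [MeasurableSpace Ω'] {μ' : Measure Ω'} [IsProbabilityMeasure μ']
  {n k : ℕ} {ε p : ℝ} {X : Fin n → Ω → ℝ} {Y : Fin n → Ω' → ℝ}

lemma KWiseApproxIndep.abs_integral_sub_integral_le (happrox : KWiseApproxIndep n X k ε p)
    (hXm : ∀ i, Measurable (X i)) (hX01 : ∀ i ω, X i ω = 0 ∨ X i ω = 1)
    (hYm : ∀ i, Measurable (Y i)) (hY01 : ∀ i ω, Y i ω = 0 ∨ Y i ω = 1)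
    (hYp : ∀ i, μ'.real {ω | Y i ω = 1} = p) (hY : iIndepFun Y μ')
    {t : ℕ} (ht : t ≤ k) {idx : Fin t → Fin n} (hidx : idx.Injective) (F : (Fin t → ℝ) → ℝ) :
    |(∫ ω, F (fun j => X (idx j) ω)) - ∫ ω, F (fun j => Y (idx j) ω) ∂μ'|
      ≤ ε * ∑ b : Fin t → Bool, |F (fun j => if b j then 1 else 0)| := by
  rw [integral_eq_sum_measureReal_mul_of_zero_or_one (μ := volume)
      (Z := fun j => X (idx j)) (fun j => hXm _) (fun j => hX01 _) F,
    integral_eq_sum_measureReal_mul_of_zero_or_one (Z := fun j => Y (idx j))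
      (fun j => hYm _) (fun j => hY01 _) F,
    ← sum_sub_distrib, mul_sum]
  refine (abs_sum_le_sum_abs _ _).trans (sum_le_sum fun b _ => ?_)
  rw [measureReal_forall_eq_indicator_eq_prod (fun j => hYm _) (fun j => hY01 _)
    (fun j => hYp _) (hY.precomp hidx), ← sub_mul, abs_mul]
  exact mul_le_mul_of_nonneg_right (happrox t ht idx hidx b) (abs_nonneg _)

lemma KWiseApproxIndep.abs_integral_prod_sub_integral_prod_le
    (happrox : KWiseApproxIndep n X k ε p) (hε : 0 ≤ ε)
    (hXm : ∀ i, Measurable (X i)) (hX01 : ∀ i ω, X i ω = 0 ∨ X i ω = 1)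
    (hYm : ∀ i, Measurable (Y i)) (hY01 : ∀ i ω, Y i ω = 0 ∨ Y i ω = 1)
    (hYp : ∀ i, μ'.real {ω | Y i ω = 1} = p) (hY : iIndepFun Y μ')
    {c : ℝ} (hc0 : 0 ≤ c) (hc1 : c ≤ 1) (f : Fin k → Fin n) :
    |(∫ ω, ∏ j, (X (f j) ω - c)) - ∫ ω, ∏ j, (Y (f j) ω - c) ∂μ'| ≤ ε := by
  obtain ⟨t, g, idx, ht, hg, hidx, hf⟩ := Function.exists_fin_injective_comp_surjective f
  simp only [← hf]
  calc _ ≤ ε * ∑ b : Fin t → Bool, |∏ j, ((if b (g j) then 1 else 0) - c)| :=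
        happrox.abs_integral_sub_integral_le hXm hX01 hYm hY01 hYp hY
          (by simpa using ht) hidx fun x => ∏ j, (x (g j) - c)
    _ ≤ ε := mul_le_of_le_one_right hε (sum_abs_prod_indicator_sub_le_one hg hc0 hc1)

lemma KWiseApproxIndep.abs_integral_sum_sub_pow_sub_le
    (happrox : KWiseApproxIndep n X k ε p) (hε : 0 ≤ ε)
    (hXm : ∀ i, Measurable (X i)) (hX01 : ∀ i ω, X i ω = 0 ∨ X i ω = 1)
    (hYm : ∀ i, Measurable (Y i)) (hY01 : ∀ i ω, Y i ω = 0 ∨ Y i ω = 1)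
    (hYp : ∀ i, μ'.real {ω | Y i ω = 1} = p) (hY : iIndepFun Y μ')
    {m : ℝ} (hm0 : 0 ≤ m) (hmn : m ≤ n) :
    |(∫ ω, (∑ i, X i ω - m) ^ k) - ∫ ω, (∑ i, Y i ω - m) ^ k ∂μ'| ≤ ε * n ^ k := by
  set c := m / n
  have hc0 : 0 ≤ c := by positivity
  have hc1 : c ≤ 1 := div_le_one_of_le₀ hmn n.cast_nonneg
  have hcenter (x : Fin n → ℝ) : ∑ i, x i - m = ∑ i, (x i - c) := by
    rw [sum_sub_distrib, sum_const, card_univ, Fintype.card_fin, nsmul_eq_mul]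
    rcases eq_or_ne n 0 with rfl | hn
    · simp only [Nat.cast_zero] at hmn ⊢
      simp [le_antisymm hmn hm0]
    · rw [mul_div_cancel₀ _ (Nat.cast_ne_zero.mpr hn)]
  simp only [hcenter, integral_sum_sub_pow_eq_sum_integral_prod hXm hX01 hc0 hc1,
    integral_sum_sub_pow_eq_sum_integral_prod hYm hY01 hc0 hc1, ← sum_sub_distrib]
  calc _ ≤ ∑ _f : Fin k → Fin n, ε := (abs_sum_le_sum_abs _ _).trans <| sum_le_sum fun f _ =>
        happrox.abs_integral_prod_sub_integral_prod_le hε hXm hX01 hYm hY01 hYp hY hc0 hc1 f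
    _ = ε * n ^ k := by simp [mul_comm]

end Comparison

theorem kth_moment_comparison_general
    {Ω : Type*} [MeasureSpace Ω] [IsProbabilityMeasure (volume : Measure Ω)]
    {Ω' : Type*} [MeasureSpace Ω'] [IsProbabilityMeasure (volume : Measure Ω')]
    (n k : ℕ) (ε p : ℝ) (hε0 : 0 ≤ ε)
    (X : Fin n → Ω → ℝ) (hXmeas : ∀ i, Measurable (X i))
    (hX01 : ∀ i ω, X i ω = 0 ∨ X i ω = 1)
    (happrox : KWiseApproxIndep n X k ε p)
    (Y : Fin n → Ω' → ℝ) (hYmeas : ∀ i, Measurable (Y i))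
    (hY01 : ∀ i ω, Y i ω = 0 ∨ Y i ω = 1)
    (hYp : ∀ i, (volume {ω | Y i ω = 1}).toReal = p)
    (hYindep : ProbabilityTheory.iIndepFun Y volume) :
    |(∫ ω, ((∑ i, X i ω) - ∫ ω', (∑ i, X i ω') ∂volume) ^ k ∂volume) -
      (∫ ω, ((∑ i, Y i ω) - ∫ ω', (∑ i, X i ω') ∂volume) ^ k ∂volume)| ≤
      ε * (n : ℝ) ^ k := by
  obtain ⟨hmean0, hmean_le⟩ := integral_sum_mem_Icc_of_zero_or_one (μ := volume) hX01
  simpa using happrox.abs_integral_sum_sub_pow_sub_le hε0 hXmeas hX01 hYmeas hY01 hYp hYindep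
    hmean0 (by simpa using hmean_le)

/-- The `k`-th central moment of the sum of `k`-wise `ε`-approximately independent 0-1
random variables differs from that of the sum of truly independent ones
(with success probability `p`) by at most `ε·n^k`. -/
theorem kth_moment_comparison
    {Ω : Type*} [MeasureSpace Ω] [IsProbabilityMeasure (volume : Measure Ω)]
    {Ω' : Type*} [MeasureSpace Ω'] [IsProbabilityMeasure (volume : Measure Ω')]
    (n k : ℕ) (ε p : ℝ) (hn : 1 ≤ n) (hk2 : 2 ≤ k) (hkeven : Even k)
    (hε0 : 0 ≤ ε) (hε1 : ε ≤ 1) (hp0 : 0 ≤ p) (hp1 : p ≤ 1)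
    (X : Fin n → Ω → ℝ) (hXmeas : ∀ i, Measurable (X i))
    (hX01 : ∀ i ω, X i ω = 0 ∨ X i ω = 1)
    (hident : ∀ i j : Fin n, volume {ω | X i ω = 1} = volume {ω | X j ω = 1})
    (happrox : KWiseApproxIndep n X k ε p)
    (Y : Fin n → Ω' → ℝ) (hYmeas : ∀ i, Measurable (Y i))
    (hY01 : ∀ i ω, Y i ω = 0 ∨ Y i ω = 1)
    (hYp : ∀ i, (volume {ω | Y i ω = 1}).toReal = p)
    (hYindep : ProbabilityTheory.iIndepFun Y volume) :
    |(∫ ω, ((∑ i, X i ω) - ∫ ω', (∑ i, X i ω') ∂volume) ^ k ∂volume) -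
      (∫ ω, ((∑ i, Y i ω) - ∫ ω', (∑ i, X i ω') ∂volume) ^ k ∂volume)| ≤
      ε * (n : ℝ) ^ k :=
  kth_moment_comparison_general n k ε p hε0 X hXmeas hX01 happrox Y hYmeas hY01 hYp hYindep
end

section
/- Let c > 0 and λ > c be reals. Let n and b be integers with 1 ≤ b ≤ n, let k ≥ 4 be an even integer, let 0 < p < 1, and set ε = n^{−λ}. Assume 2k ≤ √(b·p) and (4c·ln n)/ln(b·p) ≤ k ≤ ((λ − c)·ln n)/ln(1/p). Let X_1,…,X_n be {0,1}-valued random variables with identical marginal distributions that are k-wise ε-approximately independent for the product distribution D(n,p), and let S ⊆ {1,…,n} with |S| = b. Then Pr[Σ_{j∈S} X_j = 0] ≤ 9·n^{−c}. -/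
open MeasureTheory

open Finset

set_option maxHeartbeats 1000000

lemma bool_sum_prod {t : ℕ} (F : Fin t → Bool → ℝ) :
    ∑ β : Fin t → Bool, ∏ s, F s (β s) = ∏ s, (F s true + F s false) := by
  classical
  calc ∑ β : Fin t → Bool, ∏ s, F s (β s)
      = ∑ β ∈ Fintype.piFinset (fun _ : Fin t => (univ : Finset Bool)), ∏ s, F s (β s) := by
        rw [Fintype.piFinset_univ]
    _ = ∏ s, ∑ b : Bool, F s b := (Finset.prod_univ_sum _ _).symm
    _ = ∏ s, (F s true + F s false) := by simp

lemma pow_self_le_three_pow_mul_factorial (m : ℕ) :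
    (m : ℝ) ^ m ≤ 3 ^ m * (m.factorial : ℝ) := by
  induction m with
  | zero => simp
  | succ m ih =>
    by_cases hm : m = 0
    · subst hm; norm_num [Nat.factorial]
    · have hm0 : (0:ℝ) < m := by exact_mod_cast Nat.pos_of_ne_zero hm
      have h2 : (1 + 1/(m:ℝ)) ^ m ≤ 3 := by
        have h3 : (1 + 1/(m:ℝ)) ^ m ≤ Real.exp (1/m) ^ m := by
          apply pow_le_pow_left₀ (by positivity)
          have := Real.add_one_le_exp (1/(m:ℝ)); linarith
        have h4 : Real.exp (1/(m:ℝ)) ^ m = Real.exp 1 := by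
          rw [← Real.exp_nat_mul]; congr 1; field_simp
        rw [h4] at h3
        exact h3.trans (by linarith [Real.exp_one_lt_d9])
      have key : ((m:ℝ)+1) ^ m ≤ 3 * (m:ℝ)^m := by
        have h1 : ((m:ℝ)+1) = (m:ℝ) * (1 + 1/m) := by field_simp
        rw [h1, mul_pow]
        calc (m:ℝ)^m * (1+1/(m:ℝ))^m ≤ (m:ℝ)^m * 3 :=
              mul_le_mul_of_nonneg_left h2 (by positivity)
          _ = 3 * (m:ℝ)^m := by ring
      have hfm : (0:ℝ) ≤ (m.factorial : ℝ) := by positivity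
      push_cast [Nat.factorial_succ]
      calc ((m:ℝ)+1) ^ (m+1) = ((m:ℝ)+1) * ((m:ℝ)+1)^m := by ring
        _ ≤ ((m:ℝ)+1) * (3 * (m:ℝ)^m) := by
            apply mul_le_mul_of_nonneg_left key (by positivity)
        _ ≤ ((m:ℝ)+1) * (3 * (3^m * (m.factorial:ℝ))) := by
            apply mul_le_mul_of_nonneg_left (by nlinarith) (by positivity)
        _ = 3^(m+1) * (((m:ℝ)+1) * (m.factorial:ℝ)) := by ring

lemma sum_Icc_le_two_mul_top (A : ℕ → ℝ) (hA : ∀ t, 0 ≤ A t) :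
    ∀ m, 1 ≤ m → (∀ t, 1 ≤ t → t < m → 2 * A t ≤ A (t+1)) →
      ∑ t ∈ Icc 1 m, A t ≤ 2 * A m := by
  intro m
  induction m with
  | zero => omega
  | succ m ih =>
    intro _ hdb
    by_cases hm : m = 0
    · subst hm; simp [Icc_self]; linarith [hA 1]
    · have hm1 : 1 ≤ m := Nat.one_le_iff_ne_zero.2 hm
      have h1 := ih hm1 (fun t ht1 ht2 => hdb t ht1 (by omega))
      have h2 : 2 * A m ≤ A (m+1) := hdb m hm1 (by omega)
      rw [Finset.sum_Icc_succ_top (by omega)]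
      linarith

lemma pattern_integral {Ω : Type*} [MeasureSpace Ω] [IsProbabilityMeasure (volume : Measure Ω)]
    (p : ℝ) (t : ℕ) (Y : Fin t → Ω → ℝ) (hY : ∀ s, Measurable (Y s))
    (h01 : ∀ s ω, Y s ω = 0 ∨ Y s ω = 1) (M : Fin t → ℕ) :
    Integrable (fun ω => ∏ s, (Y s ω - p) ^ (M s)) ∧
    ∫ ω, ∏ s, (Y s ω - p) ^ (M s) =
      ∑ β : Fin t → Bool,
        (volume {ω | ∀ s, Y s ω = (if β s then 1 else 0)}).toReal *
          ∏ s, ((if β s then (1:ℝ) else 0) - p) ^ (M s) := by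
  classical
  set A : (Fin t → Bool) → Set Ω := fun β => {ω | ∀ s, Y s ω = (if β s then 1 else 0)} with hA
  set c : (Fin t → Bool) → ℝ := fun β => ∏ s, ((if β s then (1:ℝ) else 0) - p) ^ (M s) with hc
  have hAmeas : ∀ β, MeasurableSet (A β) := by
    intro β
    have : A β = ⋂ s, (Y s) ⁻¹' {(if β s then (1:ℝ) else 0)} := by
      ext ω; simp [hA, Set.mem_iInter]
    rw [this]
    exact MeasurableSet.iInter fun s => (hY s) (measurableSet_singleton _)
  have hpt : ∀ ω, ∏ s, (Y s ω - p) ^ (M s)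
      = ∑ β : Fin t → Bool, (A β).indicator (fun _ => c β) ω := by
    intro ω
    set β₀ : Fin t → Bool := fun s => decide (Y s ω = 1) with hβ₀
    have hmem : ω ∈ A β₀ := by
      intro s
      rcases h01 s ω with h | h <;> simp [hβ₀, h]
    rw [Finset.sum_eq_single_of_mem β₀ (mem_univ _)]
    · rw [Set.indicator_of_mem hmem]
      apply Finset.prod_congr rfl
      intro s _
      have := hmem s
      rw [this]
    · intro β _ hβ
      apply Set.indicator_of_notMem
      intro hm
      apply hβ
      funext s
      have h1 := hm s
      have h2 := hmem s
      rcases h01 s ω with h | h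
      · cases hb : β s
        · simp [hβ₀, h]
        · rw [hb] at h1; simp [h] at h1
      · cases hb : β s
        · rw [hb] at h1; simp [h] at h1
        · simp [hβ₀, h]
  have hint : ∀ β : Fin t → Bool, Integrable ((A β).indicator (fun _ => c β)) :=
    fun β => (integrable_const _).indicator (hAmeas β)
  have hfun : (fun ω => ∏ s, (Y s ω - p) ^ (M s))
      = fun ω => ∑ β : Fin t → Bool, (A β).indicator (fun _ => c β) ω := funext hpt
  constructor
  · rw [hfun]
    exact integrable_finset_sum _ fun β _ => hint β
  · rw [hfun, integral_finset_sum _ fun β _ => hint β]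
    apply Finset.sum_congr rfl
    intro β _
    rw [integral_indicator_const _ (hAmeas β), smul_eq_mul]; rfl

lemma per_f_bound {Ω : Type*} [MeasureSpace Ω] [IsProbabilityMeasure (volume : Measure Ω)]
    {n k : ℕ} (p ε : ℝ) (hp0 : 0 < p) (hp1 : p < 1) (hε : 0 ≤ ε)
    (X : Fin n → Ω → ℝ) (hmeas : ∀ i, Measurable (X i))
    (h01 : ∀ i ω, X i ω = 0 ∨ X i ω = 1)
    (happrox : KWiseApproxIndep n X k ε p) (f : Fin k → Fin n) :
    Integrable (fun ω => ∏ i, (X (f i) ω - p)) ∧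
    ∫ ω, ∏ i, (X (f i) ω - p) ≤
      (if ∀ j ∈ image f univ, 2 ≤ (univ.filter fun i => f i = j).card
        then p ^ (image f univ).card else 0) + ε := by
  classical
  set T := image f univ with hT
  set t := T.card with ht
  set Mc : Fin n → ℕ := fun j => (univ.filter fun i => f i = j).card with hMc
  have htk : t ≤ k := le_trans (card_image_le) (by simp)
  set e := T.equivFin with he
  set idx : Fin t → Fin n := fun s => ((e.symm s : {x // x ∈ T}) : Fin n) with hidx
  have hidxinj : Function.Injective idx := fun a b h => e.symm.injective (Subtype.ext h)
  have hidxmem : ∀ s, idx s ∈ T := fun s => (e.symm s).2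
  have hM1 : ∀ s, 1 ≤ Mc (idx s) := by
    intro s
    obtain ⟨i, -, hi⟩ := Finset.mem_image.1 (hidxmem s)
    exact Finset.card_pos.2 ⟨i, Finset.mem_filter.2 ⟨mem_univ _, hi⟩⟩
  have hregroup : ∀ ω, ∏ i, (X (f i) ω - p)
      = ∏ s : Fin t, (X (idx s) ω - p) ^ (Mc (idx s)) := by
    intro ω
    have h1 : ∏ i, (X (f i) ω - p) = ∏ j ∈ T, (X j ω - p) ^ Mc j :=
      Finset.prod_comp (fun j => X j ω - p) f
    rw [h1, ← Finset.prod_attach T (fun j => (X j ω - p) ^ Mc j), ← Finset.univ_eq_attach]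
    exact (Equiv.prod_comp e.symm (fun x : {x // x ∈ T} => (X (x : Fin n) ω - p) ^ Mc x)).symm
  obtain ⟨hint, hval⟩ := pattern_integral p t (fun s => X (idx s)) (fun s => hmeas _)
    (fun s ω => h01 _ ω) (fun s => Mc (idx s))
  have hfun : (fun ω => ∏ i, (X (f i) ω - p))
      = fun ω => ∏ s : Fin t, (X (idx s) ω - p) ^ (Mc (idx s)) := funext hregroup
  refine ⟨by rw [hfun]; exact hint, ?_⟩
  rw [show (∫ ω, ∏ i, (X (f i) ω - p)) = ∫ ω, ∏ s : Fin t, (X (idx s) ω - p) ^ (Mc (idx s))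
      from by rw [hfun], hval]
  set P : (Fin t → Bool) → ℝ :=
    fun β => (volume {ω | ∀ s, X (idx s) ω = (if β s then 1 else 0)}).toReal with hP
  set cc : (Fin t → Bool) → ℝ :=
    fun β => ∏ s, ((if β s then (1:ℝ) else 0) - p) ^ (Mc (idx s)) with hcc
  set q : (Fin t → Bool) → ℝ := fun β => ∏ s, (if β s then p else 1 - p) with hq
  have happx : ∀ β, |P β - q β| ≤ ε := fun β => happrox t htk idx hidxinj β
  have habs : ∀ β, |cc β| = ∏ s, (if β s then (1-p) else p) ^ (Mc (idx s)) := by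
    intro β
    rw [hcc, Finset.abs_prod]
    apply Finset.prod_congr rfl
    intro s _
    rw [abs_pow]
    congr 1
    cases hb : β s
    · rw [if_neg (by simp), if_neg (by simp), zero_sub, abs_neg, abs_of_pos hp0]
    · rw [if_pos (by simp), if_pos (by simp), abs_of_nonneg (by linarith)]
  have hsumabs : ∑ β : Fin t → Bool, |cc β| ≤ 1 := by
    rw [Finset.sum_congr rfl (fun β _ => habs β),
      bool_sum_prod (fun s b => (if b then (1-p) else p) ^ (Mc (idx s)))]
    apply Finset.prod_le_one
    · intro s _
      norm_num
      have h1 : (0:ℝ) ≤ (1-p) ^ (Mc (idx s)) := pow_nonneg (by linarith) _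
      have h2 : (0:ℝ) ≤ p ^ (Mc (idx s)) := pow_nonneg (by linarith) _
      linarith
    · intro s _
      norm_num
      have h1 : (1-p) ^ (Mc (idx s)) ≤ (1-p) ^ 1 :=
        pow_le_pow_of_le_one (by linarith) (by linarith) (hM1 s)
      have h2 : p ^ (Mc (idx s)) ≤ p ^ 1 :=
        pow_le_pow_of_le_one (by linarith) (by linarith) (hM1 s)
      simp only [pow_one] at h1 h2
      linarith
  have hqc : ∑ β : Fin t → Bool, q β * cc β
      = ∏ s : Fin t, (p * (1-p) ^ (Mc (idx s)) + (1-p) * (-p) ^ (Mc (idx s))) := by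
    have h1 : ∀ β : Fin t → Bool, q β * cc β = ∏ s : Fin t,
        ((if β s then p else 1-p) * ((if β s then (1:ℝ) else 0) - p) ^ (Mc (idx s))) := by
      intro β; rw [hq, hcc, ← Finset.prod_mul_distrib]
    rw [Finset.sum_congr rfl (fun β _ => h1 β),
      bool_sum_prod (fun s b => (if b then p else 1-p) * ((if b then (1:ℝ) else 0) - p) ^ (Mc (idx s)))]
    apply Finset.prod_congr rfl
    intro s _
    norm_num
  have hstep : ∑ β : Fin t → Bool, P β * cc β
      ≤ (∑ β : Fin t → Bool, q β * cc β) + ε := by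
    have h1 : ∀ β : Fin t → Bool, P β * cc β ≤ q β * cc β + ε * |cc β| := by
      intro β
      have h2 : P β * cc β - q β * cc β ≤ ε * |cc β| := by
        calc P β * cc β - q β * cc β = (P β - q β) * cc β := by ring
          _ ≤ |(P β - q β) * cc β| := le_abs_self _
          _ = |P β - q β| * |cc β| := abs_mul _ _
          _ ≤ ε * |cc β| := mul_le_mul_of_nonneg_right (happx β) (abs_nonneg _)
      linarith
    calc ∑ β : Fin t → Bool, P β * cc β
        ≤ ∑ β : Fin t → Bool, (q β * cc β + ε * |cc β|) := Finset.sum_le_sum fun β _ => h1 β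
      _ = (∑ β : Fin t → Bool, q β * cc β) + ε * ∑ β : Fin t → Bool, |cc β| := by
          rw [Finset.sum_add_distrib, Finset.mul_sum]
      _ ≤ (∑ β : Fin t → Bool, q β * cc β) + ε := by nlinarith
  apply le_trans hstep
  apply add_le_add_left
  by_cases hgood : ∀ j ∈ image f univ, 2 ≤ (univ.filter fun i => f i = j).card
  · rw [if_pos hgood, hqc]
    have hfac : ∀ s : Fin t, |p * (1-p) ^ (Mc (idx s)) + (1-p) * (-p) ^ (Mc (idx s))| ≤ p := by
      intro s
      have hM2 : 2 ≤ Mc (idx s) := hgood (idx s) (hidxmem s)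
      have h1 : (1-p) ^ (Mc (idx s)) ≤ 1 - p := by
        have := pow_le_pow_of_le_one (by linarith : (0:ℝ) ≤ 1-p) (by linarith) (hM1 s)
        simpa using this
      have h2 : p ^ (Mc (idx s)) ≤ p ^ 2 :=
        pow_le_pow_of_le_one (by linarith) (by linarith) hM2
      have h3 : (0:ℝ) ≤ (1-p) ^ (Mc (idx s)) := pow_nonneg (by linarith) _
      have h4 : (0:ℝ) ≤ p ^ (Mc (idx s)) := pow_nonneg (by linarith) _
      calc |p * (1-p) ^ (Mc (idx s)) + (1-p) * (-p) ^ (Mc (idx s))|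
          ≤ |p * (1-p) ^ (Mc (idx s))| + |(1-p) * (-p) ^ (Mc (idx s))| := abs_add_le _ _
        _ = p * (1-p) ^ (Mc (idx s)) + (1-p) * p ^ (Mc (idx s)) := by
            simp [abs_mul, abs_pow, abs_neg, abs_of_pos hp0,
              abs_of_nonneg (show (0:ℝ) ≤ 1-p by linarith), abs_of_nonneg h3]
        _ ≤ p := by nlinarith
    calc ∏ s : Fin t, (p * (1-p) ^ (Mc (idx s)) + (1-p) * (-p) ^ (Mc (idx s)))
        ≤ |∏ s : Fin t, (p * (1-p) ^ (Mc (idx s)) + (1-p) * (-p) ^ (Mc (idx s)))| :=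
          le_abs_self _
      _ = ∏ s : Fin t, |p * (1-p) ^ (Mc (idx s)) + (1-p) * (-p) ^ (Mc (idx s))| :=
          Finset.abs_prod _ _
      _ ≤ ∏ _s : Fin t, p := Finset.prod_le_prod (fun s _ => abs_nonneg _) (fun s _ => hfac s)
      _ = p ^ t := by rw [Finset.prod_const, Finset.card_univ, Fintype.card_fin]
  · rw [if_neg hgood, hqc]
    push_neg at hgood
    obtain ⟨j, hj, hjlt⟩ := hgood
    set s₀ : Fin t := e ⟨j, hj⟩ with hs₀
    have hidxs₀ : idx s₀ = j := by rw [hidx, hs₀]; simp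
    have hMeq : Mc (idx s₀) = 1 := by
      have h5 := hM1 s₀
      rw [hidxs₀] at h5 ⊢
      simp only [hMc] at h5 ⊢
      omega
    have : (p * (1-p) ^ (Mc (idx s₀)) + (1-p) * (-p) ^ (Mc (idx s₀))) = 0 := by
      rw [hMeq]; ring
    rw [Finset.prod_eq_zero (mem_univ s₀) this]

/-- For suitable parameters, a fixed set `S` of size `b` is hit by the random set
`{i : X_i = 1}` with probability at least `1 − 9·n^{−c}`. -/
theorem hitting_probability_bound
    {Ω : Type*} [MeasureSpace Ω] [IsProbabilityMeasure (volume : Measure Ω)]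
    (c lam : ℝ) (hc : 0 < c) (hlam : c < lam)
    (n b k : ℕ) (hb1 : 1 ≤ b) (hbn : b ≤ n) (hk4 : 4 ≤ k) (hkeven : Even k)
    (p ε : ℝ) (hp0 : 0 < p) (hp1 : p < 1) (hε : ε = (n : ℝ) ^ (-lam))
    (hkb : (2 * k : ℝ) ≤ Real.sqrt ((b : ℝ) * p))
    (hklow : 4 * c * Real.log n / Real.log ((b : ℝ) * p) ≤ (k : ℝ))
    (hkhigh : (k : ℝ) ≤ (lam - c) * Real.log n / Real.log (1 / p))
    (X : Fin n → Ω → ℝ) (hmeas : ∀ i, Measurable (X i))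
    (h01 : ∀ i ω, X i ω = 0 ∨ X i ω = 1)
    (hident : ∀ i j : Fin n, volume {ω | X i ω = 1} = volume {ω | X j ω = 1})
    (happrox : KWiseApproxIndep n X k ε p)
    (S : Finset (Fin n)) (hS : S.card = b) :
    (volume {ω | ∑ j ∈ S, X j ω = 0}).toReal ≤ 9 * (n : ℝ) ^ (-c) := by
  classical
  obtain ⟨m, hm2⟩ := hkeven
  have hk2m : k = 2 * m := by omega
  have hm2le : 2 ≤ m := by omega
  have hk4' : (4:ℝ) ≤ (k:ℝ) := by exact_mod_cast hk4
  have hn1 : 1 ≤ n := hb1.trans hbn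
  have hnpos : (0:ℝ) < n := by exact_mod_cast Nat.lt_of_lt_of_le Nat.zero_lt_one hn1
  have hbpos : (0:ℝ) < b := by exact_mod_cast hb1
  set μ : ℝ := (b : ℝ) * p with hμ
  have hμpos : 0 < μ := mul_pos hbpos hp0
  have hμk : (2 * (k:ℝ)) ^ 2 ≤ μ := by
    have h1 := Real.sq_sqrt hμpos.le
    nlinarith [Real.sqrt_nonneg μ]
  have hμ64 : (64:ℝ) ≤ μ := by nlinarith
  have hμm : 16 * (m:ℝ)^2 ≤ μ := by
    have : (m:ℝ) = (k:ℝ)/2 := by rw [hk2m]; push_cast; ring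
    nlinarith
  have hm2le' : (2:ℝ) ≤ (m:ℝ) := by exact_mod_cast hm2le
  have hεnn : 0 ≤ ε := by rw [hε]; positivity
  -- the event
  set E : Set Ω := {ω | ∑ j ∈ S, X j ω = 0} with hEdef
  have hEmeas : MeasurableSet E := by
    have hmsum : Measurable fun ω => ∑ j ∈ S, X j ω :=
      Finset.measurable_sum _ fun i _ => hmeas i
    exact hmsum (measurableSet_singleton 0)
  set Z : Ω → ℝ := fun ω => ∑ j ∈ S, (X j ω - p) with hZdef
  set PF : Finset (Fin k → Fin n) := Fintype.piFinset (fun _ : Fin k => S) with hPFdef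
  have hPFmem : ∀ f ∈ PF, ∀ i, f i ∈ S := fun f hf i => Fintype.mem_piFinset.1 hf i
  have hZrep : ∀ ω, Z ω ^ k = ∑ f ∈ PF, ∏ i, (X (f i) ω - p) := by
    intro ω
    calc Z ω ^ k = ∏ _i : Fin k, (∑ j ∈ S, (X j ω - p)) := by
          rw [Finset.prod_const, Finset.card_univ, Fintype.card_fin]
      _ = ∑ f ∈ PF, ∏ i, (X (f i) ω - p) := by
          rw [hPFdef]; exact Finset.prod_univ_sum _ _
  have hZfun : (fun ω => Z ω ^ k) = fun ω => ∑ f ∈ PF, ∏ i, (X (f i) ω - p) :=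
    funext hZrep
  have hperf := fun f => per_f_bound p ε hp0 hp1 hεnn X hmeas h01 happrox f
  have hZint : Integrable (fun ω => Z ω ^ k) := by
    rw [hZfun]
    exact integrable_finset_sum _ fun f _ => (hperf f).1
  -- lower bound
  have hPE : (volume E).toReal * μ ^ k ≤ ∫ ω, Z ω ^ k := by
    have h1 : ∫ ω, E.indicator (fun _ => μ ^ k) ω = (volume E).toReal * μ ^ k := by
      rw [integral_indicator_const _ hEmeas, smul_eq_mul]; rfl
    rw [← h1]
    apply integral_mono ((integrable_const _).indicator hEmeas) hZint
    intro ω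
    by_cases hω : ω ∈ E
    · rw [Set.indicator_of_mem hω]
      have hZω : Z ω = -μ := by
        have h0 : ∑ j ∈ S, X j ω = 0 := hω
        rw [hZdef]
        simp only [Finset.sum_sub_distrib, h0, Finset.sum_const, hS, zero_sub,
          nsmul_eq_mul, hμ]
      show μ ^ k ≤ Z ω ^ k
      rw [hZω, Even.neg_pow ⟨m, by omega⟩]
    · rw [Set.indicator_of_notMem hω]
      show (0:ℝ) ≤ Z ω ^ k
      exact Even.pow_nonneg ⟨m, by omega⟩ _
  -- upper bound
  have hintsum : ∫ ω, Z ω ^ k = ∑ f ∈ PF, ∫ ω, ∏ i, (X (f i) ω - p) := by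
    rw [hZfun]
    exact integral_finset_sum _ fun f _ => (hperf f).1
  have hgoodsum : ∑ f ∈ PF, ∫ ω, ∏ i, (X (f i) ω - p) ≤
      (∑ f ∈ PF, (if ∀ j ∈ image f univ, 2 ≤ (univ.filter fun i => f i = j).card
        then p ^ (image f univ).card else 0)) + (b:ℝ) ^ k * ε := by
    have h1 : (PF.card : ℝ) = (b:ℝ) ^ k := by
      rw [hPFdef, Fintype.card_piFinset]
      simp [hS]
    calc ∑ f ∈ PF, ∫ ω, ∏ i, (X (f i) ω - p)
        ≤ ∑ f ∈ PF, ((if ∀ j ∈ image f univ, 2 ≤ (univ.filter fun i => f i = j).card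
            then p ^ (image f univ).card else 0) + ε) :=
          Finset.sum_le_sum fun f _ => (hperf f).2
      _ = (∑ f ∈ PF, (if ∀ j ∈ image f univ, 2 ≤ (univ.filter fun i => f i = j).card
            then p ^ (image f univ).card else 0)) + (b:ℝ) ^ k * ε := by
          rw [Finset.sum_add_distrib, Finset.sum_const, nsmul_eq_mul, h1]
  -- counting bound
  have hcount : (∑ f ∈ PF, (if ∀ j ∈ image f univ, 2 ≤ (univ.filter fun i => f i = j).card
        then p ^ (image f univ).card else 0)) ≤ 2 * (3 * (m:ℝ) * μ) ^ m := by
    rw [← Finset.sum_filter]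
    set G := PF.filter (fun f => ∀ j ∈ image f univ,
      2 ≤ (univ.filter fun i => f i = j).card) with hG
    set B := (S.powerset.filter fun T => T.card ∈ Icc 1 m) with hB
    have hmaps : ∀ f ∈ G, image f univ ∈ B := by
      intro f hf
      rw [hG, Finset.mem_filter] at hf
      obtain ⟨hfPF, hfgood⟩ := hf
      rw [hB, Finset.mem_filter, Finset.mem_powerset]
      refine ⟨?_, ?_⟩
      · intro j hj
        obtain ⟨i, -, hi⟩ := Finset.mem_image.1 hj
        exact hi ▸ hPFmem f hfPF i
      · rw [Finset.mem_Icc]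
        constructor
        · apply Finset.card_pos.2
          exact Finset.image_nonempty.2 ⟨⟨0, by omega⟩, mem_univ _⟩
        · have h1 : (image f univ).card * 2 ≤
              ∑ j ∈ image f univ, (univ.filter fun i => f i = j).card := by
            calc (image f univ).card * 2 = ∑ _j ∈ image f univ, 2 := by
                  rw [Finset.sum_const, smul_eq_mul]
              _ ≤ _ := Finset.sum_le_sum hfgood
          have h2 : ∑ j ∈ image f univ, (univ.filter fun i => f i = j).card = k := by
            rw [← Finset.card_eq_sum_card_image f univ, Finset.card_univ, Fintype.card_fin]
          omega
    rw [← Finset.sum_fiberwise_of_maps_to hmaps (fun f => (p:ℝ) ^ (image f univ).card)]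
    have hfiber : ∀ T ∈ B,
        (∑ f ∈ G.filter (fun f => image f univ = T), (p:ℝ) ^ (image f univ).card)
        ≤ ((T.card : ℝ)) ^ k * p ^ T.card := by
      intro T hT
      have h1 : ∀ f ∈ G.filter (fun f => image f univ = T),
          (p:ℝ) ^ (image f univ).card = p ^ T.card := by
        intro f hf; rw [(Finset.mem_filter.1 hf).2]
      rw [Finset.sum_congr rfl h1, Finset.sum_const, nsmul_eq_mul]
      apply mul_le_mul_of_nonneg_right _ (by positivity)
      have hsub : G.filter (fun f => image f univ = T)
          ⊆ Fintype.piFinset (fun _ : Fin k => T) := by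
        intro f hf
        rw [Fintype.mem_piFinset]
        intro i
        rw [← (Finset.mem_filter.1 hf).2]
        exact Finset.mem_image_of_mem f (mem_univ i)
      calc ((G.filter (fun f => image f univ = T)).card : ℝ)
          ≤ ((Fintype.piFinset (fun _ : Fin k => T)).card : ℝ) := by
            exact_mod_cast Finset.card_le_card hsub
        _ = ((T.card : ℝ)) ^ k := by
            rw [Fintype.card_piFinset]
            push_cast
            rw [Finset.prod_const, Finset.card_univ, Fintype.card_fin]
    apply le_trans (Finset.sum_le_sum hfiber)
    set A : ℕ → ℝ := fun t => μ ^ t * (t:ℝ) ^ k / (t.factorial : ℝ) with hA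
    have hmaps2 : ∀ T ∈ B, T.card ∈ Icc 1 m := fun T hT => (Finset.mem_filter.1 hT).2
    rw [← Finset.sum_fiberwise_of_maps_to hmaps2 (fun T => ((T.card : ℝ)) ^ k * p ^ T.card)]
    have hfiber2 : ∀ t ∈ Icc 1 m,
        (∑ T ∈ B.filter (fun T => T.card = t), ((T.card : ℝ)) ^ k * p ^ T.card) ≤ A t := by
      intro t ht
      have h1 : ∀ T ∈ B.filter (fun T => T.card = t),
          ((T.card : ℝ)) ^ k * p ^ T.card = (t:ℝ) ^ k * p ^ t := by
        intro T hT; rw [(Finset.mem_filter.1 hT).2]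
      rw [Finset.sum_congr rfl h1, Finset.sum_const, nsmul_eq_mul]
      have hsub2 : B.filter (fun T => T.card = t) ⊆ S.powersetCard t := by
        intro T hT
        rw [Finset.mem_powersetCard]
        have h3 := Finset.mem_filter.1 hT
        exact ⟨Finset.mem_powerset.1 (Finset.mem_filter.1 h3.1).1, h3.2⟩
      have hcard2 : (((B.filter (fun T => T.card = t)).card : ℕ) : ℝ) ≤ (b.choose t : ℝ) := by
        have h4 := Finset.card_le_card hsub2
        rw [Finset.card_powersetCard, hS] at h4
        exact_mod_cast h4
      have hchoose : (b.choose t : ℝ) ≤ (b:ℝ) ^ t / (t.factorial : ℝ) :=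
        Nat.choose_le_pow_div t b
      have hfpos : (0:ℝ) < (t.factorial : ℝ) := by exact_mod_cast t.factorial_pos
      calc ((B.filter (fun T => T.card = t)).card : ℝ) * ((t:ℝ) ^ k * p ^ t)
          ≤ ((b:ℝ) ^ t / (t.factorial : ℝ)) * ((t:ℝ) ^ k * p ^ t) := by
            apply mul_le_mul_of_nonneg_right (hcard2.trans hchoose) (by positivity)
        _ = A t := by
            simp only [hA, hμ, mul_pow]
            field_simp
    apply le_trans (Finset.sum_le_sum hfiber2)
    have hApos : ∀ t, 0 ≤ A t := by intro t; simp only [hA]; positivity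
    have hdb : ∀ t, 1 ≤ t → t < m → 2 * A t ≤ A (t + 1) := by
      intro t ht1 htm
      have hfpos : (0:ℝ) < (t.factorial : ℝ) := by exact_mod_cast t.factorial_pos
      have key : A (t+1) = (μ / ((t:ℝ)+1)) * (μ ^ t * (((t:ℕ)+1 : ℕ) : ℝ) ^ k / (t.factorial : ℝ)) := by
        simp only [hA]
        rw [Nat.factorial_succ]
        push_cast
        field_simp
        ring
      have h7 : (t:ℝ) ^ k ≤ (((t:ℕ)+1 : ℕ) : ℝ) ^ k := by
        apply pow_le_pow_left₀ (by positivity) (by push_cast; linarith)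
      have h8 : (2:ℝ) ≤ μ / ((t:ℝ)+1) := by
        rw [le_div_iff₀ (by positivity)]
        have htm' : (t:ℝ) + 1 ≤ (m:ℝ) := by exact_mod_cast htm
        nlinarith
      have h9 : (0:ℝ) ≤ μ ^ t * (((t:ℕ)+1 : ℕ) : ℝ) ^ k / (t.factorial : ℝ) := by positivity
      calc 2 * A t = 2 * (μ ^ t * (t:ℝ) ^ k / (t.factorial : ℝ)) := by simp only [hA]
        _ ≤ 2 * (μ ^ t * (((t:ℕ)+1 : ℕ) : ℝ) ^ k / (t.factorial : ℝ)) := by gcongr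
        _ ≤ (μ / ((t:ℝ)+1)) * (μ ^ t * (((t:ℕ)+1 : ℕ) : ℝ) ^ k / (t.factorial : ℝ)) :=
            mul_le_mul_of_nonneg_right h8 h9
        _ = A (t+1) := key.symm
    apply le_trans (sum_Icc_le_two_mul_top A hApos m (by omega) hdb)
    have hAm : A m ≤ (3 * (m:ℝ) * μ) ^ m := by
      have h1 : ((m:ℝ)) ^ k = (m:ℝ) ^ m * (m:ℝ) ^ m := by rw [hk2m, two_mul, pow_add]
      have h2 : (m:ℝ) ^ m ≤ 3 ^ m * (m.factorial : ℝ) := pow_self_le_three_pow_mul_factorial m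
      have hfpos : (0:ℝ) < (m.factorial : ℝ) := by exact_mod_cast m.factorial_pos
      calc A m = μ ^ m * ((m:ℝ) ^ m * (m:ℝ) ^ m) / (m.factorial : ℝ) := by
            simp only [hA]; rw [h1]
        _ ≤ μ ^ m * ((m:ℝ) ^ m * (3 ^ m * (m.factorial : ℝ))) / (m.factorial : ℝ) := by gcongr
        _ = 3 ^ m * (m:ℝ) ^ m * μ ^ m := by field_simp
        _ = (3 * (m:ℝ) * μ) ^ m := by ring
    linarith
  -- final analytic bounds
  have hfinal1 : 2 * (3 * (m:ℝ) * μ) ^ m / μ ^ k ≤ 2 * (n:ℝ) ^ (-c) := by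
    have hratio : (3 * (m:ℝ) * μ) ^ m / μ ^ k = (3 * m / μ) ^ m := by
      rw [hk2m, pow_mul, ← div_pow]
      congr 1
      field_simp
    have hk2m' : (k:ℝ) = 2 * m := by rw [hk2m]; push_cast; ring
    have hbase : 3 * (m:ℝ) / μ ≤ μ ^ (-(1/2) : ℝ) := by
      have h1 : 3 * (m:ℝ) ≤ Real.sqrt μ := by
        have : 2 * (k:ℝ) = 4 * m := by rw [hk2m']; ring
        nlinarith [hkb]
      have h2 : μ ^ (-(1/2):ℝ) = Real.sqrt μ / μ := by
        rw [show (-(1/2):ℝ) = 1/2 - 1 by norm_num, Real.rpow_sub hμpos,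
          Real.rpow_one, Real.sqrt_eq_rpow]
      calc 3 * (m:ℝ) / μ ≤ Real.sqrt μ / μ := by gcongr
        _ = μ ^ (-(1/2):ℝ) := h2.symm
    have hpowm : (3 * (m:ℝ) / μ) ^ m ≤ (μ ^ (-(1/2):ℝ)) ^ m :=
      pow_le_pow_left₀ (by positivity) hbase m
    have hmu_half : (μ ^ (-(1/2):ℝ)) ^ m = μ ^ (-((m:ℝ)/2)) := by
      rw [← Real.rpow_natCast (μ ^ (-(1/2):ℝ)) m, ← Real.rpow_mul hμpos.le]
      congr 1
      ring
    have hexp : μ ^ (-((m:ℝ)/2)) ≤ (n:ℝ) ^ (-c) := by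
      rw [Real.rpow_def_of_pos hμpos, Real.rpow_def_of_pos hnpos]
      apply Real.exp_le_exp.2
      have hlogμpos : 0 < Real.log μ := Real.log_pos (by linarith)
      have h4 : 4 * c * Real.log n ≤ (k:ℝ) * Real.log μ := by
        have := (div_le_iff₀ hlogμpos).1 hklow
        linarith
      rw [hk2m'] at h4
      linarith
    calc 2 * (3 * (m:ℝ) * μ) ^ m / μ ^ k = 2 * ((3 * m / μ) ^ m) := by
          rw [mul_div_assoc, hratio]
      _ ≤ 2 * (n:ℝ) ^ (-c) := by
          have := (hpowm.trans_eq hmu_half).trans hexp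
          linarith
  have hfinal2 : (b:ℝ) ^ k * ε / μ ^ k ≤ (n:ℝ) ^ (-c) := by
    have hlogp : 0 < Real.log (1/p) := Real.log_pos (by rw [lt_div_iff₀ hp0]; linarith)
    have h2 : (k:ℝ) * Real.log (1/p) ≤ (lam - c) * Real.log n := by
      have := (le_div_iff₀ hlogp).1 hkhigh
      linarith
    have h3 : ((1:ℝ)/p) ^ (k:ℕ) ≤ (n:ℝ) ^ (lam - c) := by
      have h4 : ((1:ℝ)/p) ^ (k:ℕ) = Real.exp (Real.log (1/p) * (k:ℝ)) := by
        rw [← Real.rpow_natCast (1/p) k, Real.rpow_def_of_pos (by positivity)]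
      rw [h4, Real.rpow_def_of_pos hnpos]
      exact Real.exp_le_exp.2 (by linarith)
    have h5 : (b:ℝ) ^ k / μ ^ k = ((1:ℝ)/p) ^ k := by
      rw [hμ, mul_pow, div_pow]
      have hbk : (b:ℝ) ^ k ≠ 0 := (pow_pos hbpos k).ne'
      field_simp
      rw [one_pow]
    calc (b:ℝ) ^ k * ε / μ ^ k = ε * ((b:ℝ) ^ k / μ ^ k) := by ring
      _ = ε * ((1:ℝ)/p) ^ k := by rw [h5]
      _ ≤ (n:ℝ) ^ (-lam) * (n:ℝ) ^ (lam - c) := by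
          rw [hε]
          exact mul_le_mul_of_nonneg_left h3 (Real.rpow_nonneg hnpos.le _)
      _ = (n:ℝ) ^ (-c) := by
          rw [← Real.rpow_add hnpos]
          ring_nf
  have hμkpos : (0:ℝ) < μ ^ k := pow_pos hμpos k
  have hstep : (volume E).toReal ≤
      (2 * (3 * (m:ℝ) * μ) ^ m + (b:ℝ) ^ k * ε) / μ ^ k := by
    rw [le_div_iff₀ hμkpos]
    calc (volume E).toReal * μ ^ k ≤ ∫ ω, Z ω ^ k := hPE
      _ ≤ 2 * (3 * (m:ℝ) * μ) ^ m + (b:ℝ) ^ k * ε := by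
          rw [hintsum]; exact hgoodsum.trans (by linarith)
  have hrpow_nonneg : (0:ℝ) ≤ (n:ℝ) ^ (-c) := Real.rpow_nonneg hnpos.le _
  calc (volume E).toReal ≤ (2 * (3 * (m:ℝ) * μ) ^ m + (b:ℝ) ^ k * ε) / μ ^ k := hstep
    _ = 2 * (3 * (m:ℝ) * μ) ^ m / μ ^ k + (b:ℝ) ^ k * ε / μ ^ k := by ring
    _ ≤ 2 * (n:ℝ) ^ (-c) + (n:ℝ) ^ (-c) := add_le_add hfinal1 hfinal2
    _ ≤ 9 * (n:ℝ) ^ (-c) := by linarith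
end

section
/- Let c > 0 and λ > c be reals. Let n ≥ 1 be an integer, let k ≥ 4 be an even integer, let 0 < p < 1, and set ε = n^{−λ}. Assume 2k ≤ √(n·p) and (4c·ln n)/ln(n·p) ≤ k ≤ ((λ − c)·ln n)/ln(1/p). Let X_1,…,X_n be {0,1}-valued random variables with identical marginal distributions that are k-wise ε-approximately independent for the product distribution D(n,p). Then Pr[Σ_{i=1}^n X_i ≥ 2·n·p] ≤ 9·n^{−c}. -/
open MeasureTheory

namespace KWTail
open Finset

variable {k n : ℕ}

/-- first occurrence position of the value `f j`. -/
def firstOcc (f : Fin k → Fin n) (j : Fin k) : Fin k :=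
  (Finset.univ.filter fun j' => f j' = f j).min' ⟨j, by simp⟩

lemma firstOcc_apply (f : Fin k → Fin n) (j : Fin k) : f (firstOcc f j) = f j := by
  have h := (Finset.univ.filter fun j' => f j' = f j).min'_mem ⟨j, by simp⟩
  simpa [firstOcc] using h

lemma firstOcc_eq_of_eq {f : Fin k → Fin n} {j j' : Fin k} (h : f j = f j') :
    firstOcc f j = firstOcc f j' := by
  unfold firstOcc
  simp only [h]

lemma firstOcc_idem (f : Fin k → Fin n) (j : Fin k) :
    firstOcc f (firstOcc f j) = firstOcc f j :=
  firstOcc_eq_of_eq (firstOcc_apply f j)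

/-- set of first-occurrence positions -/
def TT (f : Fin k → Fin n) : Finset (Fin k) :=
  Finset.univ.filter fun j => firstOcc f j = j

lemma mem_TT {f : Fin k → Fin n} {j : Fin k} : j ∈ TT f ↔ firstOcc f j = j := by
  simp [TT]

lemma firstOcc_mem_TT (f : Fin k → Fin n) (j : Fin k) : firstOcc f j ∈ TT f :=
  mem_TT.2 (firstOcc_idem f j)

lemma card_TT (f : Fin k → Fin n) : (TT f).card = (Finset.univ.image f).card := by
  apply Finset.card_bij (fun a _ => f a)
  · intro a ha; exact Finset.mem_image_of_mem f (Finset.mem_univ a)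
  · intro a ha b hb hab
    have := firstOcc_eq_of_eq hab
    rw [mem_TT.1 ha, mem_TT.1 hb] at this; exact this
  · intro b hb
    obtain ⟨j, _, rfl⟩ := Finset.mem_image.1 hb
    exact ⟨firstOcc f j, firstOcc_mem_TT f j, firstOcc_apply f j⟩

def Good (f : Fin k → Fin n) : Prop :=
  ∀ i ∈ Finset.univ.image f, 2 ≤ (Finset.univ.filter fun j => f j = i).card

instance : DecidablePred (Good (k := k) (n := n)) := fun _ => by
  unfold Good; infer_instance

lemma Good.two_mul_card_le {f : Fin k → Fin n} (hf : Good f) : 2 * (TT f).card ≤ k := by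
  have hk : k = ∑ i ∈ Finset.univ.image f, (Finset.univ.filter fun j => f j = i).card := by
    simpa using Finset.card_eq_sum_card_fiberwise
      (f := f) (s := Finset.univ) (t := Finset.univ.image f)
      (fun x _ => Finset.mem_image_of_mem f (Finset.mem_univ x))
  calc 2 * (TT f).card = ∑ _i ∈ Finset.univ.image f, 2 := by
        rw [Finset.sum_const, card_TT, smul_eq_mul, mul_comm]
    _ ≤ ∑ i ∈ Finset.univ.image f, (Finset.univ.filter fun j => f j = i).card :=
        Finset.sum_le_sum hf
    _ = k := hk.symm

/-- the encoding target -/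
def BB (k n : ℕ) : Finset (Σ T : Finset (Fin k), (∀ a ∈ T, Fin n) × (∀ a ∈ Finset.univ \ T, Fin k)) :=
  (Finset.univ.powerset.filter fun T => 2 * T.card ≤ k).sigma
    (fun T => (T.pi fun _ => (Finset.univ : Finset (Fin n))) ×ˢ ((Finset.univ \ T).pi fun _ => T))

def Phi (f : Fin k → Fin n) : Σ T : Finset (Fin k), (∀ a ∈ T, Fin n) × (∀ a ∈ Finset.univ \ T, Fin k) :=
  ⟨TT f, (fun a _ => f a, fun a _ => firstOcc f a)⟩

lemma Phi_mem {f : Fin k → Fin n} (hf : Good f) : Phi f ∈ BB k n := by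
  refine Finset.mem_sigma.2 ⟨?_, ?_⟩
  · exact Finset.mem_filter.2 ⟨Finset.mem_powerset.2 (Finset.subset_univ _), hf.two_mul_card_le⟩
  · refine Finset.mem_product.2 ⟨?_, ?_⟩
    · exact Finset.mem_pi.2 fun a _ => Finset.mem_univ _
    · exact Finset.mem_pi.2 fun a _ => firstOcc_mem_TT f a

/-- total evaluation maps, to avoid HEq pain -/
def ev1 (x : Σ T : Finset (Fin k), (∀ a ∈ T, Fin n) × (∀ a ∈ Finset.univ \ T, Fin k))
    (j : Fin k) : Option (Fin n) :=
  if hj : j ∈ x.1 then some (x.2.1 j hj) else none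

def ev2 (x : Σ T : Finset (Fin k), (∀ a ∈ T, Fin n) × (∀ a ∈ Finset.univ \ T, Fin k))
    (j : Fin k) : Option (Fin k) :=
  if hj : j ∈ Finset.univ \ x.1 then some (x.2.2 j hj) else none

lemma Phi_injective : Function.Injective (Phi (k := k) (n := n)) := by
  intro f g h
  have h1 : TT f = TT g := congrArg Sigma.fst h
  have he1 : ∀ j, ev1 (Phi f) j = ev1 (Phi g) j := fun j => congrFun (congrArg ev1 h) j
  have he2 : ∀ j, ev2 (Phi f) j = ev2 (Phi g) j := fun j => congrFun (congrArg ev2 h) j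
  have key : ∀ j, j ∈ TT f → f j = g j := by
    intro j hj
    have := he1 j
    rw [ev1, ev1] at this
    simp only [Phi] at this
    simp only [hj, h1 ▸ hj, ↓reduceDIte] at this
    exact Option.some.inj this
  funext j
  by_cases hj : j ∈ TT f
  · exact key j hj
  · have hj' : j ∈ Finset.univ \ TT f := Finset.mem_sdiff.2 ⟨Finset.mem_univ j, hj⟩
    have := he2 j
    rw [ev2, ev2] at this
    simp only [Phi] at this
    simp only [hj', h1 ▸ hj', ↓reduceDIte] at this
    have hfo : firstOcc f j = firstOcc g j := Option.some.inj this
    have h2 : f (firstOcc f j) = g (firstOcc f j) := key _ (firstOcc_mem_TT f j)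
    calc f j = f (firstOcc f j) := (firstOcc_apply f j).symm
      _ = g (firstOcc f j) := h2
      _ = g (firstOcc g j) := by rw [hfo]
      _ = g j := firstOcc_apply g j

lemma sum_BB (p : ℝ) :
    ∑ x ∈ BB k n, p ^ x.1.card
      = ∑ T ∈ Finset.univ.powerset.filter (fun T : Finset (Fin k) => 2 * T.card ≤ k),
          ((n : ℝ) ^ T.card * (T.card : ℝ) ^ (k - T.card)) * p ^ T.card := by
  rw [BB, Finset.sum_sigma]
  refine Finset.sum_congr rfl fun T _ => ?_
  dsimp only
  rw [Finset.sum_const, Finset.card_product, Finset.card_pi, Finset.card_pi]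
  simp only [Finset.prod_const, Finset.card_sdiff_of_subset (Finset.subset_univ T),
    Finset.card_univ, Fintype.card_fin]
  push_cast [nsmul_eq_mul]
  ring

lemma sum_good_le (p : ℝ) (hp : 0 ≤ p) :
    ∑ f ∈ Finset.univ.filter (Good (k := k) (n := n)), p ^ (Finset.univ.image f).card
      ≤ ∑ j ∈ Finset.range (k+1), (k.choose j : ℝ) *
          (if 2*j ≤ k then ((n:ℝ) ^ j * (j:ℝ) ^ (k-j)) * p ^ j else 0) := by
  classical
  have h1 : ∑ f ∈ Finset.univ.filter (Good (k := k) (n := n)), p ^ (Finset.univ.image f).card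
      = ∑ x ∈ (Finset.univ.filter (Good (k := k) (n := n))).image Phi, p ^ x.1.card := by
    rw [Finset.sum_image (fun x _ y _ h => Phi_injective h)]
    refine Finset.sum_congr rfl fun f _ => ?_
    rw [Phi, ← card_TT]
  have h2 : (Finset.univ.filter (Good (k := k) (n := n))).image Phi ⊆ BB k n := by
    intro x hx
    obtain ⟨f, hf, rfl⟩ := Finset.mem_image.1 hx
    exact Phi_mem (Finset.mem_filter.1 hf).2
  have h3 : ∑ x ∈ (Finset.univ.filter (Good (k := k) (n := n))).image Phi, p ^ x.1.card
      ≤ ∑ x ∈ BB k n, p ^ x.1.card :=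
    Finset.sum_le_sum_of_subset_of_nonneg h2 (fun x _ _ => pow_nonneg hp _)
  rw [h1]
  refine h3.trans ?_
  rw [sum_BB, Finset.sum_filter, Finset.sum_powerset]
  apply le_of_eq
  refine Finset.sum_congr (by rw [Finset.card_univ, Fintype.card_fin]) fun j hj => ?_
  have : ∀ T ∈ Finset.powersetCard j (Finset.univ : Finset (Fin k)),
      (if 2 * T.card ≤ k then ((n : ℝ) ^ T.card * (T.card : ℝ) ^ (k - T.card)) * p ^ T.card else 0)
      = (if 2*j ≤ k then ((n:ℝ) ^ j * (j:ℝ) ^ (k-j)) * p ^ j else 0) := by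
    intro T hT
    rw [(Finset.mem_powersetCard.1 hT).2]
  rw [Finset.sum_congr rfl this, Finset.sum_const, Finset.card_powersetCard,
    Finset.card_univ, Fintype.card_fin, nsmul_eq_mul]

lemma choose_le_two_pow (k j : ℕ) (hj : j ∈ Finset.range (k+1)) : (k.choose j : ℝ) ≤ 2 ^ k := by
  have h : k.choose j ≤ 2 ^ k := by
    calc k.choose j ≤ ∑ i ∈ Finset.range (k+1), k.choose i :=
          Finset.single_le_sum (fun i _ => Nat.zero_le _) hj
      _ = 2 ^ k := Nat.sum_range_choose k
  exact_mod_cast h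

lemma numeric (K : ℕ) (hkK : k = 2*K) (hk4 : 4 ≤ k) (p : ℝ) (hp : 0 ≤ p)
    (hkn : (2*k : ℝ) ≤ Real.sqrt ((n:ℝ)*p)) :
    ∑ j ∈ Finset.range (k+1), (k.choose j : ℝ) *
        (if 2*j ≤ k then ((n:ℝ) ^ j * (j:ℝ) ^ (k-j)) * p ^ j else 0)
      ≤ 2 * (2*(k:ℝ)*((n:ℝ)*p)) ^ K := by
  set m : ℝ := (n:ℝ)*p with hm
  have hm0 : 0 ≤ m := by positivity
  have hsq : Real.sqrt m ^ 2 = m := Real.sq_sqrt hm0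
  have h8 : 8 ≤ Real.sqrt m := by
    have : (8:ℝ) ≤ 2*k := by
      have : (4:ℝ) ≤ k := by exact_mod_cast hk4
      linarith
    linarith
  have hm64 : 64 ≤ m := by nlinarith
  have h2K : (2*(K:ℝ)) ≤ m := by
    have h1 : (2*(K:ℝ)) ≤ 2*k := by
      have : (K:ℝ) ≤ k := by exact_mod_cast (by omega : K ≤ k)
      linarith
    have h2 : Real.sqrt m ≤ m := by nlinarith
    linarith
  -- termwise bound
  have hterm : ∀ j ∈ Finset.range (k+1),
      (k.choose j : ℝ) * (if 2*j ≤ k then ((n:ℝ) ^ j * (j:ℝ) ^ (k-j)) * p ^ j else 0)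
      ≤ (2:ℝ)^k * (m^K * (K:ℝ)^K) * (if j ≤ K then ((1:ℝ)/2) ^ (K-j) else 0) := by
    intro j hj
    by_cases hjK : j ≤ K
    · have h2j : 2*j ≤ k := by omega
      rw [if_pos h2j, if_pos hjK]
      have hchoose := choose_le_two_pow k j hj
      have hnp : (n:ℝ)^j * p^j = m^j := by rw [hm, mul_pow]
      have hjk : (j:ℝ)^(k-j) ≤ (K:ℝ)^(k-j) :=
        pow_le_pow_left₀ (by positivity) (by exact_mod_cast hjK) _
      have hkey : m^j * (K:ℝ)^(k-j) ≤ m^K * (K:ℝ)^K * ((1:ℝ)/2) ^ (K-j) := by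
        have hd : k - j = K + (K - j) := by omega
        have e1 : (K:ℝ)^(k-j) = (K:ℝ)^K * (K:ℝ)^(K-j) := by rw [hd, pow_add]
        have e2 : (K:ℝ)^(K-j) = (2*(K:ℝ))^(K-j) * ((1:ℝ)/2)^(K-j) := by
          rw [← mul_pow]; ring_nf
        have e3 : (2*(K:ℝ))^(K-j) ≤ m^(K-j) := pow_le_pow_left₀ (by positivity) h2K _
        have e4 : m^j * m^(K-j) = m^K := by
          rw [← pow_add]; congr 1; omega
        calc m^j * (K:ℝ)^(k-j)
            = (m^j * (2*(K:ℝ))^(K-j)) * ((K:ℝ)^K * ((1:ℝ)/2)^(K-j)) := by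
              rw [e1, e2]; ring
          _ ≤ (m^j * m^(K-j)) * ((K:ℝ)^K * ((1:ℝ)/2)^(K-j)) := by
              apply mul_le_mul_of_nonneg_right
              · exact mul_le_mul_of_nonneg_left e3 (by positivity)
              · positivity
          _ = m^K * (K:ℝ)^K * ((1:ℝ)/2)^(K-j) := by rw [e4]; ring
      calc (k.choose j : ℝ) * (((n:ℝ) ^ j * (j:ℝ) ^ (k-j)) * p ^ j)
          = (k.choose j : ℝ) * ((m^j * (j:ℝ)^(k-j))) := by rw [← hnp]; ring
        _ ≤ (2:ℝ)^k * (m^j * (K:ℝ)^(k-j)) := by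
            apply mul_le_mul hchoose ?_ (by positivity) (by positivity)
            exact mul_le_mul_of_nonneg_left hjk (by positivity)
        _ ≤ (2:ℝ)^k * (m^K * (K:ℝ)^K * ((1:ℝ)/2) ^ (K-j)) :=
            mul_le_mul_of_nonneg_left hkey (by positivity)
        _ = (2:ℝ)^k * (m^K * (K:ℝ)^K) * ((1:ℝ)/2) ^ (K-j) := by ring
    · have h2j : ¬ (2*j ≤ k) := by omega
      rw [if_neg h2j, if_neg hjK, mul_zero, mul_zero]
  calc ∑ j ∈ Finset.range (k+1), (k.choose j : ℝ) *
        (if 2*j ≤ k then ((n:ℝ) ^ j * (j:ℝ) ^ (k-j)) * p ^ j else 0)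
      ≤ ∑ j ∈ Finset.range (k+1),
          (2:ℝ)^k * (m^K * (K:ℝ)^K) * (if j ≤ K then ((1:ℝ)/2) ^ (K-j) else 0) :=
        Finset.sum_le_sum hterm
    _ = (2:ℝ)^k * (m^K * (K:ℝ)^K) *
          ∑ j ∈ Finset.range (k+1), (if j ≤ K then ((1:ℝ)/2) ^ (K-j) else 0) := by
        rw [Finset.mul_sum]
    _ ≤ (2:ℝ)^k * (m^K * (K:ℝ)^K) * 2 := by
        apply mul_le_mul_of_nonneg_left ?_ (by positivity)
        have hsub : ∑ j ∈ Finset.range (K+1), (if j ≤ K then ((1:ℝ)/2) ^ (K-j) else 0)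
            = ∑ j ∈ Finset.range (k+1), (if j ≤ K then ((1:ℝ)/2) ^ (K-j) else 0) := by
          apply Finset.sum_subset
          · exact Finset.range_subset_range.2 (by omega)
          · intro x _ hx
            rw [if_neg (by simp at hx; omega)]
        rw [← hsub]
        have : ∑ j ∈ Finset.range (K+1), (if j ≤ K then ((1:ℝ)/2) ^ (K-j) else 0)
            = ∑ j ∈ Finset.range (K+1), ((1:ℝ)/2) ^ (K-j) := by
          refine Finset.sum_congr rfl fun j hj => ?_
          rw [if_pos (by simp at hj; omega)]
        rw [this]
        have hrefl : ∑ j ∈ Finset.range (K+1), ((1:ℝ)/2) ^ (K-j)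
            = ∑ j ∈ Finset.range (K+1), ((1:ℝ)/2) ^ j := by
          have := Finset.sum_range_reflect (fun i => ((1:ℝ)/2) ^ i) (K+1)
          simpa using this
        rw [hrefl]
        exact sum_geometric_two_le _
    _ = 2 * (2*(k:ℝ)*m) ^ K := by
        have hk' : (k:ℝ) = 2*(K:ℝ) := by exact_mod_cast hkK
        rw [hk']
        rw [show (2:ℝ)^k = 4^K by rw [hkK, pow_mul]; norm_num]
        rw [show (2*(2*(K:ℝ))*m) ^ K = 4^K * ((K:ℝ)^K * m^K) by rw [← mul_pow, ← mul_pow]; ring_nf]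
        ring

variable {Ω : Type*} [MeasureSpace Ω] [IsProbabilityMeasure (volume : Measure Ω)]
variable {n k : ℕ} {p ε : ℝ} {X : Fin n → Ω → ℝ}

lemma lemA (hp0 : 0 < p) (hp1 : p < 1)
    (hmeas : ∀ i, Measurable (X i)) (h01 : ∀ i ω, X i ω = 0 ∨ X i ω = 1)
    (happrox : ∀ t : ℕ, t ≤ k → ∀ idx : Fin t → Fin n, Function.Injective idx →
      ∀ b : Fin t → Bool,
        |(volume {ω | ∀ j, X (idx j) ω = (if b j then 1 else 0)}).toReal -
          ∏ j, (if b j then p else 1 - p)| ≤ ε)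
    (s : Finset (Fin n)) (hsk : s.card ≤ k) (mult : Fin n → ℕ) (hmult : ∀ i ∈ s, 1 ≤ mult i) :
    ∫ ω, ∏ i ∈ s, (X i ω - p) ^ (mult i)
      ≤ (∏ i ∈ s, ((1-p) ^ (mult i) * p + (-p) ^ (mult i) * (1-p))) + ε := by
  classical
  set u : Fin n → ℝ := fun i => (1-p) ^ (mult i) with hu
  set v : Fin n → ℝ := fun i => (-p) ^ (mult i) with hv
  set E : Finset (Fin n) → Set Ω :=
    fun A => {ω | (∀ i ∈ A, X i ω = 1) ∧ ∀ i ∈ s \ A, X i ω = 0} with hE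
  have hEmeas : ∀ A : Finset (Fin n), MeasurableSet (E A) := by
    intro A
    have e : E A = (⋂ i ∈ (A : Set (Fin n)), X i ⁻¹' {1}) ∩
        (⋂ i ∈ ((s \ A : Finset (Fin n)) : Set (Fin n)), X i ⁻¹' {0}) := by
      ext ω; simp [hE, Set.mem_iInter]
    rw [e]
    exact (MeasurableSet.biInter (Set.to_countable _)
        fun i _ => hmeas i (measurableSet_singleton 1)).inter
      (MeasurableSet.biInter (Set.to_countable _)
        fun i _ => hmeas i (measurableSet_singleton 0))
  have hpt : ∀ ω, ∏ i ∈ s, (X i ω - p) ^ (mult i)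
      = ∑ A ∈ s.powerset, ((∏ i ∈ A, u i) * (∏ i ∈ s \ A, v i)) *
          Set.indicator (E A) (fun _ => (1:ℝ)) ω := by
    intro ω
    have h1 : ∀ i ∈ s, (X i ω - p) ^ (mult i)
        = u i * (if X i ω = 1 then (1:ℝ) else 0) + v i * (if X i ω = 0 then (1:ℝ) else 0) := by
      intro i _
      rcases h01 i ω with h | h <;> simp [h, hu, hv, zero_sub]
    rw [Finset.prod_congr rfl h1, Finset.prod_add]
    refine Finset.sum_congr rfl fun A hA => ?_
    rw [Finset.prod_mul_distrib, Finset.prod_mul_distrib]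
    have hind : (∏ i ∈ A, (if X i ω = 1 then (1:ℝ) else 0)) *
        (∏ i ∈ s \ A, (if X i ω = 0 then (1:ℝ) else 0))
        = Set.indicator (E A) (fun _ => (1:ℝ)) ω := by
      by_cases hω : ω ∈ E A
      · rw [Set.indicator_of_mem hω]
        obtain ⟨hA1, hA0⟩ := hω
        rw [Finset.prod_congr rfl (fun i hi => if_pos (hA1 i hi)),
          Finset.prod_congr rfl (fun i hi => if_pos (hA0 i hi))]
        simp
      · rw [Set.indicator_of_notMem hω]
        simp only [hE, Set.mem_setOf_eq, not_and_or] at hω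
        rcases hω with h | h
        · push_neg at h
          obtain ⟨i, hi, hne⟩ := h
          have hz : (∏ i ∈ A, (if X i ω = 1 then (1:ℝ) else 0)) = 0 :=
            Finset.prod_eq_zero hi (by rw [if_neg hne])
          rw [hz, zero_mul]
        · push_neg at h
          obtain ⟨i, hi, hne⟩ := h
          have hz : (∏ i ∈ s \ A, (if X i ω = 0 then (1:ℝ) else 0)) = 0 :=
            Finset.prod_eq_zero hi (by rw [if_neg hne])
          rw [hz, mul_zero]
    rw [← hind]; ring
  have hint : ∀ A ∈ s.powerset, Integrable (fun ω =>
      ((∏ i ∈ A, u i) * (∏ i ∈ s \ A, v i)) * Set.indicator (E A) (fun _ => (1:ℝ)) ω) volume :=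
    fun A _ => ((integrable_const (1:ℝ)).indicator (hEmeas A)).const_mul _
  have hInt : ∫ ω, ∏ i ∈ s, (X i ω - p) ^ (mult i)
      = ∑ A ∈ s.powerset, ((∏ i ∈ A, u i) * (∏ i ∈ s \ A, v i)) * (volume (E A)).toReal := by
    rw [integral_congr_ae (Filter.Eventually.of_forall hpt),
      integral_finset_sum _ hint]
    refine Finset.sum_congr rfl fun A hA => ?_
    rw [integral_const_mul, integral_indicator_const _ (hEmeas A), smul_eq_mul, mul_one, measureReal_def]
  have hapx : ∀ A ∈ s.powerset,
      |(volume (E A)).toReal - p ^ A.card * (1-p) ^ (s \ A).card| ≤ ε := by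
    intro A hA
    have hAs : A ⊆ s := Finset.mem_powerset.1 hA
    set e := s.orderIsoOfFin rfl with he
    set idx : Fin s.card → Fin n := fun j => (e j : Fin n) with hidx
    have hinj : Function.Injective idx := fun a b h => e.injective (Subtype.ext h)
    set b : Fin s.card → Bool := fun j => decide (idx j ∈ A) with hb
    have hEset : {ω | ∀ j, X (idx j) ω = (if b j then 1 else 0)} = E A := by
      ext ω
      simp only [Set.mem_setOf_eq, hE]
      constructor
      · intro h
        constructor
        · intro i hi
          have his : i ∈ s := hAs hi
          have h2 := h (e.symm ⟨i, his⟩)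
          simp only [hidx, hb, OrderIso.apply_symm_apply] at h2
          rw [h2]
          simp [hi]
        · intro i hi
          obtain ⟨his, hiA⟩ := Finset.mem_sdiff.1 hi
          have h2 := h (e.symm ⟨i, his⟩)
          simp only [hidx, hb, OrderIso.apply_symm_apply] at h2
          rw [h2]
          simp [hiA]
      · rintro ⟨h1, h0⟩ j
        by_cases hj : idx j ∈ A
        · simp only [hb, hj, decide_true, if_true]
          exact h1 _ hj
        · simp only [hb, hj, decide_false, if_false]
          exact h0 _ (Finset.mem_sdiff.2 ⟨(e j).2, hj⟩)
    have hprod : (∏ j, (if b j then p else 1 - p)) = p ^ A.card * (1-p) ^ (s \ A).card := by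
      have h1 : (∏ j, (if b j then p else 1 - p)) = ∏ i ∈ s, (if i ∈ A then p else 1 - p) := by
        rw [← Finset.prod_coe_sort s]
        exact Fintype.prod_equiv e.toEquiv _ _ (fun j => by simp [hb, hidx])
      rw [h1, ← Finset.prod_sdiff hAs,
        Finset.prod_congr rfl (fun i hi => if_neg (Finset.mem_sdiff.1 hi).2),
        Finset.prod_congr rfl (fun i (hi : i ∈ A) => if_pos hi),
        Finset.prod_const, Finset.prod_const]
      ring
    have h := happrox s.card hsk idx hinj b
    rw [hEset, hprod] at h
    exact h
  have hε0 : 0 ≤ ε :=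
    le_trans (abs_nonneg _) (hapx ∅ (Finset.mem_powerset.2 (Finset.empty_subset s)))
  have habsuv : ∀ i ∈ s, |u i| = (1-p) ^ (mult i) ∧ |v i| = p ^ (mult i) := by
    intro i _
    constructor
    · rw [hu, abs_pow, abs_of_nonneg (by linarith : (0:ℝ) ≤ 1 - p)]
    · rw [hv, abs_pow, abs_neg, abs_of_pos hp0]
  have habs : |∑ A ∈ s.powerset, ((∏ i ∈ A, u i) * (∏ i ∈ s \ A, v i)) *
      ((volume (E A)).toReal - p ^ A.card * (1-p) ^ (s \ A).card)| ≤ ε := by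
    calc |∑ A ∈ s.powerset, ((∏ i ∈ A, u i) * (∏ i ∈ s \ A, v i)) *
          ((volume (E A)).toReal - p ^ A.card * (1-p) ^ (s \ A).card)|
        ≤ ∑ A ∈ s.powerset, |((∏ i ∈ A, u i) * (∏ i ∈ s \ A, v i)) *
          ((volume (E A)).toReal - p ^ A.card * (1-p) ^ (s \ A).card)| :=
          Finset.abs_sum_le_sum_abs _ _
      _ ≤ ∑ A ∈ s.powerset, ((∏ i ∈ A, |u i|) * (∏ i ∈ s \ A, |v i|)) * ε := by
          refine Finset.sum_le_sum fun A hA => ?_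
          rw [abs_mul, abs_mul, Finset.abs_prod, Finset.abs_prod]
          exact mul_le_mul_of_nonneg_left (hapx A hA)
            (by positivity)
      _ = (∏ i ∈ s, (|u i| + |v i|)) * ε := by
          rw [Finset.prod_add, Finset.sum_mul]
      _ ≤ 1 * ε := by
          apply mul_le_mul_of_nonneg_right ?_ hε0
          apply Finset.prod_le_one
          · intro i _; positivity
          · intro i hi
            obtain ⟨h1, h2⟩ := habsuv i hi
            rw [h1, h2]
            have hm := hmult i hi
            have e1 : (1-p) ^ (mult i) ≤ 1 - p := by
              calc (1-p) ^ (mult i) ≤ (1-p) ^ 1 :=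
                pow_le_pow_of_le_one (by linarith) (by linarith) hm
              _ = 1 - p := pow_one _
            have e2 : p ^ (mult i) ≤ p := by
              calc p ^ (mult i) ≤ p ^ 1 :=
                pow_le_pow_of_le_one (by linarith) (by linarith) hm
              _ = p := pow_one _
            linarith
      _ = ε := one_mul ε
  have hmu : ∑ A ∈ s.powerset, ((∏ i ∈ A, u i) * (∏ i ∈ s \ A, v i)) *
      (p ^ A.card * (1-p) ^ (s \ A).card)
      = ∏ i ∈ s, (u i * p + v i * (1-p)) := by
    rw [Finset.prod_add]
    refine (Finset.sum_congr rfl fun A hA => ?_).symm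
    rw [Finset.prod_mul_distrib, Finset.prod_mul_distrib, Finset.prod_const, Finset.prod_const]
    ring
  have hsplit : ∑ A ∈ s.powerset, ((∏ i ∈ A, u i) * (∏ i ∈ s \ A, v i)) * (volume (E A)).toReal
      = (∑ A ∈ s.powerset, ((∏ i ∈ A, u i) * (∏ i ∈ s \ A, v i)) *
          (p ^ A.card * (1-p) ^ (s \ A).card))
        + ∑ A ∈ s.powerset, ((∏ i ∈ A, u i) * (∏ i ∈ s \ A, v i)) *
          ((volume (E A)).toReal - p ^ A.card * (1-p) ^ (s \ A).card) := by
    rw [← Finset.sum_add_distrib]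
    exact Finset.sum_congr rfl fun A _ => by ring
  rw [hInt, hsplit, hmu]
  have := (abs_le.1 habs).2
  have hfinal : ∏ i ∈ s, (u i * p + v i * (1-p))
      = ∏ i ∈ s, ((1-p) ^ (mult i) * p + (-p) ^ (mult i) * (1-p)) := rfl
  linarith [hfinal]

lemma lemB (hp0 : 0 < p) (hp1 : p < 1)
    (hmeas : ∀ i, Measurable (X i)) (h01 : ∀ i ω, X i ω = 0 ∨ X i ω = 1)
    (happrox : ∀ t : ℕ, t ≤ k → ∀ idx : Fin t → Fin n, Function.Injective idx →
      ∀ b : Fin t → Bool,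
        |(volume {ω | ∀ j, X (idx j) ω = (if b j then 1 else 0)}).toReal -
          ∏ j, (if b j then p else 1 - p)| ≤ ε)
    (f : Fin k → Fin n) :
    ∫ ω, ∏ j, (X (f j) ω - p)
      ≤ (if Good f then p ^ (Finset.univ.image f).card else 0) + ε := by
  classical
  set s := Finset.univ.image f with hs
  set mult : Fin n → ℕ := fun i => (Finset.univ.filter fun j => f j = i).card with hmultdef
  have hsk : s.card ≤ k := le_trans Finset.card_image_le (by simp)
  have hm1 : ∀ i ∈ s, 1 ≤ mult i := by
    intro i hi
    obtain ⟨j, _, rfl⟩ := Finset.mem_image.1 hi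
    exact Finset.card_pos.2 ⟨j, by simp⟩
  have hcomp : ∀ ω, ∏ j, (X (f j) ω - p) = ∏ i ∈ s, (X i ω - p) ^ (mult i) := by
    intro ω
    exact Finset.prod_comp (fun i => X i ω - p) f
  rw [integral_congr_ae (Filter.Eventually.of_forall hcomp)]
  refine (lemA hp0 hp1 hmeas h01 happrox s hsk mult hm1).trans ?_
  apply add_le_add_left
  by_cases hg : Good f
  · rw [if_pos hg]
    have hb : ∀ i ∈ s, |(1-p) ^ (mult i) * p + (-p) ^ (mult i) * (1-p)| ≤ p := by
      intro i hi
      have h2 : 2 ≤ mult i := hg i hi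
      have e1 : (1-p) ^ (mult i) ≤ 1-p := by
        calc (1-p) ^ (mult i) ≤ (1-p) ^ 1 :=
              pow_le_pow_of_le_one (by linarith) (by linarith) (by omega)
          _ = 1 - p := pow_one _
      have e2 : p ^ (mult i) ≤ p^2 :=
        pow_le_pow_of_le_one (by linarith) (by linarith) h2
      have h1p : (0:ℝ) ≤ 1 - p := by linarith
      calc |(1-p) ^ (mult i) * p + (-p) ^ (mult i) * (1-p)|
          ≤ |(1-p) ^ (mult i) * p| + |(-p) ^ (mult i) * (1-p)| := abs_add_le _ _
        _ = (1-p) ^ (mult i) * p + p ^ (mult i) * (1-p) := by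
            rw [abs_mul, abs_mul, abs_pow, abs_pow, abs_neg,
              abs_of_pos hp0, abs_of_nonneg h1p]
        _ ≤ (1-p) * p + p^2 * 1 := by
            have t1 : (1-p) ^ (mult i) * p ≤ (1-p) * p :=
              mul_le_mul_of_nonneg_right e1 hp0.le
            have t2 : p ^ (mult i) * (1-p) ≤ p^2 * 1 :=
              mul_le_mul e2 (by linarith) h1p (by positivity)
            linarith
        _ = p := by ring
    calc ∏ i ∈ s, ((1-p) ^ (mult i) * p + (-p) ^ (mult i) * (1-p))
        ≤ |∏ i ∈ s, ((1-p) ^ (mult i) * p + (-p) ^ (mult i) * (1-p))| := le_abs_self _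
      _ = ∏ i ∈ s, |(1-p) ^ (mult i) * p + (-p) ^ (mult i) * (1-p)| :=
          Finset.abs_prod _ _
      _ ≤ ∏ i ∈ s, p := Finset.prod_le_prod (fun i _ => abs_nonneg _) hb
      _ = p ^ s.card := Finset.prod_const p
  · rw [if_neg hg]
    apply le_of_eq
    unfold Good at hg
    push_neg at hg
    obtain ⟨i, hi, hlt⟩ := hg
    have hlt2 : mult i < 2 := hlt
    have hone : mult i = 1 := by
      have := hm1 i hi
      omega
    apply Finset.prod_eq_zero hi
    rw [hone]
    ring

lemma momentBound (hp0 : 0 < p) (hp1 : p < 1)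
    (hmeas : ∀ i, Measurable (X i)) (h01 : ∀ i ω, X i ω = 0 ∨ X i ω = 1)
    (happrox : ∀ t : ℕ, t ≤ k → ∀ idx : Fin t → Fin n, Function.Injective idx →
      ∀ b : Fin t → Bool,
        |(volume {ω | ∀ j, X (idx j) ω = (if b j then 1 else 0)}).toReal -
          ∏ j, (if b j then p else 1 - p)| ≤ ε) :
    ∫ ω, (∑ i, (X i ω - p)) ^ k
      ≤ (∑ f ∈ Finset.univ.filter (Good (k := k) (n := n)), p ^ (Finset.univ.image f).card)
        + ((n:ℝ)^k) * ε := by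
  have hYbd : ∀ i ω, |X i ω - p| ≤ 1 := by
    intro i ω
    rcases h01 i ω with h | h <;> rw [h] <;>
      exact abs_le.2 ⟨by linarith, by linarith⟩
  have hpow : ∀ ω, (∑ i, (X i ω - p)) ^ k = ∑ f : Fin k → Fin n, ∏ j, (X (f j) ω - p) := by
    intro ω
    have h0 : (∑ i, (X i ω - p)) ^ k = ∏ _j : Fin k, (∑ i, (X i ω - p)) := by
      simp [Finset.prod_const]
    rw [h0, Finset.prod_univ_sum, Fintype.piFinset_univ]
  have hIf : ∀ f : Fin k → Fin n, Integrable (fun ω => ∏ j, (X (f j) ω - p)) volume := by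
    intro f
    have hmble : Measurable (fun ω => ∏ j, (X (f j) ω - p)) :=
      Finset.measurable_prod _ (fun j _ => (hmeas (f j)).sub measurable_const)
    refine Integrable.mono' (integrable_const 1) hmble.aestronglyMeasurable
      (Filter.Eventually.of_forall fun ω => ?_)
    rw [Real.norm_eq_abs, Finset.abs_prod]
    exact Finset.prod_le_one (fun j _ => abs_nonneg _) (fun j _ => hYbd (f j) ω)
  rw [integral_congr_ae (Filter.Eventually.of_forall hpow),
    integral_finset_sum _ (fun f _ => hIf f)]
  have hε0 : 0 ≤ ε := by
    have h := happrox 0 (Nat.zero_le k) (fun j => j.elim0) (fun a => a.elim0) (fun j => true)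
    refine le_trans (abs_nonneg _) h
  calc ∑ f : Fin k → Fin n, ∫ ω, ∏ j, (X (f j) ω - p)
      ≤ ∑ f : Fin k → Fin n,
          ((if Good f then p ^ (Finset.univ.image f).card else 0) + ε) :=
        Finset.sum_le_sum (fun f _ => lemB hp0 hp1 hmeas h01 happrox f)
    _ = (∑ f : Fin k → Fin n, (if Good f then p ^ (Finset.univ.image f).card else 0))
        + (Finset.univ : Finset (Fin k → Fin n)).card • ε := by
        rw [Finset.sum_add_distrib, Finset.sum_const]
    _ = (∑ f ∈ Finset.univ.filter (Good (k := k) (n := n)), p ^ (Finset.univ.image f).card)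
        + ((n:ℝ)^k) * ε := by
        rw [← Finset.sum_filter]
        congr 1
        rw [Finset.card_univ, nsmul_eq_mul]
        congr 1
        rw [Fintype.card_fun]
        push_cast
        simp

lemma markov (hkeven : Even k)
    (hmeas : ∀ i, Measurable (X i)) (h01 : ∀ i ω, X i ω = 0 ∨ X i ω = 1)
    (hp0 : 0 < p) (hp1 : p < 1) :
    (volume {ω | 2*(n:ℝ)*p ≤ ∑ i, X i ω}).toReal * ((n:ℝ)*p)^k
      ≤ ∫ ω, (∑ i, (X i ω - p)) ^ k := by
  classical
  set A := {ω | 2*(n:ℝ)*p ≤ ∑ i, X i ω} with hA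
  have hS : Measurable (fun ω => ∑ i, X i ω) :=
    Finset.measurable_sum _ (fun i _ => hmeas i)
  have hAm : MeasurableSet A := measurableSet_le measurable_const hS
  have hT : ∀ ω, ∑ i, (X i ω - p) = (∑ i, X i ω) - (n:ℝ)*p := by
    intro ω
    rw [Finset.sum_sub_distrib, Finset.sum_const, Finset.card_univ, Fintype.card_fin,
      nsmul_eq_mul]
  have hm0 : (0:ℝ) ≤ (n:ℝ)*p := by positivity
  have hpt : ∀ ω, Set.indicator A (fun _ => ((n:ℝ)*p)^k) ω ≤ (∑ i, (X i ω - p)) ^ k := by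
    intro ω
    by_cases hω : ω ∈ A
    · rw [Set.indicator_of_mem hω]
      have hωA : 2*(n:ℝ)*p ≤ ∑ i, X i ω := hω
      have h1 : (n:ℝ)*p ≤ ∑ i, (X i ω - p) := by
        rw [hT ω]; linarith
      exact pow_le_pow_left₀ hm0 h1 k
    · rw [Set.indicator_of_notMem hω]
      exact hkeven.pow_nonneg _
  have hTm : Measurable fun ω => (∑ i, (X i ω - p)) ^ k :=
    (Finset.measurable_sum _ (fun i _ => (hmeas i).sub measurable_const)).pow_const k
  have hYbd : ∀ i ω, |X i ω - p| ≤ 1 := by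
    intro i ω
    rcases h01 i ω with h | h <;> rw [h] <;>
      exact abs_le.2 ⟨by linarith, by linarith⟩
  have hIntT : Integrable (fun ω => (∑ i, (X i ω - p)) ^ k) volume := by
    refine Integrable.mono' (integrable_const ((n:ℝ)^k)) hTm.aestronglyMeasurable
      (Filter.Eventually.of_forall fun ω => ?_)
    rw [Real.norm_eq_abs, abs_pow]
    apply pow_le_pow_left₀ (abs_nonneg _)
    calc |∑ i, (X i ω - p)| ≤ ∑ i, |X i ω - p| := Finset.abs_sum_le_sum_abs _ _
      _ ≤ ∑ _i : Fin n, (1:ℝ) := Finset.sum_le_sum (fun i _ => hYbd i ω)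
      _ = n := by simp
  have hle := integral_mono ((integrable_const (((n:ℝ)*p)^k)).indicator hAm) hIntT hpt
  rw [integral_indicator_const _ hAm, smul_eq_mul, measureReal_def] at hle
  linarith

end KWTail

set_option maxHeartbeats 1000000 in
/-- For suitable parameters, the total number of selected indices exceeds `2·n·p` with
probability at most `9·n^{−c}`. -/
theorem sum_upper_tail_bound
    {Ω : Type*} [MeasureSpace Ω] [IsProbabilityMeasure (volume : Measure Ω)]
    (c lam : ℝ) (hc : 0 < c) (hlam : c < lam)
    (n k : ℕ) (hn : 1 ≤ n) (hk4 : 4 ≤ k) (hkeven : Even k)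
    (p ε : ℝ) (hp0 : 0 < p) (hp1 : p < 1) (hε : ε = (n : ℝ) ^ (-lam))
    (hkn : (2 * k : ℝ) ≤ Real.sqrt ((n : ℝ) * p))
    (hklow : 4 * c * Real.log n / Real.log ((n : ℝ) * p) ≤ (k : ℝ))
    (hkhigh : (k : ℝ) ≤ (lam - c) * Real.log n / Real.log (1 / p))
    (X : Fin n → Ω → ℝ) (hmeas : ∀ i, Measurable (X i))
    (h01 : ∀ i ω, X i ω = 0 ∨ X i ω = 1)
    (hident : ∀ i j : Fin n, volume {ω | X i ω = 1} = volume {ω | X j ω = 1})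
    (happrox : KWiseApproxIndep n X k ε p) :
    (volume {ω | 2 * (n : ℝ) * p ≤ ∑ i, X i ω}).toReal ≤ 9 * (n : ℝ) ^ (-c) := by
  classical
  obtain ⟨K, hK⟩ := hkeven
  have hkK : k = 2*K := by omega
  have hn0 : (0:ℝ) < n := by exact_mod_cast hn
  have hm0 : (0:ℝ) < (n:ℝ)*p := by positivity
  have hsq : Real.sqrt ((n:ℝ)*p) ^ 2 = (n:ℝ)*p := Real.sq_sqrt hm0.le
  have h4c : (4:ℝ) ≤ k := by exact_mod_cast hk4
  have h8 : 8 ≤ Real.sqrt ((n:ℝ)*p) := by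
    calc (8:ℝ) ≤ 2*k := by linarith
      _ ≤ Real.sqrt ((n:ℝ)*p) := hkn
  have hm64 : (64:ℝ) ≤ (n:ℝ)*p := by nlinarith
  have hmlt : (n:ℝ)*p < n := by nlinarith
  have hn64 : (64:ℝ) < n := lt_of_le_of_lt hm64 hmlt
  have hlogm : 0 < Real.log ((n:ℝ)*p) := Real.log_pos (by linarith)
  have hlogn : 0 < Real.log n := Real.log_pos (by linarith)
  have hlogp : 0 < Real.log (1/p) := Real.log_pos (by rw [lt_div_iff₀ hp0]; linarith)
  have hklow' : 4*c*Real.log n ≤ (k:ℝ) * Real.log ((n:ℝ)*p) := by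
    have := (div_le_iff₀ hlogm).1 hklow
    linarith
  have hkhigh' : (k:ℝ) * Real.log (1/p) ≤ (lam - c) * Real.log n :=
    (le_div_iff₀ hlogp).1 hkhigh
  have h1 := KWTail.markov (X := X) (p := p) (k := k) ⟨K, hK⟩ hmeas h01 hp0 hp1
  have h2 := KWTail.momentBound (k := k) (ε := ε) hp0 hp1 hmeas h01 happrox
  have h3 := KWTail.sum_good_le (k := k) (n := n) p hp0.le
  have h4' := KWTail.numeric (k := k) (n := n) K hkK hk4 p hp0.le hkn
  have hε0 : 0 ≤ ε := by rw [hε]; positivity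
  have hchain : (volume {ω | 2 * (n:ℝ) * p ≤ ∑ i, X i ω}).toReal * ((n:ℝ)*p)^k
      ≤ 2*(2*(k:ℝ)*((n:ℝ)*p))^K + (n:ℝ)^k * ε := by
    calc (volume {ω | 2 * (n:ℝ) * p ≤ ∑ i, X i ω}).toReal * ((n:ℝ)*p)^k
        ≤ ∫ ω, (∑ i, (X i ω - p)) ^ k := h1
      _ ≤ (∑ f ∈ Finset.univ.filter (KWTail.Good (k := k) (n := n)),
            p ^ (Finset.univ.image f).card) + ((n:ℝ)^k) * ε := h2
      _ ≤ 2*(2*(k:ℝ)*((n:ℝ)*p))^K + (n:ℝ)^k * ε := by linarith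
  have hkr : (k:ℝ) = 2*(K:ℝ) := by exact_mod_cast hkK
  have hA : 2*(2*(k:ℝ)*((n:ℝ)*p))^K ≤ 2 * ((n:ℝ)^(-c) * ((n:ℝ)*p)^k) := by
    have hsqrt0 : 0 < Real.sqrt ((n:ℝ)*p) := by linarith
    have hstep1 : (2*(k:ℝ)*((n:ℝ)*p))^K ≤ (Real.sqrt ((n:ℝ)*p) * ((n:ℝ)*p))^K := by
      apply pow_le_pow_left₀ (by positivity)
      nlinarith [hkn]
    have hstep2 : (Real.sqrt ((n:ℝ)*p) * ((n:ℝ)*p))^K ≤ (n:ℝ)^(-c) * ((n:ℝ)*p)^k := by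
      have hl : 0 < (Real.sqrt ((n:ℝ)*p) * ((n:ℝ)*p))^K := by positivity
      have hr : 0 < (n:ℝ)^(-c) * ((n:ℝ)*p)^k := by positivity
      rw [← Real.log_le_log_iff hl hr, Real.log_pow,
        Real.log_mul (ne_of_gt hsqrt0) (ne_of_gt hm0),
        Real.log_sqrt hm0.le,
        Real.log_mul (ne_of_gt (Real.rpow_pos_of_pos hn0 _)) (ne_of_gt (pow_pos hm0 k)),
        Real.log_pow, Real.log_rpow hn0]
      have hKr : (K:ℝ) ≥ 0 := by positivity
      rw [hkr] at hklow' ⊢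
      linarith [hklow', hlogm, mul_pos hc hlogn]
    linarith
  have hB : (n:ℝ)^k * ε ≤ (n:ℝ)^(-c) * ((n:ℝ)*p)^k := by
    rw [hε, mul_pow]
    have key : (n:ℝ)^(-lam) ≤ (n:ℝ)^(-c) * p^k := by
      have hl : (0:ℝ) < (n:ℝ)^(-lam) := Real.rpow_pos_of_pos hn0 _
      have hr : (0:ℝ) < (n:ℝ)^(-c) * p^k := by positivity
      rw [← Real.log_le_log_iff hl hr, Real.log_rpow hn0,
        Real.log_mul (ne_of_gt (Real.rpow_pos_of_pos hn0 _)) (ne_of_gt (pow_pos hp0 k)),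
        Real.log_rpow hn0, Real.log_pow]
      have hlogp' : Real.log (1/p) = - Real.log p := by rw [one_div, Real.log_inv]
      rw [hlogp'] at hkhigh'
      linarith
    calc (n:ℝ)^k * (n:ℝ)^(-lam) ≤ (n:ℝ)^k * ((n:ℝ)^(-c) * p^k) :=
          mul_le_mul_of_nonneg_left key (by positivity)
      _ = (n:ℝ)^(-c) * ((n:ℝ)^k * p^k) := by ring
  have hfin : (volume {ω | 2 * (n:ℝ) * p ≤ ∑ i, X i ω}).toReal * ((n:ℝ)*p)^k
      ≤ (3 * (n:ℝ)^(-c)) * ((n:ℝ)*p)^k := by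
    calc (volume {ω | 2 * (n:ℝ) * p ≤ ∑ i, X i ω}).toReal * ((n:ℝ)*p)^k
        ≤ 2*(2*(k:ℝ)*((n:ℝ)*p))^K + (n:ℝ)^k * ε := hchain
      _ ≤ 2 * ((n:ℝ)^(-c) * ((n:ℝ)*p)^k) + (n:ℝ)^(-c) * ((n:ℝ)*p)^k := by linarith
      _ = (3 * (n:ℝ)^(-c)) * ((n:ℝ)*p)^k := by ring
  have hmk0 : (0:ℝ) < ((n:ℝ)*p)^k := pow_pos hm0 k
  have hres : (volume {ω | 2 * (n:ℝ) * p ≤ ∑ i, X i ω}).toReal ≤ 3 * (n:ℝ)^(-c) :=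
    le_of_mul_le_mul_right hfin hmk0
  have hnc0 : (0:ℝ) ≤ (n:ℝ)^(-c) := (Real.rpow_pos_of_pos hn0 (-c)).le
  linarith
end

section
/- Let c > 0 and λ > c be reals. Let n and b be integers with 1 ≤ b ≤ n, let k ≥ 4 be an even integer, let 0 < p < 1, and set ε = n^{−λ}. Assume 2k ≤ √(b·p) (hence also 2k ≤ √(n·p)) and (4c·ln n)/ln(b·p) ≤ k ≤ ((λ − c)·ln n)/ln(1/p). Let S_1,…,S_n be subsets of {1,…,n} with |S_i| = b for every i, and let X_1,…,X_n be {0,1}-valued random variables with identical marginal distributions that are k-wise ε-approximately independent for the product distribution D(n,p). Then each of the following n+1 events holds with probability at least 1 − 9·n^{−c}: for each i ∈ {1,…,n}, the event Σ_{j∈S_i} X_j > 0; and the event Σ_{i=1}^n X_i ≤ 2·n·p. -/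
open MeasureTheory

open Finset

private lemma nat_q3 (q : ℕ) : q * 3 ^ q ≤ 2 * 4 ^ q := by
  induction q with
  | zero => simp
  | succ q ih =>
    rcases Nat.lt_or_ge q 3 with h | h
    · interval_cases q <;> decide
    · calc (q + 1) * 3 ^ (q + 1) = 3 * (q + 1) * 3 ^ q := by ring
        _ ≤ 4 * q * 3 ^ q := Nat.mul_le_mul_right _ (by omega)
        _ = 4 * (q * 3 ^ q) := by ring
        _ ≤ 4 * (2 * 4 ^ q) := Nat.mul_le_mul_left _ ih
        _ = 2 * 4 ^ (q + 1) := by ring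

private lemma pow_self_le_three (m : ℕ) : (m : ℝ) ^ m ≤ 3 ^ m * (Nat.factorial m) := by
  induction m with
  | zero => simp
  | succ m ih =>
    rcases Nat.eq_zero_or_pos m with rfl | hm
    · norm_num
    have hm' : (0:ℝ) < m := by exact_mod_cast hm
    have h2 : (1 + 1 / (m:ℝ)) ^ m ≤ 3 := by
      calc (1 + 1 / (m:ℝ)) ^ m ≤ (Real.exp (1 / m)) ^ m := by
            apply pow_le_pow_left₀ (by positivity)
            linarith [Real.add_one_le_exp (1 / (m:ℝ))]
        _ = Real.exp (m * (1 / m)) := by rw [Real.exp_nat_mul]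
        _ = Real.exp 1 := by rw [mul_one_div, div_self (ne_of_gt hm')]
        _ ≤ 3 := by linarith [Real.exp_one_lt_d9.le]
    have h1 : ((m:ℝ) + 1) ^ m ≤ 3 * (m:ℝ) ^ m := by
      have hme : ((m:ℝ) + 1) = m * (1 + 1 / m) := by field_simp
      rw [hme, mul_pow]
      calc (m:ℝ) ^ m * (1 + 1/(m:ℝ)) ^ m ≤ (m:ℝ) ^ m * 3 :=
            mul_le_mul_of_nonneg_left h2 (by positivity)
        _ = 3 * (m:ℝ) ^ m := by ring
    have hfac : (Nat.factorial (m+1) : ℝ) = (m + 1 : ℝ) * (Nat.factorial m : ℝ) := by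
      rw [Nat.factorial_succ]; push_cast; ring
    push_cast
    calc ((m:ℝ) + 1) ^ (m + 1) = ((m:ℝ) + 1) * ((m:ℝ) + 1) ^ m := by ring
      _ ≤ ((m:ℝ) + 1) * (3 * (m:ℝ) ^ m) := by
          apply mul_le_mul_of_nonneg_left h1 (by positivity)
      _ ≤ ((m:ℝ) + 1) * (3 * (3 ^ m * (Nat.factorial m))) := by
          apply mul_le_mul_of_nonneg_left (by linarith) (by positivity)
      _ = 3 ^ (m + 1) * ((m + 1 : ℝ) * (Nat.factorial m : ℝ)) := by ring
      _ = 3 ^ (m + 1) * (Nat.factorial (m+1) : ℝ) := by rw [hfac]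

private lemma eA_one (p : ℝ) : p * (1 - p) ^ 1 + (1 - p) * (-p) ^ 1 = 0 := by ring

private lemma eA_le {p : ℝ} (hp0 : 0 < p) (hp1 : p < 1) {a : ℕ} (ha : 2 ≤ a) :
    |p * (1 - p) ^ a + (1 - p) * (-p) ^ a| ≤ p := by
  have h1 : |p * (1 - p) ^ a + (1 - p) * (-p) ^ a| ≤ p * (1 - p) ^ a + (1 - p) * p ^ a := by
    calc |p * (1 - p) ^ a + (1 - p) * (-p) ^ a|
        ≤ |p * (1 - p) ^ a| + |(1 - p) * (-p) ^ a| := abs_add_le _ _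
      _ = p * (1 - p) ^ a + (1 - p) * p ^ a := by
          rw [abs_mul, abs_mul, abs_pow, abs_pow, abs_neg,
            abs_of_pos hp0, abs_of_pos (by linarith : (0:ℝ) < 1 - p)]
  have h2 : (1 - p) ^ a ≤ (1 - p) ^ 2 := pow_le_pow_of_le_one (by linarith) (by linarith) ha
  have h3 : p ^ a ≤ p ^ 2 := pow_le_pow_of_le_one (by linarith) (by linarith) ha
  nlinarith [pow_nonneg (le_of_lt hp0) a, pow_nonneg (by linarith : (0:ℝ) ≤ 1 - p) a]

private lemma tuple_bound {Ω : Type*} [MeasureSpace Ω] [IsProbabilityMeasure (volume : Measure Ω)]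
    {n : ℕ} (k : ℕ) {p ε : ℝ} (hp0 : 0 < p) (hp1 : p < 1)
    (X : Fin n → Ω → ℝ) (hmeas : ∀ i, Measurable (X i))
    (h01 : ∀ i ω, X i ω = 0 ∨ X i ω = 1)
    (happrox : KWiseApproxIndep n X k ε p)
    (f : Fin k → Fin n) :
    |∫ ω, ∏ l, (X (f l) ω - p)| ≤
      (∏ j ∈ Finset.univ.image f,
        |p * (1 - p) ^ ((Finset.univ.filter (fun l => f l = j)).card)
          + (1 - p) * (-p) ^ ((Finset.univ.filter (fun l => f l = j)).card)|) + ε := by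
  classical
  set R := Finset.univ.image f with hR
  set m := R.card with hm
  have hmk : m ≤ k := le_trans Finset.card_image_le (by simp)
  set a : Fin n → ℕ := fun j => (Finset.univ.filter (fun l => f l = j)).card with ha
  set idx : Fin m → Fin n := fun i => ((R.equivFin.symm i : R) : Fin n) with hidx
  have hidx_inj : Function.Injective idx := fun i j h =>
    R.equivFin.symm.injective (Subtype.ext h)
  have hidx_mem : ∀ i, idx i ∈ R := fun i => (R.equivFin.symm i).2
  have ha_pos : ∀ i : Fin m, 1 ≤ a (idx i) := by
    intro i
    obtain ⟨l, -, hl⟩ := Finset.mem_image.1 (hidx_mem i)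
    exact Finset.card_pos.2 ⟨l, Finset.mem_filter.2 ⟨Finset.mem_univ _, hl⟩⟩
  -- coefficients
  set C : Bool → ℕ → ℝ := fun v t => if v then (1 - p) ^ t else (-p) ^ t with hC
  set Cb : (Fin m → Bool) → ℝ := fun β => ∏ i, C (β i) (a (idx i)) with hCb
  set Q : (Fin m → Bool) → ℝ := fun β => ∏ i, (if β i then p else 1 - p) with hQ
  set E : (Fin m → Bool) → Set Ω :=
    fun β => {ω | ∀ i, X (idx i) ω = (if β i then 1 else 0)} with hE
  have hEmeas : ∀ β, MeasurableSet (E β) := by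
    intro β
    have : E β = ⋂ i, (X (idx i)) ⁻¹' {(if β i then (1:ℝ) else 0)} := by
      ext ω; simp [hE, Set.mem_iInter, Set.mem_preimage]
    rw [this]
    exact MeasurableSet.iInter fun i => hmeas _ (measurableSet_singleton _)
  -- pointwise expansion
  have hreindex : ∀ g : Fin n → ℝ, ∏ j ∈ R, g j = ∏ i : Fin m, g (idx i) := by
    intro g
    rw [← Finset.prod_coe_sort R g, ← Equiv.prod_comp R.equivFin.symm (fun j : R => g ↑j)]
  have hpt : ∀ ω, ∏ l, (X (f l) ω - p)
      = ∑ β : Fin m → Bool, Set.indicator (E β) (fun _ => Cb β) ω := by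
    intro ω
    rw [Finset.prod_comp (fun j => X j ω - p) f, hreindex]
    have hfac : ∀ i : Fin m, (X (idx i) ω - p) ^ (a (idx i))
        = ∑ v : Bool, (if X (idx i) ω = (if v then 1 else 0) then C (v) (a (idx i)) else 0) := by
      intro i
      rcases h01 (idx i) ω with h | h <;> simp [h, hC]
    rw [Finset.prod_congr rfl (fun i _ => hfac i)]
    rw [Finset.prod_univ_sum]
    rw [Fintype.piFinset_univ]
    apply Finset.sum_congr rfl
    intro β _
    by_cases hωβ : ω ∈ E β
    · rw [Set.indicator_of_mem hωβ]
      exact Finset.prod_congr rfl fun i _ => if_pos (hωβ i)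
    · rw [Set.indicator_of_notMem hωβ]
      simp only [hE, Set.mem_setOf_eq, not_forall] at hωβ
      obtain ⟨i, hi⟩ := hωβ
      exact Finset.prod_eq_zero (Finset.mem_univ i) (if_neg hi)
  -- integrate
  have hint : ∫ ω, ∏ l, (X (f l) ω - p)
      = ∑ β : Fin m → Bool, (volume (E β)).toReal * Cb β := by
    have h1 : (fun ω => ∏ l, (X (f l) ω - p))
        = fun ω => ∑ β : Fin m → Bool, Set.indicator (E β) (fun _ => Cb β) ω := funext hpt
    rw [h1, integral_finset_sum _ (fun β _ => (integrable_const (Cb β)).indicator (hEmeas β))]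
    apply Finset.sum_congr rfl
    intro β _
    rw [integral_indicator_const _ (hEmeas β), smul_eq_mul]; rfl
  -- approximation
  have happ : ∀ β : Fin m → Bool, |(volume (E β)).toReal - Q β| ≤ ε := by
    intro β
    exact happrox m hmk idx hidx_inj β
  -- |Cb| facts
  have hCb_abs : ∀ β, |Cb β| = ∏ i, (if β i then (1-p)^(a (idx i)) else p^(a (idx i))) := by
    intro β
    rw [hCb, Finset.abs_prod]
    apply Finset.prod_congr rfl
    intro i _
    rcases Bool.dichotomy (β i) with h | h <;>
      simp [hC, h, abs_pow, abs_of_pos hp0, abs_of_pos (by linarith : (0:ℝ) < 1 - p)]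
  have hsumCb : ∑ β : Fin m → Bool, |Cb β| ≤ 1 := by
    have hps := Finset.prod_univ_sum (fun _ : Fin m => (Finset.univ : Finset Bool))
      (fun i v => if v = true then (1-p)^(a (idx i)) else p^(a (idx i)))
    rw [Fintype.piFinset_univ] at hps
    have heq : ∑ β : Fin m → Bool, |Cb β|
        = ∏ i : Fin m, ((1-p)^(a (idx i)) + p^(a (idx i))) := by
      rw [Finset.sum_congr rfl (fun β _ => hCb_abs β), ← hps]
      exact Finset.prod_congr rfl fun i _ => by simp
    rw [heq]
    apply Finset.prod_le_one
    · intro i _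
      apply add_nonneg <;> apply pow_nonneg <;> linarith
    · intro i _
      have h1 : (1-p)^(a (idx i)) ≤ 1 - p :=
        pow_le_of_le_one (by linarith) (by linarith) (Nat.one_le_iff_ne_zero.mp (ha_pos i))
      have h2 : p^(a (idx i)) ≤ p :=
        pow_le_of_le_one (by linarith) (by linarith) (Nat.one_le_iff_ne_zero.mp (ha_pos i))
      linarith
  -- exact value
  have hexact : ∑ β : Fin m → Bool, Q β * Cb β
      = ∏ i : Fin m, (p * (1-p)^(a (idx i)) + (1-p) * (-p)^(a (idx i))) := by
    have h1 : ∀ β : Fin m → Bool, Q β * Cb β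
        = ∏ i, ((if β i then p else 1 - p) * C (β i) (a (idx i))) := by
      intro β
      rw [hQ, hCb, ← Finset.prod_mul_distrib]
    have hps := Finset.prod_univ_sum (fun _ : Fin m => (Finset.univ : Finset Bool))
      (fun i v => (if v = true then p else 1 - p) * C v (a (idx i)))
    rw [Fintype.piFinset_univ] at hps
    rw [Finset.sum_congr rfl (fun β _ => h1 β), ← hps]
    apply Finset.prod_congr rfl
    intro i _
    simp [hC]
  have hexact_bound : |∑ β : Fin m → Bool, Q β * Cb β|
      ≤ ∏ j ∈ R, |p * (1 - p) ^ (a j) + (1 - p) * (-p) ^ (a j)| := by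
    rw [hexact, hreindex (fun j => |p * (1 - p) ^ (a j) + (1 - p) * (-p) ^ (a j)|)]
    rw [Finset.abs_prod]
  -- final estimate
  rw [hint]
  have hdiff : |∑ β : Fin m → Bool, (volume (E β)).toReal * Cb β
      - ∑ β : Fin m → Bool, Q β * Cb β| ≤ ε := by
    rw [← Finset.sum_sub_distrib]
    calc |∑ β : Fin m → Bool, ((volume (E β)).toReal * Cb β - Q β * Cb β)|
        ≤ ∑ β : Fin m → Bool, |((volume (E β)).toReal - Q β) * Cb β| := by
          apply (Finset.abs_sum_le_sum_abs _ _).trans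
          apply le_of_eq
          apply Finset.sum_congr rfl
          intro β _
          ring_nf
      _ ≤ ∑ β : Fin m → Bool, ε * |Cb β| := by
          apply Finset.sum_le_sum
          intro β _
          rw [abs_mul]
          exact mul_le_mul_of_nonneg_right (happ β) (abs_nonneg _)
      _ = ε * ∑ β : Fin m → Bool, |Cb β| := by rw [Finset.mul_sum]
      _ ≤ ε * 1 := by
          apply mul_le_mul_of_nonneg_left hsumCb
          have := abs_nonneg ((volume (E (fun _ => true))).toReal - Q (fun _ => true))
          linarith [happ (fun _ => true)]
      _ = ε := mul_one ε
  calc |∑ β : Fin m → Bool, (volume (E β)).toReal * Cb β|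
      ≤ |∑ β : Fin m → Bool, (volume (E β)).toReal * Cb β
          - ∑ β : Fin m → Bool, Q β * Cb β| + |∑ β : Fin m → Bool, Q β * Cb β| := by
        have h := abs_add_le (∑ β : Fin m → Bool, (volume (E β)).toReal * Cb β
          - ∑ β : Fin m → Bool, Q β * Cb β) (∑ β : Fin m → Bool, Q β * Cb β)
        simpa using h
    _ ≤ ε + ∏ j ∈ R, |p * (1 - p) ^ (a j) + (1 - p) * (-p) ^ (a j)| :=
        add_le_add hdiff hexact_bound
    _ = (∏ j ∈ R, |p * (1 - p) ^ (a j) + (1 - p) * (-p) ^ (a j)|) + ε := by ring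

private lemma moment_bound {Ω : Type*} [MeasureSpace Ω] [IsProbabilityMeasure (volume : Measure Ω)]
    {n : ℕ} {k q : ℕ} (hk : k = 2 * q) (hq : 1 ≤ q) {p ε : ℝ} (hp0 : 0 < p) (hp1 : p < 1)
    (hε : 0 ≤ ε)
    (X : Fin n → Ω → ℝ) (hmeas : ∀ i, Measurable (X i))
    (h01 : ∀ i ω, X i ω = 0 ∨ X i ω = 1)
    (happrox : KWiseApproxIndep n X k ε p)
    (T : Finset (Fin n)) :
    ∫ ω, (∑ j ∈ T, (X j ω - p)) ^ k ≤
      (∑ m ∈ Finset.Icc 1 q, (T.card.choose m : ℝ) * (m : ℝ) ^ k * p ^ m)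
        + ε * (T.card : ℝ) ^ k := by
  classical
  have hkpos : 0 < k := by omega
  have habs1 : ∀ (j : Fin n) ω, |X j ω - p| ≤ 1 := by
    intro j ω
    rw [abs_le]
    rcases h01 j ω with h | h <;> rw [h] <;> constructor <;> linarith
  have hintf : ∀ f : Fin k → Fin n, Integrable (fun ω => ∏ l, (X (f l) ω - p)) := by
    intro f
    have hmeasf : Measurable fun ω => ∏ l, (X (f l) ω - p) :=
      Finset.measurable_prod _ (fun l _ => (hmeas (f l)).sub measurable_const)
    apply (integrable_const (1:ℝ)).mono' hmeasf.aestronglyMeasurable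
    apply ae_of_all
    intro ω
    rw [Real.norm_eq_abs, Finset.abs_prod]
    calc ∏ l, |X (f l) ω - p| ≤ ∏ l : Fin k, 1 :=
          Finset.prod_le_prod (fun _ _ => abs_nonneg _) (fun l _ => habs1 _ _)
      _ = 1 := by simp
  have hexp : (fun ω => (∑ j ∈ T, (X j ω - p)) ^ k)
      = fun ω => ∑ f ∈ Fintype.piFinset (fun _ : Fin k => T), ∏ l, (X (f l) ω - p) := by
    funext ω
    rw [← Finset.prod_univ_sum (fun _ : Fin k => T) (fun l j => X j ω - p)]
    rw [Finset.prod_const, Finset.card_univ, Fintype.card_fin]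
  have hint : ∫ ω, (∑ j ∈ T, (X j ω - p)) ^ k
      = ∑ f ∈ Fintype.piFinset (fun _ : Fin k => T), ∫ ω, ∏ l, (X (f l) ω - p) := by
    rw [hexp]
    exact integral_finset_sum _ (fun f _ => hintf f)
  -- notation
  set a : (Fin k → Fin n) → Fin n → ℕ :=
    fun f j => (Finset.univ.filter (fun l => f l = j)).card with ha
  set eAbs : (Fin k → Fin n) → ℝ := fun f => ∏ j ∈ Finset.univ.image f,
    |p * (1 - p) ^ (a f j) + (1 - p) * (-p) ^ (a f j)| with heAbs
  set H : (Fin k → Fin n) → Prop :=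
    fun f => ∀ j ∈ Finset.univ.image f, 2 ≤ a f j with hH
  have ha_pos : ∀ f : Fin k → Fin n, ∀ j ∈ Finset.univ.image f, 1 ≤ a f j := by
    intro f j hj
    obtain ⟨l, -, hl⟩ := Finset.mem_image.1 hj
    exact Finset.card_pos.2 ⟨l, Finset.mem_filter.2 ⟨Finset.mem_univ _, hl⟩⟩
  have hstep1 : ∀ f : Fin k → Fin n,
      eAbs f ≤ if H f then p ^ (Finset.univ.image f).card else 0 := by
    intro f
    by_cases h : H f
    · rw [if_pos h, heAbs]
      calc ∏ j ∈ Finset.univ.image f,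
            |p * (1 - p) ^ (a f j) + (1 - p) * (-p) ^ (a f j)|
          ≤ ∏ j ∈ Finset.univ.image f, p :=
            Finset.prod_le_prod (fun _ _ => abs_nonneg _) (fun j hj => eA_le hp0 hp1 (h j hj))
        _ = p ^ (Finset.univ.image f).card := Finset.prod_const p
    · rw [if_neg h]
      apply le_of_eq
      simp only [hH, not_forall] at h
      obtain ⟨j, hj, hlt⟩ := h
      have h1 : a f j = 1 := by
        have := ha_pos f j hj
        omega
      apply Finset.prod_eq_zero hj
      rw [h1, eA_one, abs_zero]
  have hcf : ∀ f ∈ (Fintype.piFinset (fun _ : Fin k => T)).filter H,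
      (Finset.univ.image f).card ∈ Finset.Icc 1 q := by
    intro f hf
    rw [Finset.mem_filter] at hf
    have hsum : (Finset.univ : Finset (Fin k)).card
        = ∑ j ∈ Finset.univ.image f, a f j :=
      Finset.card_eq_sum_card_fiberwise (fun l _ => Finset.mem_image_of_mem f (Finset.mem_univ l))
    have hcard_le : (Finset.univ.image f).card • 2 ≤ ∑ j ∈ Finset.univ.image f, a f j :=
      Finset.card_nsmul_le_sum _ _ _ (hf.2)
    haveI : Nonempty (Fin k) := ⟨⟨0, hkpos⟩⟩
    have hne : (Finset.univ.image f).Nonempty :=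
      (Finset.univ_nonempty (α := Fin k)).image f
    rw [Finset.mem_Icc]
    constructor
    · exact Finset.card_pos.2 hne
    · rw [Finset.card_univ, Fintype.card_fin] at hsum
      rw [smul_eq_mul] at hcard_le
      omega
  -- counting bound
  have hcount : ∀ m ∈ Finset.Icc 1 q,
      (((Fintype.piFinset (fun _ : Fin k => T)).filter H).filter
        (fun f => (Finset.univ.image f).card = m)).card ≤ T.card.choose m * m ^ k := by
    intro m hm
    set A := ((Fintype.piFinset (fun _ : Fin k => T)).filter H).filter
      (fun f => (Finset.univ.image f).card = m) with hA
    have hmaps : ∀ f ∈ A, Finset.univ.image f ∈ T.powersetCard m := by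
      intro f hf
      rw [hA, Finset.mem_filter, Finset.mem_filter, Fintype.mem_piFinset] at hf
      rw [Finset.mem_powersetCard]
      exact ⟨Finset.image_subset_iff.2 (fun l _ => hf.1.1 l), hf.2⟩
    have hcard := Finset.card_eq_sum_card_fiberwise hmaps
    rw [hcard]
    calc ∑ R ∈ T.powersetCard m, (A.filter (fun f => Finset.univ.image f = R)).card
        ≤ ∑ R ∈ T.powersetCard m, m ^ k := by
          apply Finset.sum_le_sum
          intro R hR
          rw [Finset.mem_powersetCard] at hR
          have hsub : A.filter (fun f => Finset.univ.image f = R)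
              ⊆ Fintype.piFinset (fun _ : Fin k => R) := by
            intro f hf
            rw [Finset.mem_filter] at hf
            rw [Fintype.mem_piFinset]
            intro l
            rw [← hf.2]
            exact Finset.mem_image_of_mem f (Finset.mem_univ l)
          calc (A.filter (fun f => Finset.univ.image f = R)).card
              ≤ (Fintype.piFinset (fun _ : Fin k => R)).card := Finset.card_le_card hsub
            _ = R.card ^ k := Fintype.card_piFinset_const R k
            _ = m ^ k := by rw [hR.2]
      _ = T.card.choose m * m ^ k := by
          rw [Finset.sum_const, Finset.card_powersetCard, smul_eq_mul]
  -- put it together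
  rw [hint]
  have hstep2 : ∑ f ∈ Fintype.piFinset (fun _ : Fin k => T), ∫ ω, ∏ l, (X (f l) ω - p)
      ≤ ∑ f ∈ Fintype.piFinset (fun _ : Fin k => T),
          ((if H f then p ^ (Finset.univ.image f).card else 0) + ε) := by
    apply Finset.sum_le_sum
    intro f _
    calc ∫ ω, ∏ l, (X (f l) ω - p) ≤ |∫ ω, ∏ l, (X (f l) ω - p)| := le_abs_self _
      _ ≤ eAbs f + ε := tuple_bound k hp0 hp1 X hmeas h01 happrox f
      _ ≤ (if H f then p ^ (Finset.univ.image f).card else 0) + ε :=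
          add_le_add_left (hstep1 f) ε
  apply hstep2.trans
  rw [Finset.sum_add_distrib, Finset.sum_const, Fintype.card_piFinset_const, nsmul_eq_mul]
  apply add_le_add
  · rw [← Finset.sum_filter]
    have hfib := Finset.sum_fiberwise_of_maps_to hcf (fun f => p ^ (Finset.univ.image f).card)
    rw [← hfib]
    apply Finset.sum_le_sum
    intro m hm
    have : ∑ f ∈ ((Fintype.piFinset (fun _ : Fin k => T)).filter H).filter
        (fun f => (Finset.univ.image f).card = m), p ^ (Finset.univ.image f).card
        = ∑ f ∈ ((Fintype.piFinset (fun _ : Fin k => T)).filter H).filter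
        (fun f => (Finset.univ.image f).card = m), p ^ m := by
      apply Finset.sum_congr rfl
      intro f hf
      rw [(Finset.mem_filter.1 hf).2]
    rw [this, Finset.sum_const, nsmul_eq_mul]
    have h1 : ((((Fintype.piFinset (fun _ : Fin k => T)).filter H).filter
        (fun f => (Finset.univ.image f).card = m)).card : ℝ) ≤ (T.card.choose m : ℝ) * (m:ℝ) ^ k := by
      have := hcount m hm
      exact_mod_cast this
    exact mul_le_mul_of_nonneg_right h1 (pow_nonneg hp0.le m)
  · push_cast
    rw [mul_comm]

private lemma numeric_sum_bound (B q k : ℕ) (hk : k = 2 * q) (hq : 1 ≤ q)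
    (p : ℝ) (hp0 : 0 < p) (h16 : 16 * (q:ℝ)^2 ≤ (B:ℝ) * p) :
    ∑ m ∈ Finset.Icc 1 q, (B.choose m : ℝ) * (m : ℝ) ^ k * p ^ m
      ≤ (q:ℝ) * ((3 * ((B:ℝ) * p)) ^ q * (q:ℝ) ^ q) := by
  set μ := (B:ℝ) * p with hμ
  have hq1 : (1:ℝ) ≤ q := by exact_mod_cast hq
  have hqμ : (q:ℝ) ≤ 3 * μ := by nlinarith
  have hterm : ∀ m ∈ Finset.Icc 1 q,
      (B.choose m : ℝ) * (m : ℝ) ^ k * p ^ m ≤ (3 * μ) ^ q * (q:ℝ) ^ q := by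
    intro m hm
    rw [Finset.mem_Icc] at hm
    have hm1 := hm.1
    have hmq := hm.2
    have hmk : m ≤ k := by omega
    have hfac_pos : (0:ℝ) < m.factorial := by exact_mod_cast m.factorial_pos
    have h1 : (B.choose m : ℝ) * (m:ℝ) ^ k ≤ (B:ℝ) ^ m * 3 ^ m * (q:ℝ) ^ (k - m) := by
      have hc : (B.choose m : ℝ) ≤ (B:ℝ) ^ m / m.factorial := Nat.choose_le_pow_div m B
      have hm3 : (m:ℝ) ^ m ≤ 3 ^ m * m.factorial := pow_self_le_three m
      have hmkeq : (m:ℝ) ^ k = (m:ℝ) ^ m * (m:ℝ) ^ (k - m) := by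
        rw [pow_mul_pow_sub _ hmk]
      have hqk : (m:ℝ) ^ (k - m) ≤ (q:ℝ) ^ (k - m) :=
        pow_le_pow_left₀ (by positivity) (by exact_mod_cast hmq) _
      calc (B.choose m : ℝ) * (m:ℝ) ^ k
          = (B.choose m : ℝ) * ((m:ℝ) ^ m * (m:ℝ) ^ (k - m)) := by rw [← hmkeq]
        _ ≤ ((B:ℝ) ^ m / m.factorial) * ((3 ^ m * m.factorial) * (q:ℝ) ^ (k - m)) := by
            apply mul_le_mul hc ?_ (by positivity) (by positivity)
            exact mul_le_mul hm3 hqk (by positivity) (by positivity)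
        _ = (B:ℝ) ^ m * 3 ^ m * (q:ℝ) ^ (k - m) := by field_simp
    have h2 : (B:ℝ) ^ m * 3 ^ m * (q:ℝ) ^ (k - m) * p ^ m
        = (3 * μ) ^ m * (q:ℝ) ^ (k - m) := by
      rw [hμ, mul_pow, mul_pow]; ring
    have h3 : (3 * μ) ^ m * (q:ℝ) ^ (k - m) ≤ (3 * μ) ^ q * (q:ℝ) ^ q := by
      have hkm : k - m = (q - m) + q := by omega
      rw [hkm, pow_add]
      have h4 : (q:ℝ) ^ (q - m) ≤ (3 * μ) ^ (q - m) :=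
        pow_le_pow_left₀ (by positivity) hqμ _
      calc (3 * μ) ^ m * ((q:ℝ) ^ (q - m) * (q:ℝ) ^ q)
          ≤ (3 * μ) ^ m * ((3 * μ) ^ (q - m) * (q:ℝ) ^ q) := by
            apply mul_le_mul_of_nonneg_left ?_ (by positivity)
            exact mul_le_mul_of_nonneg_right h4 (by positivity)
        _ = ((3 * μ) ^ m * (3 * μ) ^ (q - m)) * (q:ℝ) ^ q := by ring
        _ = (3 * μ) ^ q * (q:ℝ) ^ q := by
            rw [← pow_add, show m + (q - m) = q from by omega]
    calc (B.choose m : ℝ) * (m : ℝ) ^ k * p ^ m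
        ≤ ((B:ℝ) ^ m * 3 ^ m * (q:ℝ) ^ (k - m)) * p ^ m :=
          mul_le_mul_of_nonneg_right h1 (by positivity)
      _ = (3 * μ) ^ m * (q:ℝ) ^ (k - m) := h2
      _ ≤ (3 * μ) ^ q * (q:ℝ) ^ q := h3
  calc ∑ m ∈ Finset.Icc 1 q, (B.choose m : ℝ) * (m : ℝ) ^ k * p ^ m
      ≤ (Finset.Icc 1 q).card • ((3 * μ) ^ q * (q:ℝ) ^ q) :=
        Finset.sum_le_card_nsmul _ _ _ hterm
    _ = (q:ℝ) * ((3 * μ) ^ q * (q:ℝ) ^ q) := by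
        rw [Nat.card_Icc, nsmul_eq_mul]
        norm_num

set_option maxHeartbeats 1000000 in
private lemma key_bound {Ω : Type*} [MeasureSpace Ω] [IsProbabilityMeasure (volume : Measure Ω)]
    {n b k q : ℕ} {c lam p ε : ℝ}
    (hc : 0 < c) (hlam : c < lam) (hb1 : 1 ≤ b) (hbn : b ≤ n)
    (hk : k = 2 * q) (hq2 : 2 ≤ q)
    (hp0 : 0 < p) (hp1 : p < 1) (hε : ε = (n : ℝ) ^ (-lam))
    (h4k : (4:ℝ) * (k:ℝ)^2 ≤ (b:ℝ) * p)
    (hklow : 4 * c * Real.log n / Real.log ((b : ℝ) * p) ≤ (k : ℝ))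
    (hkhigh : (k : ℝ) ≤ (lam - c) * Real.log n / Real.log (1 / p))
    (X : Fin n → Ω → ℝ) (hmeas : ∀ i, Measurable (X i))
    (h01 : ∀ i ω, X i ω = 0 ∨ X i ω = 1)
    (happrox : KWiseApproxIndep n X k ε p)
    (T : Finset (Fin n)) (hT : b ≤ T.card) :
    (volume {ω | ((T.card : ℝ) * p) ^ k ≤ (∑ j ∈ T, (X j ω - p)) ^ k}).toReal
      ≤ 3 * (n : ℝ) ^ (-c) := by
  have hq1 : 1 ≤ q := by omega
  have hk4 : 4 ≤ k := by omega
  have hkR : (k:ℝ) = 2 * (q:ℝ) := by exact_mod_cast congrArg (Nat.cast (R := ℝ)) hk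
  have hqR1 : (1:ℝ) ≤ (q:ℝ) := by exact_mod_cast hq1
  have hkR4 : (4:ℝ) ≤ (k:ℝ) := by exact_mod_cast hk4
  have hbp64 : (64:ℝ) ≤ (b:ℝ) * p := by nlinarith [h4k, hkR4]
  have hbR : (b:ℝ) ≤ (n:ℝ) := by exact_mod_cast hbn
  have hb64 : (64:ℝ) ≤ (b:ℝ) := by nlinarith [hbp64, hp1, (Nat.cast_nonneg b : (0:ℝ) ≤ (b:ℝ))]
  have hn2 : (2:ℝ) ≤ (n:ℝ) := by linarith
  have hn0 : (0:ℝ) < (n:ℝ) := by linarith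
  have hlogn : 0 < Real.log n := Real.log_pos (by linarith)
  have hlogbp : 0 < Real.log ((b:ℝ) * p) := Real.log_pos (by linarith)
  have hlogp : 0 < Real.log (1 / p) := Real.log_pos (one_lt_one_div hp0 hp1)
  have hTR : (b:ℝ) ≤ (T.card : ℝ) := by exact_mod_cast hT
  set μ := (T.card : ℝ) * p with hμdef
  have hμbp : (b:ℝ) * p ≤ μ := mul_le_mul_of_nonneg_right hTR hp0.le
  have hμpos : 0 < μ := by nlinarith
  have h16 : 16 * (q:ℝ)^2 ≤ (T.card:ℝ) * p := by nlinarith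
  have hkeven : Even k := ⟨q, by omega⟩
  have hε0 : 0 ≤ ε := hε ▸ Real.rpow_nonneg hn0.le _
  -- integrability of S^k
  have hmeasS : Measurable fun ω => (∑ j ∈ T, (X j ω - p)) ^ k :=
    (Finset.measurable_sum _ (fun j _ => (hmeas j).sub measurable_const)).pow_const k
  have habs1 : ∀ (j : Fin n) ω, |X j ω - p| ≤ 1 := by
    intro j ω
    rw [abs_le]
    rcases h01 j ω with h | h <;> rw [h] <;> constructor <;> linarith
  have hSkint : Integrable (fun ω => (∑ j ∈ T, (X j ω - p)) ^ k) := by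
    apply (integrable_const ((T.card : ℝ) ^ k)).mono' hmeasS.aestronglyMeasurable
    apply ae_of_all
    intro ω
    rw [Real.norm_eq_abs, abs_pow]
    apply pow_le_pow_left₀ (abs_nonneg _)
    calc |∑ j ∈ T, (X j ω - p)| ≤ ∑ j ∈ T, |X j ω - p| := Finset.abs_sum_le_sum_abs _ _
      _ ≤ ∑ j ∈ T, 1 := Finset.sum_le_sum (fun j _ => habs1 j ω)
      _ = (T.card : ℝ) := by rw [Finset.sum_const, nsmul_eq_mul, mul_one]
  -- Markov
  have hmarkov := mul_meas_ge_le_integral_of_nonneg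
    (ae_of_all _ (fun ω => hkeven.pow_nonneg (∑ j ∈ T, (X j ω - p)))) hSkint (μ ^ k)
  have hmoment := moment_bound hk hq1 hp0 hp1 hε0 X hmeas h01 happrox T
  have hnum := numeric_sum_bound T.card q k hk hq1 p hp0 h16
  -- N = n^c facts
  set N := (n:ℝ) ^ c with hN
  have hNpos : 0 < N := Real.rpow_pos_of_pos hn0 c
  have hNinv : (n:ℝ) ^ (-c) * N = 1 := by
    rw [hN, ← Real.rpow_add hn0]
    simp
  have hnegc_nonneg : 0 ≤ (n:ℝ) ^ (-c) := Real.rpow_nonneg hn0.le _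
  -- squares inequality: q^(q+1) * 3^q * N ≤ 2 * ((b:ℝ)*p)^q
  have hNsq : N ^ 2 ≤ ((b:ℝ) * p) ^ q := by
    have h1 : 4 * c * Real.log n ≤ (k:ℝ) * Real.log ((b:ℝ) * p) :=
      (div_le_iff₀ hlogbp).1 hklow
    have h2 : Real.log n * c * 2 ≤ (q:ℝ) * Real.log ((b:ℝ) * p) := by
      rw [hkR] at h1; linarith
    have h3 : N ^ 2 = Real.exp (Real.log n * c * 2) := by
      rw [hN, Real.rpow_def_of_pos hn0, ← Real.exp_nat_mul]
      norm_num
      ring_nf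
    have h4 : ((b:ℝ) * p) ^ q = Real.exp ((q:ℝ) * Real.log ((b:ℝ) * p)) := by
      rw [← Real.log_pow, Real.exp_log (by positivity)]
    rw [h3, h4]
    exact Real.exp_le_exp.2 h2
  have h9 : (q:ℝ)^2 * 9 ^ q ≤ 4 * 16 ^ q := by
    have h0 : ((q:ℝ) * 3 ^ q) ≤ 2 * 4 ^ q := by exact_mod_cast nat_q3 q
    have h0' : ((q:ℝ) * 3 ^ q) ^ 2 ≤ (2 * 4 ^ q) ^ 2 := by
      apply pow_le_pow_left₀ (by positivity) h0
    have e1 : ((3:ℝ) ^ q) ^ 2 = 9 ^ q := by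
      rw [← pow_mul, mul_comm q 2, pow_mul]; norm_num
    have e2 : ((4:ℝ) ^ q) ^ 2 = 16 ^ q := by
      rw [← pow_mul, mul_comm q 2, pow_mul]; norm_num
    calc (q:ℝ)^2 * 9 ^ q = ((q:ℝ) * 3 ^ q) ^ 2 := by rw [mul_pow, e1]
      _ ≤ (2 * 4 ^ q) ^ 2 := h0'
      _ = 4 * 16 ^ q := by rw [mul_pow, e2]; norm_num
  have h16q : 16 ^ q * (q:ℝ)^(2*q) ≤ ((b:ℝ) * p) ^ q := by
    have h16b : 16 * (q:ℝ)^2 ≤ (b:ℝ) * p := by nlinarith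
    calc (16:ℝ) ^ q * (q:ℝ)^(2*q) = (16 * (q:ℝ)^2) ^ q := by
          rw [mul_pow, pow_mul]
      _ ≤ ((b:ℝ) * p) ^ q := pow_le_pow_left₀ (by positivity) h16b q
  have hKI : (q:ℝ)^(q+1) * 3 ^ q * N ≤ 2 * ((b:ℝ)*p) ^ q := by
    have hL2 : ((q:ℝ)^(q+1) * 3 ^ q * N) ^ 2
        = ((q:ℝ)^2 * 9 ^ q) * ((q:ℝ)^(2*q)) * N ^ 2 := by
      have e1 : ((3:ℝ) ^ q) ^ 2 = 9 ^ q := by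
        rw [← pow_mul, mul_comm q 2, pow_mul]; norm_num
      have e2 : ((q:ℝ) ^ (q+1)) ^ 2 = (q:ℝ)^2 * (q:ℝ)^(2*q) := by
        rw [← pow_mul, show (q+1)*2 = 2 + 2*q from by ring, pow_add]
      calc ((q:ℝ)^(q+1) * 3 ^ q * N) ^ 2
          = ((q:ℝ)^(q+1))^2 * ((3:ℝ)^q)^2 * N^2 := by ring
        _ = ((q:ℝ)^2 * 9 ^ q) * ((q:ℝ)^(2*q)) * N ^ 2 := by rw [e1, e2]; ring
    have hsq : ((q:ℝ)^(q+1) * 3 ^ q * N) ^ 2 ≤ (2 * ((b:ℝ)*p) ^ q) ^ 2 := by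
      rw [hL2]
      have s1 : ((q:ℝ)^2 * 9 ^ q) * ((q:ℝ)^(2*q)) * N ^ 2
          ≤ (4 * 16 ^ q) * ((q:ℝ)^(2*q)) * N ^ 2 := by
        apply mul_le_mul_of_nonneg_right (mul_le_mul_of_nonneg_right h9 (by positivity))
          (by positivity)
      have s2 : (4 * 16 ^ q) * ((q:ℝ)^(2*q)) * N ^ 2
          = 4 * (16 ^ q * (q:ℝ)^(2*q)) * N ^ 2 := by ring
      have s3 : 4 * (16 ^ q * (q:ℝ)^(2*q)) * N ^ 2 ≤ 4 * ((b:ℝ)*p) ^ q * N ^ 2 := by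
        apply mul_le_mul_of_nonneg_right (mul_le_mul_of_nonneg_left h16q (by norm_num))
          (by positivity)
      have s4 : 4 * ((b:ℝ)*p) ^ q * N ^ 2 ≤ 4 * ((b:ℝ)*p) ^ q * ((b:ℝ)*p) ^ q := by
        apply mul_le_mul_of_nonneg_left hNsq (by positivity)
      calc ((q:ℝ)^2 * 9 ^ q) * ((q:ℝ)^(2*q)) * N ^ 2
          ≤ (4 * 16 ^ q) * ((q:ℝ)^(2*q)) * N ^ 2 := s1
        _ = 4 * (16 ^ q * (q:ℝ)^(2*q)) * N ^ 2 := s2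
        _ ≤ 4 * ((b:ℝ)*p) ^ q * N ^ 2 := s3
        _ ≤ 4 * ((b:ℝ)*p) ^ q * ((b:ℝ)*p) ^ q := s4
        _ = (2 * ((b:ℝ)*p) ^ q) ^ 2 := by ring
    exact le_of_pow_le_pow_left₀ (by norm_num) (by positivity) hsq
  -- main bounds
  have hμk : μ ^ k = μ ^ q * μ ^ q := by rw [← pow_add, hk]; ring_nf
  have hA1 : (q:ℝ) * ((3 * μ) ^ q * (q:ℝ) ^ q) ≤ 2 * (n:ℝ)^(-c) * μ ^ k := by
    have hKI' : (q:ℝ)^(q+1) * 3 ^ q * N ≤ 2 * μ ^ q :=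
      hKI.trans (by
        have := pow_le_pow_left₀ (by positivity) hμbp q
        linarith)
    have h5 := mul_le_mul_of_nonneg_right hKI' (pow_nonneg hμpos.le q)
    calc (q:ℝ) * ((3 * μ) ^ q * (q:ℝ) ^ q)
        = (n:ℝ)^(-c) * N * ((q:ℝ) * ((3 * μ) ^ q * (q:ℝ) ^ q)) := by rw [hNinv, one_mul]
      _ = (n:ℝ)^(-c) * (((q:ℝ)^(q+1) * 3 ^ q * N) * μ ^ q) := by
          rw [mul_pow, pow_succ]
          ring
      _ ≤ (n:ℝ)^(-c) * ((2 * μ ^ q) * μ ^ q) := by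
          apply mul_le_mul_of_nonneg_left h5 hnegc_nonneg
      _ = 2 * (n:ℝ)^(-c) * μ ^ k := by rw [hμk]; ring
  have hA2 : ε * (T.card : ℝ) ^ k ≤ (n:ℝ)^(-c) * μ ^ k := by
    have hpk : (n:ℝ) ^ (c - lam) ≤ p ^ k := by
      have h1 : (k:ℝ) * Real.log (1/p) ≤ (lam - c) * Real.log n :=
        (le_div_iff₀ hlogp).1 hkhigh
      have h2 : Real.log (1/p) = -Real.log p := by rw [one_div, Real.log_inv]
      have h3 : Real.log n * (c - lam) ≤ (k:ℝ) * Real.log p := by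
        rw [h2] at h1; nlinarith
      have h4 : (n:ℝ) ^ (c - lam) = Real.exp (Real.log n * (c - lam)) := by
        rw [Real.rpow_def_of_pos hn0]
      have h5 : p ^ k = Real.exp ((k:ℝ) * Real.log p) := by
        rw [← Real.log_pow, Real.exp_log (by positivity)]
      rw [h4, h5]
      exact Real.exp_le_exp.2 h3
    have hεle : ε ≤ (n:ℝ)^(-c) * p ^ k := by
      rw [hε]
      calc (n:ℝ)^(-lam) = (n:ℝ)^(-c) * (n:ℝ)^(c - lam) := by
            rw [← Real.rpow_add hn0]; ring_nf
        _ ≤ (n:ℝ)^(-c) * p ^ k := mul_le_mul_of_nonneg_left hpk hnegc_nonneg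
    calc ε * (T.card : ℝ) ^ k ≤ ((n:ℝ)^(-c) * p ^ k) * (T.card : ℝ) ^ k :=
          mul_le_mul_of_nonneg_right hεle (by positivity)
      _ = (n:ℝ)^(-c) * μ ^ k := by rw [hμdef, mul_pow]; ring
  -- combine
  have hfinal : μ ^ k * (volume {ω | μ ^ k ≤ (∑ j ∈ T, (X j ω - p)) ^ k}).toReal
      ≤ μ ^ k * (3 * (n:ℝ)^(-c)) := by
    calc μ ^ k * (volume {ω | μ ^ k ≤ (∑ j ∈ T, (X j ω - p)) ^ k}).toReal
        ≤ ∫ ω, (∑ j ∈ T, (X j ω - p)) ^ k := hmarkov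
      _ ≤ (∑ m ∈ Finset.Icc 1 q, (T.card.choose m : ℝ) * (m : ℝ) ^ k * p ^ m)
            + ε * (T.card : ℝ) ^ k := hmoment
      _ ≤ (q:ℝ) * ((3 * μ) ^ q * (q:ℝ) ^ q) + ε * (T.card : ℝ) ^ k :=
          add_le_add_left hnum _
      _ ≤ (2 * (n:ℝ)^(-c) * μ ^ k) + ((n:ℝ)^(-c) * μ ^ k) := add_le_add hA1 hA2
      _ = μ ^ k * (3 * (n:ℝ)^(-c)) := by ring
  exact le_of_mul_le_mul_left hfinal (by positivity)

/-- Each of the following `n+1` events holds with probability at least `1 − 9·n^{−c}`: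
for each `i`, the event `Σ_{j ∈ S_i} X_j > 0`; and the event `Σ_i X_i ≤ 2·n·p`. -/
theorem leader_events_probability_bound
    {Ω : Type*} [MeasureSpace Ω] [IsProbabilityMeasure (volume : Measure Ω)]
    (c lam : ℝ) (hc : 0 < c) (hlam : c < lam)
    (n b k : ℕ) (hb1 : 1 ≤ b) (hbn : b ≤ n) (hk4 : 4 ≤ k) (hkeven : Even k)
    (p ε : ℝ) (hp0 : 0 < p) (hp1 : p < 1) (hε : ε = (n : ℝ) ^ (-lam))
    (hkb : (2 * k : ℝ) ≤ Real.sqrt ((b : ℝ) * p))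
    (hklow : 4 * c * Real.log n / Real.log ((b : ℝ) * p) ≤ (k : ℝ))
    (hkhigh : (k : ℝ) ≤ (lam - c) * Real.log n / Real.log (1 / p))
    (S : Fin n → Finset (Fin n)) (hS : ∀ i, (S i).card = b)
    (X : Fin n → Ω → ℝ) (hmeas : ∀ i, Measurable (X i))
    (h01 : ∀ i ω, X i ω = 0 ∨ X i ω = 1)
    (hident : ∀ i j : Fin n, volume {ω | X i ω = 1} = volume {ω | X j ω = 1})
    (happrox : KWiseApproxIndep n X k ε p) :
    (∀ i : Fin n,
      1 - 9 * (n : ℝ) ^ (-c) ≤ (volume {ω | 0 < ∑ j ∈ S i, X j ω}).toReal) ∧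
    1 - 9 * (n : ℝ) ^ (-c) ≤ (volume {ω | ∑ i, X i ω ≤ 2 * (n : ℝ) * p}).toReal := by
  obtain ⟨q, hqq⟩ := hkeven
  have hk2 : k = 2 * q := by omega
  have hq2 : 2 ≤ q := by omega
  have h4k : (4:ℝ) * (k:ℝ)^2 ≤ (b:ℝ) * p := by
    have h1 : ((2:ℝ) * k) ^ 2 ≤ Real.sqrt ((b:ℝ) * p) ^ 2 :=
      pow_le_pow_left₀ (by positivity) hkb 2
    rw [Real.sq_sqrt (by positivity)] at h1
    nlinarith
  have hn0 : (0:ℝ) < (n:ℝ) := by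
    have : 1 ≤ n := le_trans hb1 hbn
    exact_mod_cast Nat.lt_of_lt_of_le Nat.zero_lt_one this
  have hnegc_nonneg : 0 ≤ (n:ℝ) ^ (-c) := Real.rpow_nonneg hn0.le _
  have hkeven' : Even k := ⟨q, hqq⟩
  -- complement helper
  have hcompl : ∀ A : Set Ω, MeasurableSet A → (volume Aᶜ).toReal ≤ 3 * (n:ℝ)^(-c) →
      1 - 9 * (n:ℝ)^(-c) ≤ (volume A).toReal := by
    intro A hA hbound
    have h2 : volume A + volume Aᶜ = 1 := (measure_add_measure_compl hA).trans measure_univ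
    have h3 := congrArg ENNReal.toReal h2
    rw [ENNReal.toReal_add (measure_ne_top _ _) (measure_ne_top _ _), ENNReal.toReal_one] at h3
    linarith
  constructor
  · intro i
    set T := S i with hT
    have hTcard : T.card = b := hS i
    have hbT : b ≤ T.card := le_of_eq hTcard.symm
    have hkey := key_bound hc hlam hb1 hbn hk2 hq2 hp0 hp1 hε h4k hklow hkhigh
      X hmeas h01 happrox T hbT
    apply hcompl
    · exact measurableSet_lt measurable_const (Finset.measurable_sum _ fun j _ => hmeas j)
    · have hsub : {ω | 0 < ∑ j ∈ T, X j ω}ᶜ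
          ⊆ {ω | ((T.card : ℝ) * p) ^ k ≤ (∑ j ∈ T, (X j ω - p)) ^ k} := by
        intro ω hω
        rw [Set.mem_compl_iff, Set.mem_setOf_eq, not_lt] at hω
        rw [Set.mem_setOf_eq]
        have hμpos : 0 < (T.card : ℝ) * p := by
          have : (1:ℝ) ≤ (T.card : ℝ) := by exact_mod_cast le_trans hb1 hbT
          nlinarith
        have hsum : ∑ j ∈ T, (X j ω - p) = (∑ j ∈ T, X j ω) - (T.card : ℝ) * p := by
          rw [Finset.sum_sub_distrib, Finset.sum_const, nsmul_eq_mul]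
        have habs : (T.card : ℝ) * p ≤ |∑ j ∈ T, (X j ω - p)| := by
          rw [hsum]
          calc (T.card : ℝ) * p ≤ -((∑ j ∈ T, X j ω) - (T.card : ℝ) * p) := by linarith
            _ ≤ |(∑ j ∈ T, X j ω) - (T.card : ℝ) * p| := neg_le_abs _
        calc ((T.card : ℝ) * p) ^ k ≤ |∑ j ∈ T, (X j ω - p)| ^ k :=
              pow_le_pow_left₀ hμpos.le habs k
          _ = (∑ j ∈ T, (X j ω - p)) ^ k := hkeven'.pow_abs _
      calc (volume {ω | 0 < ∑ j ∈ T, X j ω}ᶜ).toReal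
          ≤ (volume {ω | ((T.card : ℝ) * p) ^ k ≤ (∑ j ∈ T, (X j ω - p)) ^ k}).toReal :=
            ENNReal.toReal_mono (measure_ne_top _ _) (measure_mono hsub)
        _ ≤ 3 * (n:ℝ)^(-c) := hkey
  · set T := (Finset.univ : Finset (Fin n)) with hT
    have hTcard : T.card = n := by rw [hT, Finset.card_univ, Fintype.card_fin]
    have hbT : b ≤ T.card := by rw [hTcard]; exact hbn
    have hkey := key_bound hc hlam hb1 hbn hk2 hq2 hp0 hp1 hε h4k hklow hkhigh
      X hmeas h01 happrox T hbT
    apply hcompl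
    · exact measurableSet_le (Finset.measurable_sum _ fun j _ => hmeas j) measurable_const
    · have hsub : {ω | ∑ i, X i ω ≤ 2 * (n:ℝ) * p}ᶜ
          ⊆ {ω | ((T.card : ℝ) * p) ^ k ≤ (∑ j ∈ T, (X j ω - p)) ^ k} := by
        intro ω hω
        rw [Set.mem_compl_iff, Set.mem_setOf_eq, not_le] at hω
        rw [Set.mem_setOf_eq]
        have hμpos : 0 < (T.card : ℝ) * p := by
          have : (1:ℝ) ≤ (T.card : ℝ) := by exact_mod_cast le_trans hb1 hbT
          nlinarith
        have hsum : ∑ j ∈ T, (X j ω - p) = (∑ j ∈ T, X j ω) - (T.card : ℝ) * p := by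
          rw [Finset.sum_sub_distrib, Finset.sum_const, nsmul_eq_mul]
        have hle : (T.card : ℝ) * p ≤ ∑ j ∈ T, (X j ω - p) := by
          rw [hsum, hTcard]
          have : (2:ℝ) * (n:ℝ) * p < ∑ j ∈ T, X j ω := hω
          linarith
        exact pow_le_pow_left₀ hμpos.le hle k
      calc (volume {ω | ∑ i, X i ω ≤ 2 * (n:ℝ) * p}ᶜ).toReal
          ≤ (volume {ω | ((T.card : ℝ) * p) ^ k ≤ (∑ j ∈ T, (X j ω - p)) ^ k}).toReal :=
            ENNReal.toReal_mono (measure_ne_top _ _) (measure_mono hsub)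
        _ ≤ 3 * (n:ℝ)^(-c) := hkey
end

section
/- Existence of a small leader set: Let n ≥ 10 and b be integers with (log₂ n)^{10} ≤ b ≤ n and such that 15·(ln n)/(ln b) is an even integer ≥ 4. Let S_1,…,S_n be subsets of {1,…,n} with |S_i| = b and i ∈ S_i for every i. Then there exists a subset L ⊆ {1,…,n} with |L| ≤ 2·n·b^{−1/5} such that S_i ∩ L ≠ ∅ for every i ∈ {1,…,n}. -/
/-!
Greedy covering instead of random sampling: averaging over points, some point lies in at least a
`b / n` fraction of the sets not yet hit, so after `t` greedy choices fewer than
`n (1 - b/n)^t ≤ n e^{-tb/n}` sets remain unhit. For `t = ⌊2 n b^{-1/5}⌋` we get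
`tb/n ≥ b^{4/5} ≥ (log₂ n)^8 > ln n`, so none remain.
-/

open Finset Fintype Real

section Greedy
variable {α ι : Type*} [Fintype α] [DecidableEq α] (S : ι → Finset α) {b : ℕ}

theorem exists_card_filter_notMem_mul_le [Nonempty α] (hS : ∀ i, b ≤ #(S i)) (F : Finset ι) :
    ∃ x, #{i ∈ F | x ∉ S i} * card α ≤ #F * (card α - b) := by
  have hmissed : ∑ x, #{i ∈ F | x ∉ S i} ≤ #F * (card α - b) :=
    calc ∑ x, #{i ∈ F | x ∉ S i} = ∑ i ∈ F, #(S i)ᶜ := by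
          simp only [compl_eq_univ_sdiff, ← filter_notMem_eq_sdiff]
          exact (sum_card_bipartiteAbove_eq_sum_card_bipartiteBelow (fun i x => x ∉ S i)).symm
      _ ≤ #F * (card α - b) :=
          sum_le_card_nsmul _ _ _ fun i _ => card_compl (S i) ▸ Nat.sub_le_sub_left (hS i) _
  obtain ⟨x, -, hx⟩ := exists_le_of_sum_le (s := univ)
    (f := fun x => #{i ∈ F | x ∉ S i} * card α) (g := fun _ => #F * (card α - b)) univ_nonempty (by
      rw [← sum_mul, sum_const, card_univ, smul_eq_mul, mul_comm (card α)]
      exact Nat.mul_le_mul_right _ hmissed)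
  exact ⟨x, hx⟩

theorem exists_hitting_finset_card_le (hS : ∀ i, b ≤ #(S i)) (t : ℕ) (F : Finset ι)
    (hF : #F * (card α - b) ^ t < card α ^ t) :
    ∃ L : Finset α, #L ≤ t ∧ ∀ i ∈ F, (S i ∩ L).Nonempty := by
  induction t generalizing F with
  | zero =>
    obtain rfl : F = ∅ := by simpa using hF
    exact ⟨∅, le_rfl, by simp⟩
  | succ t ih =>
    have : Nonempty α := card_pos_iff.1 <| Nat.pos_of_ne_zero fun h => by simp [h] at hF
    obtain ⟨x, hx⟩ := exists_card_filter_notMem_mul_le S hS F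
    have hrest : #{i ∈ F | x ∉ S i} * (card α - b) ^ t * card α < card α ^ t * card α :=
      calc #{i ∈ F | x ∉ S i} * (card α - b) ^ t * card α
          = #{i ∈ F | x ∉ S i} * card α * (card α - b) ^ t := by ring
        _ ≤ #F * (card α - b) * (card α - b) ^ t := Nat.mul_le_mul_right _ hx
        _ = #F * (card α - b) ^ (t + 1) := by ring
        _ < card α ^ (t + 1) := hF
        _ = card α ^ t * card α := pow_succ ..
    obtain ⟨L, hL, hit⟩ := ih {i ∈ F | x ∉ S i} (lt_of_mul_lt_mul_right hrest (Nat.zero_le _))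
    refine ⟨insert x L, (card_insert_le _ _).trans (by omega), fun i hi => ?_⟩
    by_cases hxi : x ∈ S i
    · exact ⟨x, mem_inter.2 ⟨hxi, mem_insert_self _ _⟩⟩
    · exact (hit i (mem_filter.2 ⟨hi, hxi⟩)).mono
        (inter_subset_inter_left (subset_insert _ _))

end Greedy

theorem mul_sub_pow_lt_pow_of_log_lt {n b : ℝ} (hn : 0 < n) (hbn : b ≤ n) {t : ℕ}
    (h : log n < t * b / n) : n * (n - b) ^ t < n ^ t := by
  have hdecay : (1 - b / n) ^ t < n⁻¹ :=
    calc (1 - b / n) ^ t ≤ exp (-(b / n)) ^ t :=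
          pow_le_pow_left₀ (by rw [sub_nonneg, div_le_one hn]; exact hbn)
            (one_sub_le_exp_neg _) t
      _ = exp (-(t * b / n)) := by rw [← exp_nat_mul]; ring_nf
      _ < exp (-log n) := exp_lt_exp.2 (neg_lt_neg h)
      _ = n⁻¹ := by rw [exp_neg, exp_log hn]
  calc n * (n - b) ^ t = n * n ^ t * (1 - b / n) ^ t := by
        rw [mul_assoc, ← mul_pow, mul_sub, mul_one, mul_div_cancel₀ _ hn.ne']
    _ < n * n ^ t * n⁻¹ := mul_lt_mul_of_pos_left hdecay (by positivity)
    _ = n ^ t := by field_simp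

theorem rpow_one_sub_le_floor_mul_div {n b ε : ℝ} (hb : 1 ≤ b) (hbn : b ≤ n) (hε : ε ≤ 1) :
    b ^ (1 - ε) ≤ ⌊2 * n * b ^ (-ε)⌋₊ * b / n := by
  have hb0 : 0 < b := by linarith
  have hn : 0 < n := by linarith
  have hfloor := Nat.sub_one_lt_floor (2 * n * b ^ (-ε))
  have hone : 1 ≤ b ^ (1 - ε) := one_le_rpow hb (by linarith)
  have hsplit : b ^ (1 - ε) = b ^ (-ε) * b := by
    rw [sub_eq_neg_add, rpow_add hb0, rpow_one]
  rw [le_div_iff₀ hn]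
  nlinarith [mul_lt_mul_of_pos_right hfloor hb0]

theorem log_lt_rpow_four_fifths {n b : ℝ} (hn : 2 ≤ n) (hb : logb 2 n ^ 10 ≤ b) :
    log n < b ^ (4 / 5 : ℝ) := by
  set x := logb 2 n with hxdef
  have hx : 1 ≤ x := (le_logb_iff_rpow_le one_lt_two (by linarith)).2 (by simpa using hn)
  have hlog : log n < x := by
    have hlogn : 0 < log n := log_pos (by linarith)
    rw [hxdef, Real.logb, lt_div_iff₀ (log_pos one_lt_two)]
    nlinarith [log_two_lt_d9]
  calc log n < x := hlog
    _ ≤ x ^ 8 := le_self_pow₀ hx (by norm_num)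
    _ = (x ^ 10) ^ (4 / 5 : ℝ) := by
        rw [← rpow_natCast x 10, ← rpow_mul (by linarith), ← rpow_natCast]; norm_num
    _ ≤ b ^ (4 / 5 : ℝ) := rpow_le_rpow (by positivity) hb (by norm_num)

theorem exists_small_leader_set_general
    (n b : ℕ) (hn : 10 ≤ n) (hb : (Real.logb 2 n) ^ 10 ≤ (b : ℝ)) (hbn : b ≤ n)
    (S : Fin n → Finset (Fin n)) (hScard : ∀ i, (S i).card = b) :
    ∃ L : Finset (Fin n), (L.card : ℝ) ≤ 2 * (n : ℝ) * (b : ℝ) ^ (-(1/5) : ℝ) ∧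
      ∀ i, (S i ∩ L).Nonempty := by
  have hn2 : (2 : ℝ) ≤ n := by exact_mod_cast (by omega : 2 ≤ n)
  have hlog := log_lt_rpow_four_fifths hn2 hb
  have hb1 : (1 : ℝ) ≤ b := by
    rcases Nat.eq_zero_or_pos b with rfl | hb0
    · linarith [log_nonneg (by linarith : (1 : ℝ) ≤ n), (by simpa using hlog : log n < 0)]
    · exact_mod_cast hb0
  set t := ⌊2 * (n : ℝ) * (b : ℝ) ^ (-(1/5) : ℝ)⌋₊
  have hrate : log n < t * b / n :=
    calc log n < (b : ℝ) ^ (4 / 5 : ℝ) := hlog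
      _ = (b : ℝ) ^ (1 - 1 / 5 : ℝ) := by norm_num
      _ ≤ t * b / n := rpow_one_sub_le_floor_mul_div hb1 (Nat.cast_le.2 hbn) (by norm_num)
  have hcount : n * (n - b) ^ t < n ^ t := by
    have := mul_sub_pow_lt_pow_of_log_lt (by linarith) (Nat.cast_le.2 hbn) hrate
    rw [← Nat.cast_sub hbn] at this
    exact_mod_cast this
  obtain ⟨L, hLt, hL⟩ := exists_hitting_finset_card_le S (fun i => (hScard i).ge) t univ
    (by simpa using hcount)
  exact ⟨L, (Nat.cast_le.2 hLt).trans (Nat.floor_le (by positivity)),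
    fun i => hL i (mem_univ i)⟩

/-- Existence of a small leader set: given sets `S_1, …, S_n ⊆ {1,…,n}` of size `b`
with `i ∈ S_i`, where `(log₂ n)^{10} ≤ b ≤ n`, `n ≥ 10` and `15·ln n / ln b` is an even
integer at least 4, there is a set `L` of size at most `2·n·b^{−1/5}` hitting every `S_i`. -/
theorem exists_small_leader_set
    (n b : ℕ) (hn : 10 ≤ n) (hb : (Real.logb 2 n) ^ 10 ≤ (b : ℝ)) (hbn : b ≤ n)
    (hk : ∃ k : ℕ, Even k ∧ 4 ≤ k ∧ (k : ℝ) = 15 * Real.log n / Real.log b)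
    (S : Fin n → Finset (Fin n)) (hScard : ∀ i, (S i).card = b) (hSmem : ∀ i, i ∈ S i) :
    ∃ L : Finset (Fin n), (L.card : ℝ) ≤ 2 * (n : ℝ) * (b : ℝ) ^ (-(1/5) : ℝ) ∧
      ∀ i, (S i ∩ L).Nonempty :=
  exists_small_leader_set_general n b hn hb hbn S hScard
end

section
/- Let G = (V,E) be a finite simple undirected graph with m edges and maximum degree at most 2, and let 0 < p ≤ 1/2. Let (X_e)_{e∈E} be pairwise independent {0,1}-valued random variables with Pr[X_e = 1] = p for every e ∈ E. Then the random edge set M(X) is always a matching of G, and E[|M(X)|] ≥ (1 − 2p)·p·m; in particular, for p = 1/4 one has E[|M(X)|] ≥ m/8. -/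
open MeasureTheory

open scoped Classical in
/-- For a 0-1 assignment `x` on the edges, `matchSet G x` is the set of edges `e` of `G` with
`x e = 1` and `x e' = 0` for every edge `e' ≠ e` sharing an endpoint with `e`. -/
noncomputable def matchSet {V : Type*} [Fintype V] [DecidableEq V]
    (G : SimpleGraph V) [DecidableRel G.Adj] (x : Sym2 V → ℝ) : Finset (Sym2 V) :=
  G.edgeFinset.filter (fun e => x e = 1 ∧
    ∀ e' ∈ G.edgeFinset, e' ≠ e → (∃ v, v ∈ e ∧ v ∈ e') → x e' = 0)

/-! In a graph of maximum degree `d`, an edge `e` is in `M(X)` iff `X e = 1` and `X e' = 0` on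
the at most `2(d - 1)` edges `e'` adjacent to it. A union bound over those edges and pairwise independence give
`P(e ∈ M(X)) ≥ p - 2(d - 1)p²`, and linearity of expectation sums this over the edges. -/

open ProbabilityTheory Finset

lemma measureReal_sub_sum_inter_le_measureReal_diff_biUnion {Ω ι : Type*} [MeasurableSpace Ω]
    (μ : Measure Ω) [IsFiniteMeasure μ] (s : Set Ω) (t : Finset ι) (f : ι → Set Ω) :
    μ.real s - ∑ i ∈ t, μ.real (s ∩ f i) ≤ μ.real (s \ ⋃ i ∈ t, f i) := by
  have hcover : s ⊆ (s \ ⋃ i ∈ t, f i) ∪ ⋃ i ∈ t, s ∩ f i := by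
    intro ω hω
    by_cases h : ω ∈ ⋃ i ∈ t, f i
    · obtain ⟨i, hi, hfi⟩ := Set.mem_iUnion₂.1 h
      exact Or.inr (Set.mem_biUnion hi ⟨hω, hfi⟩)
    · exact Or.inl ⟨hω, h⟩
  have := (measureReal_mono (μ := μ) hcover).trans (measureReal_union_le _ _)
  linarith [measureReal_biUnion_finset_le (μ := μ) t (fun i => s ∩ f i)]

lemma integral_card_eq_sum_measureReal {Ω α : Type*} [MeasurableSpace Ω]
    (μ : Measure Ω) [IsFiniteMeasure μ] (S : Ω → Finset α) (T : Finset α)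
    (hST : ∀ ω, S ω ⊆ T) (hS : ∀ a ∈ T, MeasurableSet {ω | a ∈ S ω}) :
    ∫ ω, ((S ω).card : ℝ) ∂μ = ∑ a ∈ T, μ.real {ω | a ∈ S ω} := by
  classical
  have hcard : ∀ ω, ((S ω).card : ℝ) = ∑ a ∈ T, {ω | a ∈ S ω}.indicator 1 ω := by
    intro ω
    rw [← filter_mem_eq_inter.trans (inter_eq_right.2 (hST ω)), natCast_card_filter]
    simp [Set.indicator_apply]
  simp_rw [hcard]
  rw [integral_finsetSum _ fun a ha => (integrable_const 1).indicator (hS a ha)]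
  exact sum_congr rfl fun a ha => integral_indicator_one (hS a ha)

section Graph

variable {V : Type*} [Fintype V] [DecidableEq V] (G : SimpleGraph V) [DecidableRel G.Adj]

open scoped Classical in
noncomputable def adjEdges (e : Sym2 V) : Finset (Sym2 V) :=
  G.edgeFinset.filter fun e' => e' ≠ e ∧ ∃ v, v ∈ e ∧ v ∈ e'

lemma mem_adjEdges {e e' : Sym2 V} :
    e' ∈ adjEdges G e ↔ e' ∈ G.edgeFinset ∧ e' ≠ e ∧ ∃ v, v ∈ e ∧ v ∈ e' := by
  simp [adjEdges]

lemma mem_matchSet {x : Sym2 V → ℝ} {e : Sym2 V} :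
    e ∈ matchSet G x ↔
      e ∈ G.edgeFinset ∧ x e = 1 ∧ ∀ e' ∈ adjEdges G e, x e' = 0 := by
  simp only [matchSet, Finset.mem_filter, mem_adjEdges]
  grind

lemma notMem_of_mem_of_mem_matchSet {x : Sym2 V → ℝ} {e e' : Sym2 V}
    (he : e ∈ matchSet G x) (he' : e' ∈ matchSet G x) (hne : e ≠ e') {v : V} (hve : v ∈ e) :
    v ∉ e' := by
  intro hve'
  rw [mem_matchSet] at he he'
  have hzero : x e' = 0 := he.2.2 e' ((mem_adjEdges G).2 ⟨he'.1, hne.symm, v, hve, hve'⟩)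
  exact one_ne_zero (he'.2.1.symm.trans hzero)

lemma card_adjEdges_le {d : ℕ} (hdeg : ∀ v, G.degree v ≤ d) {e : Sym2 V}
    (he : e ∈ G.edgeFinset) : #(adjEdges G e) ≤ 2 * (d - 1) := by
  induction e using Sym2.ind with
  | _ u v =>
    have hsub : adjEdges G s(u, v) ⊆
        (G.incidenceFinset u).erase s(u, v) ∪ (G.incidenceFinset v).erase s(u, v) := by
      intro e' he'
      obtain ⟨he'G, hne, w, hw, hwe'⟩ := (mem_adjEdges G).1 he'
      have hinc : e' ∈ G.incidenceFinset w :=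
        (G.mem_incidenceFinset _ _).2 ⟨SimpleGraph.mem_edgeFinset.1 he'G, hwe'⟩
      rcases Sym2.mem_iff.1 hw with rfl | rfl
      · exact mem_union_left _ (mem_erase.2 ⟨hne, hinc⟩)
      · exact mem_union_right _ (mem_erase.2 ⟨hne, hinc⟩)
    have hedge := SimpleGraph.mem_edgeFinset.1 he
    calc #(adjEdges G s(u, v))
        ≤ #((G.incidenceFinset u).erase s(u, v)) + #((G.incidenceFinset v).erase s(u, v)) :=
          (card_le_card hsub).trans (card_union_le _ _)
      _ = (G.degree u - 1) + (G.degree v - 1) := by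
          rw [card_erase_of_mem ((G.mem_incidenceFinset _ _).2 ⟨hedge, Sym2.mem_mk_left u v⟩),
            card_erase_of_mem ((G.mem_incidenceFinset _ _).2 ⟨hedge, Sym2.mem_mk_right u v⟩),
            SimpleGraph.card_incidenceFinset_eq_degree, SimpleGraph.card_incidenceFinset_eq_degree]
      _ ≤ 2 * (d - 1) := by have := hdeg u; have := hdeg v; omega

end Graph

section Probability

variable {V : Type*} [Fintype V] [DecidableEq V] {G : SimpleGraph V} [DecidableRel G.Adj]
  {Ω : Type*} {X : Sym2 V → Ω → ℝ}

lemma setOf_mem_matchSet_eq (h01 : ∀ e ω, X e ω = 0 ∨ X e ω = 1) {e : Sym2 V}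
    (he : e ∈ G.edgeFinset) :
    {ω | e ∈ matchSet G (fun e => X e ω)} =
      {ω | X e ω = 1} \ ⋃ e' ∈ adjEdges G e, {ω | X e' ω = 1} := by
  ext ω
  simp only [Set.mem_ofPred_eq, mem_matchSet, Set.mem_sdiff, Set.mem_iUnion, exists_prop,
    not_exists, not_and, he, true_and]
  refine and_congr_right fun _ => forall₂_congr fun e' _ => ?_
  rcases h01 e' ω with h | h <;> simp [h]

variable [MeasurableSpace Ω]

lemma measurableSet_setOf_mem_matchSet (hmeas : ∀ e, Measurable (X e))
    (h01 : ∀ e ω, X e ω = 0 ∨ X e ω = 1) {e : Sym2 V} (he : e ∈ G.edgeFinset) :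
    MeasurableSet {ω | e ∈ matchSet G (fun e => X e ω)} := by
  rw [setOf_mem_matchSet_eq h01 he]
  exact (measurableSet_eq_fun (hmeas e) measurable_const).diff
    (.biUnion (countable_toSet _) fun e' _ => measurableSet_eq_fun (hmeas e') measurable_const)

lemma ProbabilityTheory.IndepFun.measureReal_inter_preimage_eq_mul {β γ : Type*}
    [MeasurableSpace β] [MeasurableSpace γ] {μ : Measure Ω} {Y : Ω → β} {Z : Ω → γ}
    (h : IndepFun Y Z μ) {s : Set β} {t : Set γ} (hs : MeasurableSet s) (ht : MeasurableSet t) :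
    μ.real (Y ⁻¹' s ∩ Z ⁻¹' t) = μ.real (Y ⁻¹' s) * μ.real (Z ⁻¹' t) := by
  simp only [measureReal_def, h.measure_inter_preimage_eq_mul s t hs ht, ENNReal.toReal_mul]

variable (μ : Measure Ω) [IsFiniteMeasure μ] {p : ℝ}

lemma sub_mul_sq_le_measureReal_mem_matchSet (h01 : ∀ e ω, X e ω = 0 ∨ X e ω = 1)
    (hprob : ∀ e ∈ G.edgeFinset, μ.real {ω | X e ω = 1} = p)
    (hpind : ∀ e ∈ G.edgeFinset, ∀ e' ∈ G.edgeFinset, e ≠ e' → IndepFun (X e) (X e') μ)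
    {e : Sym2 V} (he : e ∈ G.edgeFinset) :
    p - #(adjEdges G e) * p ^ 2 ≤ μ.real {ω | e ∈ matchSet G (fun e => X e ω)} := by
  have hpair :
      ∀ e' ∈ adjEdges G e, μ.real ({ω | X e ω = 1} ∩ {ω | X e' ω = 1}) = p ^ 2 := by
    intro e' he'
    obtain ⟨he'G, hne, -⟩ := (mem_adjEdges G).1 he'
    refine ((hpind e he e' he'G (Ne.symm hne)).measureReal_inter_preimage_eq_mul
      (measurableSet_singleton 1) (measurableSet_singleton 1)).trans ?_
    rw [sq]
    exact congrArg₂ (· * ·) (hprob e he) (hprob e' he'G)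
  calc p - #(adjEdges G e) * p ^ 2
      = μ.real {ω | X e ω = 1} -
          ∑ e' ∈ adjEdges G e, μ.real ({ω | X e ω = 1} ∩ {ω | X e' ω = 1}) := by
        rw [sum_congr rfl hpair, sum_const, nsmul_eq_mul, hprob e he]
    _ ≤ μ.real {ω | e ∈ matchSet G (fun e => X e ω)} := by
        rw [setOf_mem_matchSet_eq h01 he]
        exact measureReal_sub_sum_inter_le_measureReal_diff_biUnion μ _ _ _

lemma mul_card_edgeFinset_le_integral_card_matchSet {d : ℕ} (hdeg : ∀ v, G.degree v ≤ d)
    (hmeas : ∀ e, Measurable (X e)) (h01 : ∀ e ω, X e ω = 0 ∨ X e ω = 1)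
    (hprob : ∀ e ∈ G.edgeFinset, μ.real {ω | X e ω = 1} = p)
    (hpind : ∀ e ∈ G.edgeFinset, ∀ e' ∈ G.edgeFinset, e ≠ e' →
      IndepFun (X e) (X e') μ) :
    (p - 2 * (d - 1 : ℕ) * p ^ 2) * #G.edgeFinset ≤
      ∫ ω, ((matchSet G (fun e => X e ω)).card : ℝ) ∂μ := by
  rw [integral_card_eq_sum_measureReal μ (fun ω => matchSet G fun e => X e ω) G.edgeFinset
    (fun _ => filter_subset _ _) fun e he => measurableSet_setOf_mem_matchSet hmeas h01 he,
    mul_comm, ← nsmul_eq_mul, ← sum_const]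
  refine sum_le_sum fun e he =>
    le_trans ?_ (sub_mul_sq_le_measureReal_mem_matchSet μ h01 hprob hpind he)
  have hcard : (#(adjEdges G e) : ℝ) ≤ 2 * (d - 1 : ℕ) := by
    exact_mod_cast card_adjEdges_le G hdeg he
  nlinarith [sq_nonneg p]

end Probability

theorem matching_via_pairwise_independence_general
    {V : Type*} [Fintype V] [DecidableEq V]
    (G : SimpleGraph V) [DecidableRel G.Adj]
    (hdeg : ∀ v, G.degree v ≤ 2)
    {Ω : Type*} [MeasureSpace Ω] [IsProbabilityMeasure (volume : Measure Ω)]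
    (p : ℝ)
    (X : Sym2 V → Ω → ℝ) (hmeas : ∀ e, Measurable (X e))
    (h01 : ∀ e ω, X e ω = 0 ∨ X e ω = 1)
    (hprob : ∀ e ∈ G.edgeFinset, (volume {ω | X e ω = 1}).toReal = p)
    (hpind : ∀ e ∈ G.edgeFinset, ∀ e' ∈ G.edgeFinset, e ≠ e' →
      ProbabilityTheory.IndepFun (X e) (X e') volume) :
    (∀ ω : Ω, ∀ e ∈ matchSet G (fun e => X e ω), ∀ e' ∈ matchSet G (fun e => X e ω),
      e ≠ e' → ∀ v, ¬(v ∈ e ∧ v ∈ e')) ∧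
    (1 - 2 * p) * p * (G.edgeFinset.card : ℝ) ≤
      (∫ ω, ((matchSet G (fun e => X e ω)).card : ℝ)) ∧
    (p = 1 / 4 → (G.edgeFinset.card : ℝ) / 8 ≤
      (∫ ω, ((matchSet G (fun e => X e ω)).card : ℝ))) := by
  have hbound : (1 - 2 * p) * p * (G.edgeFinset.card : ℝ) ≤
      ∫ ω, ((matchSet G (fun e => X e ω)).card : ℝ) := by
    have hexp := mul_card_edgeFinset_le_integral_card_matchSet volume hdeg hmeas h01 hprob hpind
    norm_num at hexp
    linarith
  refine ⟨fun ω e he e' he' hne v hv =>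
    notMem_of_mem_of_mem_matchSet G he he' hne hv.1 hv.2, hbound, ?_⟩
  rintro rfl
  linarith

/-- In a graph of maximum degree at most 2 with `m` edges, for pairwise independent 0-1 edge
variables with success probability `p ≤ 1/2`, `M(X)` is always a matching and
`E[|M(X)|] ≥ (1 − 2p)·p·m`; in particular for `p = 1/4`, `E[|M(X)|] ≥ m/8`. -/
theorem matching_via_pairwise_independence
    {V : Type*} [Fintype V] [DecidableEq V]
    (G : SimpleGraph V) [DecidableRel G.Adj]
    (hdeg : ∀ v, G.degree v ≤ 2)
    {Ω : Type*} [MeasureSpace Ω] [IsProbabilityMeasure (volume : Measure Ω)]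
    (p : ℝ) (hp0 : 0 < p) (hp1 : p ≤ 1 / 2)
    (X : Sym2 V → Ω → ℝ) (hmeas : ∀ e, Measurable (X e))
    (h01 : ∀ e ω, X e ω = 0 ∨ X e ω = 1)
    (hprob : ∀ e ∈ G.edgeFinset, (volume {ω | X e ω = 1}).toReal = p)
    (hpind : ∀ e ∈ G.edgeFinset, ∀ e' ∈ G.edgeFinset, e ≠ e' →
      ProbabilityTheory.IndepFun (X e) (X e') volume) :
    (∀ ω : Ω, ∀ e ∈ matchSet G (fun e => X e ω), ∀ e' ∈ matchSet G (fun e => X e ω),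
      e ≠ e' → ∀ v, ¬(v ∈ e ∧ v ∈ e')) ∧
    (1 - 2 * p) * p * (G.edgeFinset.card : ℝ) ≤
      (∫ ω, ((matchSet G (fun e => X e ω)).card : ℝ)) ∧
    (p = 1 / 4 → (G.edgeFinset.card : ℝ) / 8 ≤
      (∫ ω, ((matchSet G (fun e => X e ω)).card : ℝ))) :=
  matching_via_pairwise_independence_general G hdeg p X hmeas h01 hprob hpind
end

section
/- Let D ≥ 9 be an integer, set p = 1/√D, and let N be a positive integer such that M := 2·N·p is a positive integer. Let L_1,…,L_M be mutually independent random variables taking values in the nonnegative integers such that for every i: Pr[L_i = k] = (1−p)^k for every integer k ≥ D, and Pr[1 ≤ L_i ≤ D−1] = 0 (so Pr[L_i = 0] = 1 − (1−p)^D/p). Let L = L_1 + … + L_M. Then Pr[L ≥ 8·N·D·(1−p)^D] ≤ 2·e^{−2·N·(1−p)^{D}/3}. -/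
/-!
Chernoff's bound with `t = 1/D`. Put `r = (1 - p) e^{1/D}`. Since `L_i` has no mass on
`1, …, D - 1`, its moment generating function at `t` is at most
`1 + ∑_{k ≥ D} r^k = 1 + r^D/(1-r)`, where `r^D = e (1-p)^D` and `1 - r ≥ 3p/4`.
With `M = 2Np` the product of the `M` moment generating functions is at most
`exp (8e/3 · N (1-p)^D)`, while `e^{-tε} = exp (-8 N (1-p)^D)`, and `8e/3 < 22/3`.
-/

open MeasureTheory ProbabilityTheory Real

lemma hasSum_geometric_tail {r : ℝ} (h₀ : 0 ≤ r) (h₁ : r < 1) (D : ℕ) :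
    HasSum (fun k ↦ if D ≤ k then r ^ k else 0) (r ^ D / (1 - r)) := by
  rw [← hasSum_nat_add_iff' D, Finset.sum_eq_zero fun k hk ↦ if_neg (by simpa using hk)]
  simpa [pow_add, mul_comm, div_eq_mul_inv] using
    (hasSum_geometric_of_lt_one h₀ h₁).mul_left (r ^ D)

lemma three_div_four_le_mul_one_sub_mul_exp {s : ℝ} (hs : 3 ≤ s) :
    3 / 4 ≤ s * (1 - (1 - 1 / s) * exp (1 / s ^ 2)) := by
  have hexp : exp (1 / s ^ 2) ≤ 1 / (1 - 1 / s ^ 2) :=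
    exp_bound_div_one_sub_of_interval (by positivity)
      (by rw [div_lt_one (by positivity)]; nlinarith)
  have hr : (1 - 1 / s) * exp (1 / s ^ 2) ≤ s / (s + 1) := calc
    _ ≤ (1 - 1 / s) * (1 / (1 - 1 / s ^ 2)) :=
      mul_le_mul_of_nonneg_left hexp (by rw [sub_nonneg, div_le_one (by positivity)]; linarith)
    _ = s / (s + 1) := by
      have hs₀ : s ≠ 0 := by positivity
      have hs₁ : s - 1 ≠ 0 := by linarith
      rw [show 1 - 1 / s ^ 2 = (s - 1) * (s + 1) / s ^ 2 by field_simp; ring,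
        show 1 - 1 / s = (s - 1) / s by field_simp]
      field_simp
  calc 3 / 4 ≤ s / (s + 1) := by rw [le_div_iff₀ (by linarith)]; linarith
    _ = s * (1 - s / (s + 1)) := by field_simp; ring
    _ ≤ _ := by gcongr

lemma integrable_of_summable_measureReal_singleton {α : Type*} [MeasurableSpace α] [Countable α]
    [MeasurableSingletonClass α] {ν : Measure α} [IsFiniteMeasure ν] {f : α → ℝ}
    (h : Summable fun a ↦ ν.real {a} * ‖f a‖) : Integrable f ν := by
  rw [← Measure.sum_smul_dirac ν]
  exact integrable_sum_dirac (fun _ ↦ measure_ne_top _ _) h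

section Moments

variable {Ω : Type*} [MeasurableSpace Ω] {μ : Measure Ω} {t : ℝ}

section NatValued

variable {X : Ω → ℕ}

lemma integrable_exp_mul_map_natCast [IsFiniteMeasure μ] (hX : Measurable X)
    (h : Summable fun k : ℕ ↦ μ.real (X ⁻¹' {k}) * exp (t * k)) :
    Integrable (fun k : ℕ ↦ exp (t * k)) (μ.map X) :=
  integrable_of_summable_measureReal_singleton <| by
    simpa [map_measureReal_apply hX (measurableSet_singleton _)] using h

lemma integrable_exp_mul_natCast [IsFiniteMeasure μ] (hX : Measurable X)
    (h : Summable fun k : ℕ ↦ μ.real (X ⁻¹' {k}) * exp (t * k)) :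
    Integrable (fun ω ↦ exp (t * X ω)) μ :=
  (integrable_map_measure (by fun_prop) hX.aemeasurable).mp (integrable_exp_mul_map_natCast hX h)

lemma mgf_natCast_eq_tsum [IsFiniteMeasure μ] (hX : Measurable X)
    (h : Summable fun k : ℕ ↦ μ.real (X ⁻¹' {k}) * exp (t * k)) :
    mgf (fun ω ↦ (X ω : ℝ)) μ t = ∑' k : ℕ, μ.real (X ⁻¹' {k}) * exp (t * k) := by
  rw [mgf, ← integral_map (f := fun k : ℕ ↦ exp (t * k)) hX.aemeasurable (by fun_prop),
    integral_countable (integrable_exp_mul_map_natCast hX h)]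
  simp [map_measureReal_apply hX (measurableSet_singleton _)]

lemma mgf_natCast_le_of_geometric_tail [IsProbabilityMeasure μ] (hX : Measurable X) {D : ℕ}
    {x : ℝ} (hx : 0 ≤ x) (hr : x * exp t < 1)
    (hgeom : ∀ k, D ≤ k → μ.real (X ⁻¹' {k}) = x ^ k)
    (hgap : ∀ k, 1 ≤ k → k < D → μ (X ⁻¹' {k}) = 0) :
    Integrable (fun ω ↦ exp (t * X ω)) μ ∧
      mgf (fun ω ↦ (X ω : ℝ)) μ t ≤ 1 + (x * exp t) ^ D / (1 - x * exp t) := by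
  set r := x * exp t
  have hterm : ∀ k : ℕ, μ.real (X ⁻¹' {k}) * exp (t * k) ≤
      (if k = 0 then 1 else 0) + (if D ≤ k then r ^ k else 0) := by
    intro k
    have htail : ∀ j : ℕ, 0 ≤ if D ≤ j then r ^ j else 0 := fun j ↦ by positivity
    rcases Nat.eq_zero_or_pos k with rfl | hk
    · simpa using add_le_add measureReal_le_one (htail 0)
    rcases lt_or_ge k D with hkD | hkD
    · simpa [measureReal_def, hgap k hk hkD, hk.ne'] using htail k
    · rw [hgeom k hkD, if_neg hk.ne', if_pos hkD, zero_add, mul_pow, ← exp_nat_mul, mul_comm t]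
  have hg := (hasSum_ite_eq 0 (1 : ℝ)).add (hasSum_geometric_tail (by positivity) hr D)
  have hf : Summable fun k : ℕ ↦ μ.real (X ⁻¹' {k}) * exp (t * k) :=
    .of_nonneg_of_le (fun _ ↦ by positivity) hterm hg.summable
  refine ⟨integrable_exp_mul_natCast hX hf, ?_⟩
  rw [mgf_natCast_eq_tsum hX hf]
  exact hasSum_le hterm hf.hasSum hg

end NatValued

lemma measure_sum_ge_le_exp_of_mgf_le_one_add {ι : Type*} [Fintype ι] [IsProbabilityMeasure μ]
    {X : ι → Ω → ℝ} (h_indep : iIndepFun X μ) (h_meas : ∀ i, Measurable (X i)) {a : ℝ}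
    (ht : 0 ≤ t) (h_int : ∀ i, Integrable (fun ω ↦ exp (t * X i ω)) μ)
    (h_mgf : ∀ i, mgf (X i) μ t ≤ 1 + a) (ε : ℝ) :
    μ.real {ω | ε ≤ ∑ i, X i ω} ≤ exp (-t * ε + Fintype.card ι * a) := by
  have h := measure_ge_le_exp_mul_mgf (X := ∑ i, X i) ε ht
    (h_indep.integrable_exp_mul_sum h_meas fun i _ ↦ h_int i)
  rw [h_indep.mgf_sum h_meas] at h
  simp only [Finset.sum_apply] at h
  refine h.trans ?_
  rw [exp_add, exp_nat_mul, ← Finset.card_univ, ← Finset.prod_const]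
  gcongr with i
  · exact fun i _ ↦ mgf_nonneg
  · linarith [h_mgf i, add_one_le_exp a]

end Moments

theorem long_paths_total_length_bound_general
    {Ω : Type*} [MeasureSpace Ω] [IsProbabilityMeasure (volume : Measure Ω)]
    (D : ℕ) (hD : 9 ≤ D) (p : ℝ) (hp : p = 1 / Real.sqrt D)
    (N m : ℕ) (hmval : (m : ℝ) = 2 * (N : ℝ) * p)
    (L : Fin m → Ω → ℕ) (hmeas : ∀ i, Measurable (L i))
    (hindep : ProbabilityTheory.iIndepFun L volume)
    (hgeom : ∀ i, ∀ k : ℕ, D ≤ k → (volume {ω | L i ω = k}).toReal = (1 - p) ^ k)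
    (hzero : ∀ i, ∀ k : ℕ, 1 ≤ k → k < D → volume {ω | L i ω = k} = 0) :
    (volume {ω | 8 * (N : ℝ) * (D : ℝ) * (1 - p) ^ D ≤ ∑ i, (L i ω : ℝ)}).toReal ≤
      2 * Real.exp (-(2 * (N : ℝ) * (1 - p) ^ D / 3)) := by
  subst hp
  set s := √(D : ℝ)
  have hs : 3 ≤ s := le_sqrt_of_sq_le (by norm_num; exact_mod_cast hD)
  have hDs : (D : ℝ) = s ^ 2 := (sq_sqrt D.cast_nonneg).symm
  set q := (1 - 1 / s) ^ D
  set r := (1 - 1 / s) * exp (1 / s ^ 2)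
  have hx : 0 ≤ 1 - 1 / s := sub_nonneg.2 ((div_le_one (by positivity)).2 (by linarith))
  have hr : 3 / 4 ≤ s * (1 - r) := three_div_four_le_mul_one_sub_mul_exp hs
  have hr₁ : r < 1 := by nlinarith
  have hrD : r ^ D = q * exp 1 := by
    rw [mul_pow, ← exp_nat_mul, hDs, mul_one_div_cancel (by positivity)]
  have hmgf i := mgf_natCast_le_of_geometric_tail (hmeas i) hx hr₁ (hgeom i) (hzero i)
  have hNq : 0 ≤ (N : ℝ) * q := by positivity
  have hs₀ : 0 < s := by linarith
  have h1r : 0 < 1 - r := by linarith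
  calc (volume {ω | 8 * (N : ℝ) * D * q ≤ ∑ i, (L i ω : ℝ)}).toReal
      ≤ exp (-(1 / s ^ 2) * (8 * N * D * q) + Fintype.card (Fin m) * (r ^ D / (1 - r))) :=
        measure_sum_ge_le_exp_of_mgf_le_one_add (hindep.comp _ fun _ ↦ measurable_from_top)
          (fun i ↦ measurable_from_top.comp (hmeas i)) (by positivity) (fun i ↦ (hmgf i).1)
          (fun i ↦ (hmgf i).2) _
    _ ≤ exp (-(2 * N * q / 3)) := by
      have hsplit : -(1 / s ^ 2) * (8 * N * s ^ 2 * q) + 2 * N * (1 / s) * (q * exp 1 / (1 - r)) =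
          N * q * (exp 1 * (2 / (s * (1 - r)))) - 8 * (N * q) := by
        field_simp
        ring
      have hfrac : 2 / (s * (1 - r)) ≤ 8 / 3 := by rw [div_le_iff₀ (by positivity)]; linarith
      have he : exp 1 * (2 / (s * (1 - r))) ≤ 22 / 3 := by
        nlinarith [exp_one_lt_d9, exp_pos 1, (by positivity : 0 ≤ 2 / (s * (1 - r)))]
      rw [exp_le_exp, Fintype.card_fin, hmval, hrD, hDs, hsplit]
      linarith [mul_le_mul_of_nonneg_left he hNq]
    _ ≤ 2 * exp (-(2 * N * q / 3)) := by linarith [exp_pos (-(2 * N * q / 3))]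

/-- Claim 17 (bounding the total length of long paths): for `p = 1/√D`, `D ≥ 9`, and
`M = 2·N·p` mutually independent nonnegative-integer random variables with
`Pr[L_i = k] = (1−p)^k` for `k ≥ D` and `Pr[1 ≤ L_i ≤ D−1] = 0`, the sum `L` satisfies
`Pr[L ≥ 8·N·D·(1−p)^D] ≤ 2·e^{−2·N·(1−p)^D/3}`. -/
theorem long_paths_total_length_bound
    {Ω : Type*} [MeasureSpace Ω] [IsProbabilityMeasure (volume : Measure Ω)]
    (D : ℕ) (hD : 9 ≤ D) (p : ℝ) (hp : p = 1 / Real.sqrt D)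
    (N m : ℕ) (hN : 0 < N) (hm : 0 < m) (hmval : (m : ℝ) = 2 * (N : ℝ) * p)
    (L : Fin m → Ω → ℕ) (hmeas : ∀ i, Measurable (L i))
    (hindep : ProbabilityTheory.iIndepFun L volume)
    (hgeom : ∀ i, ∀ k : ℕ, D ≤ k → (volume {ω | L i ω = k}).toReal = (1 - p) ^ k)
    (hzero : ∀ i, ∀ k : ℕ, 1 ≤ k → k < D → volume {ω | L i ω = k} = 0) :
    (volume {ω | 8 * (N : ℝ) * (D : ℝ) * (1 - p) ^ D ≤ ∑ i, (L i ω : ℝ)}).toReal ≤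
      2 * Real.exp (-(2 * (N : ℝ) * (1 - p) ^ D / 3)) :=
  long_paths_total_length_bound_general D hD p hp N m hmval L hmeas hindep hgeom hzero
end
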